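/- arXiv:1701.06177 — 12 statements merged into one kernel-verified Lean document; each statement's English description precedes it below -/
import Mathlib

section
/- Let c₁, c₂ be complex numbers with real parts a₁, a₂ and imaginary parts b₁, b₂, let c₃ ∈ ℝ, write |c₁×c₂| = |a₁b₂ − a₂b₁|, and set b² = (|c₁|² + |c₂|² + √((|c₁|²−|c₂|²)² + 4|c₁×c₂|²))/2. Then for every z ∈ [0,1] there exist real numbers z₁, z₂ with z₁² + z₂² + z² = 1 such that z₁²|c₁|² + z₂²|c₂|² + 2z₁z₂|c₁×c₂| + c₃²z² = b² + (c₃² − b²)z². -/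
/-- The upper bound `b² + (c₃² − b²)z²` for `θ` is attained for every `z ∈ [0,1]`. -/
theorem theta_upper_bound_attained
    (c1 c2 : ℂ) (c3 : ℝ) (cross bsq : ℝ)
    (hcross : cross = |c1.re * c2.im - c2.re * c1.im|)
    (hbsq : bsq = (‖c1‖ ^ 2 + ‖c2‖ ^ 2
      + Real.sqrt ((‖c1‖ ^ 2 - ‖c2‖ ^ 2)^2 + 4 * cross ^ 2)) / 2) :
    ∀ z ∈ Set.Icc (0 : ℝ) 1, ∃ z1 z2 : ℝ,
      z1 ^ 2 + z2 ^ 2 + z ^ 2 = 1 ∧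
      z1 ^ 2 * ‖c1‖ ^ 2 + z2 ^ 2 * ‖c2‖ ^ 2
        + 2 * z1 * z2 * cross + c3 ^ 2 * z ^ 2
      = bsq + (c3 ^ 2 - bsq) * z ^ 2 := by
  intro z hz
  obtain ⟨hz0, hz1⟩ := hz
  set A := ‖c1‖ ^ 2 with hA
  set B := ‖c2‖ ^ 2 with hB
  have hs0 : (0:ℝ) ≤ (A - B)^2 + 4 * cross^2 := by positivity
  have hs : Real.sqrt ((A-B)^2 + 4*cross^2) ^ 2 = (A-B)^2 + 4*cross^2 := Real.sq_sqrt hs0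
  have hsge : Real.sqrt ((A-B)^2 + 4*cross^2) ≥ 0 := Real.sqrt_nonneg _
  have key : bsq^2 - (A+B)*bsq + A*B - cross^2 = 0 := by
    rw [hbsq]; nlinarith [hs]
  have ht0 : (0:ℝ) ≤ 1 - z^2 := by nlinarith
  have hr : Real.sqrt (1 - z^2) ^ 2 = 1 - z^2 := Real.sq_sqrt ht0
  set r := Real.sqrt (1 - z^2) with hrdef
  by_cases hn : (bsq - B)^2 + cross^2 = 0
  · have h1 : bsq = B := by nlinarith [sq_nonneg (bsq - B), sq_nonneg cross]
    have h2 : cross = 0 := by nlinarith [sq_nonneg (bsq - B), sq_nonneg cross]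
    refine ⟨0, r, by linear_combination hr, ?_⟩
    rw [h1, h2]; linear_combination B * hr
  · have hnpos : (0:ℝ) < (bsq - B)^2 + cross^2 :=
      lt_of_le_of_ne (by positivity) (Ne.symm hn)
    set n := Real.sqrt ((bsq-B)^2 + cross^2) with hndef
    have hn2 : n^2 = (bsq-B)^2 + cross^2 := Real.sq_sqrt hnpos.le
    have hnpos' : 0 < n := Real.sqrt_pos.mpr hnpos
    have hne : n ≠ 0 := hnpos'.ne'
    refine ⟨r*(bsq-B)/n, r*cross/n, ?_, ?_⟩
    · field_simp
      linear_combination ((bsq-B)^2+cross^2) * hr + (z^2-1) * hn2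
    · field_simp
      linear_combination ((A*(bsq-B)^2 + B*cross^2 + 2*(bsq-B)*cross^2)) * hr
        + (-(1-z^2)*bsq) * hn2 + (-(1-z^2)*(bsq-B)) * key
end

section
/- Fix real numbers r, s, c₃, x with x ≠ 0 and fix z ∈ [−1,1]. For θ ≥ 0 define R₊(θ) = √(r² + 2rc₃z·tanh x + θ·tanh²x), R₋(θ) = √(r² − 2rc₃z·tanh x + θ·tanh²x), and G(θ,z) = −(1/4)[(1+sz·tanh x+R₊)log₂((1+sz·tanh x+R₊)/(1+sz·tanh x)) + (1+sz·tanh x−R₊)log₂((1+sz·tanh x−R₊)/(1+sz·tanh x)) + (1−sz·tanh x+R₋)log₂((1−sz·tanh x+R₋)/(1−sz·tanh x)) + (1−sz·tanh x−R₋)log₂((1−sz·tanh x−R₋)/(1−sz·tanh x))]. If θ₁ < θ₂ and for both θ = θ₁, θ₂ one has r² ± 2rc₃z·tanh x + θ·tanh²x > 0 and 0 < 1+sz·tanh x − R₊(θ) and 0 < 1−sz·tanh x − R₋(θ), then G(θ₂,z) < G(θ₁,z); that is, G is strictly decreasing in θ. -/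
lemma my_tanh_ne_zero {x : ℝ} (hx : x ≠ 0) : Real.tanh x ≠ 0 := by
  rw [Real.tanh_eq_sinh_div_cosh]
  exact div_ne_zero (by simp [Real.sinh_eq_zero, hx]) (Real.cosh_pos x).ne'

lemma ent_mono {a R1 R2 : ℝ} (ha : 0 < a) (h0 : 0 ≤ R1) (h12 : R1 < R2) (h2 : R2 < a) :
    (a + R1) * Real.log (a + R1) + (a - R1) * Real.log (a - R1)
      < (a + R2) * Real.log (a + R2) + (a - R2) * Real.log (a - R2) := by
  have hmono : StrictMonoOn
      (fun R => (a + R) * Real.log (a + R) + (a - R) * Real.log (a - R))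
      (Set.Icc 0 R2) := by
    apply strictMonoOn_of_deriv_pos (convex_Icc _ _)
    · exact ((Real.continuous_mul_log.comp (continuous_const.add continuous_id)).add
        (Real.continuous_mul_log.comp (continuous_const.sub continuous_id))).continuousOn
    · intro R hR
      rw [interior_Icc] at hR
      have hR0 : 0 < R := hR.1
      have hRa : R < a := hR.2.trans h2
      have hsub : 0 < a - R := by linarith
      have h1 : HasDerivAt (fun R : ℝ => (a + R) * Real.log (a + R))
          ((Real.log (a + R) + 1) * 1) R := by
        have := (Real.hasDerivAt_mul_log (x := a + R) (by positivity)).comp R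
          ((hasDerivAt_id R).const_add a)
        simpa [Function.comp_def] using this
      have h2' : HasDerivAt (fun R : ℝ => (a - R) * Real.log (a - R))
          ((Real.log (a - R) + 1) * (-1)) R := by
        have := (Real.hasDerivAt_mul_log (x := a - R) hsub.ne').comp R
          ((hasDerivAt_id R).const_sub a)
        simpa [Function.comp_def] using this
      rw [HasDerivAt.deriv (f := fun R => (a + R) * Real.log (a + R) + (a - R) * Real.log (a - R)) (h1.add h2')]
      have hloglt : Real.log (a - R) < Real.log (a + R) :=
        Real.log_lt_log hsub (by linarith)
      linarith
  have := hmono (Set.mem_Icc.mpr ⟨h0, h12.le⟩)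
    (Set.mem_Icc.mpr ⟨h0.trans h12.le, le_refl _⟩) h12
  simpa using this

/-- The function `G(θ, z)` is strictly decreasing in `θ`. -/
theorem G_strict_anti_in_theta
    (r s c3 x : ℝ) (hx : x ≠ 0) (z : ℝ) (hz : z ∈ Set.Icc (-1 : ℝ) 1)
    (Rp Rm : ℝ → ℝ)
    (hRp : ∀ θ : ℝ, Rp θ = Real.sqrt (r ^ 2 + 2 * r * c3 * z * Real.tanh x + θ * Real.tanh x ^ 2))
    (hRm : ∀ θ : ℝ, Rm θ = Real.sqrt (r ^ 2 - 2 * r * c3 * z * Real.tanh x + θ * Real.tanh x ^ 2))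
    (G : ℝ → ℝ → ℝ)
    (hG : ∀ θ : ℝ, G θ z = -(1/4) *
      ((1 + s * z * Real.tanh x + Rp θ) *
          Real.logb 2 ((1 + s * z * Real.tanh x + Rp θ) / (1 + s * z * Real.tanh x))
       + (1 + s * z * Real.tanh x - Rp θ) *
          Real.logb 2 ((1 + s * z * Real.tanh x - Rp θ) / (1 + s * z * Real.tanh x))
       + (1 - s * z * Real.tanh x + Rm θ) *
          Real.logb 2 ((1 - s * z * Real.tanh x + Rm θ) / (1 - s * z * Real.tanh x))
       + (1 - s * z * Real.tanh x - Rm θ) *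
          Real.logb 2 ((1 - s * z * Real.tanh x - Rm θ) / (1 - s * z * Real.tanh x))))
    (θ₁ θ₂ : ℝ) (hθ₁ : 0 ≤ θ₁) (hθ₂ : 0 ≤ θ₂) (hlt : θ₁ < θ₂)
    (hpos : ∀ θ ∈ ({θ₁, θ₂} : Set ℝ),
      0 < r ^ 2 + 2 * r * c3 * z * Real.tanh x + θ * Real.tanh x ^ 2 ∧
      0 < r ^ 2 - 2 * r * c3 * z * Real.tanh x + θ * Real.tanh x ^ 2 ∧
      0 < 1 + s * z * Real.tanh x - Rp θ ∧
      0 < 1 - s * z * Real.tanh x - Rm θ) :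
    G θ₂ z < G θ₁ z := by
  have ht : Real.tanh x ≠ 0 := my_tanh_ne_zero hx
  have ht2 : 0 < Real.tanh x ^ 2 := by positivity
  obtain ⟨hp1a, hp1b, hp1c, hp1d⟩ := hpos θ₁ (by simp)
  obtain ⟨hp2a, hp2b, hp2c, hp2d⟩ := hpos θ₂ (by simp)
  set t := Real.tanh x with htdef
  set ap := 1 + s * z * t with hapdef
  set am := 1 - s * z * t with hamdef
  have hRp1nn : 0 ≤ Rp θ₁ := by rw [hRp]; exact Real.sqrt_nonneg _
  have hRm1nn : 0 ≤ Rm θ₁ := by rw [hRm]; exact Real.sqrt_nonneg _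
  have hRp2nn : 0 ≤ Rp θ₂ := by rw [hRp]; exact Real.sqrt_nonneg _
  have hRm2nn : 0 ≤ Rm θ₂ := by rw [hRm]; exact Real.sqrt_nonneg _
  have hmul : θ₁ * t ^ 2 < θ₂ * t ^ 2 := by
    have := mul_lt_mul_of_pos_right hlt ht2
    linarith
  have hRplt : Rp θ₁ < Rp θ₂ := by
    rw [hRp, hRp]
    exact Real.sqrt_lt_sqrt hp1a.le (by linarith)
  have hRmlt : Rm θ₁ < Rm θ₂ := by
    rw [hRm, hRm]
    exact Real.sqrt_lt_sqrt hp1b.le (by linarith)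
  have hap : 0 < ap := by linarith
  have ham : 0 < am := by linarith
  have hGeq : ∀ θ : ℝ, 0 < ap - Rp θ → 0 < am - Rm θ → 0 ≤ Rp θ → 0 ≤ Rm θ →
      G θ z = -(1/4) *
        ((((ap + Rp θ) * Real.log (ap + Rp θ) + (ap - Rp θ) * Real.log (ap - Rp θ)
            - 2 * ap * Real.log ap)
          + ((am + Rm θ) * Real.log (am + Rm θ) + (am - Rm θ) * Real.log (am - Rm θ)
            - 2 * am * Real.log am)) / Real.log 2) := by
    intro θ h1 h2 h3 h4
    rw [hG θ, Real.logb, Real.logb, Real.logb, Real.logb,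
      Real.log_div (by linarith : (0:ℝ) < ap + Rp θ).ne' hap.ne',
      Real.log_div h1.ne' hap.ne',
      Real.log_div (by linarith : (0:ℝ) < am + Rm θ).ne' ham.ne',
      Real.log_div h2.ne' ham.ne']
    ring
  have hplt := ent_mono hap hRp1nn hRplt (by linarith)
  have hmlt := ent_mono ham hRm1nn hRmlt (by linarith)
  rw [hGeq θ₁ hp1c hp1d hRp1nn hRm1nn, hGeq θ₂ hp2c hp2d hRp2nn hRm2nn]
  have hlog2 : 0 < Real.log 2 := Real.log_pos one_lt_two
  have hdiff : ((ap + Rp θ₁) * Real.log (ap + Rp θ₁) + (ap - Rp θ₁) * Real.log (ap - Rp θ₁)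
            - 2 * ap * Real.log ap)
          + ((am + Rm θ₁) * Real.log (am + Rm θ₁) + (am - Rm θ₁) * Real.log (am - Rm θ₁)
            - 2 * am * Real.log am)
        < ((ap + Rp θ₂) * Real.log (ap + Rp θ₂) + (ap - Rp θ₂) * Real.log (ap - Rp θ₂)
            - 2 * ap * Real.log ap)
          + ((am + Rm θ₂) * Real.log (am + Rm θ₂) + (am - Rm θ₂) * Real.log (am - Rm θ₂)
            - 2 * am * Real.log am) := by linarith
  have h' := div_lt_div_of_pos_right hdiff hlog2
  linarith
end

section
/- Let r, s, c₃, x be real numbers and c₁, c₂ complex numbers; write |c₁×c₂| = |a₁b₂−a₂b₁| where aᵢ, bᵢ are the real and imaginary parts of cᵢ, and set b² = (|c₁|²+|c₂|²+√((|c₁|²−|c₂|²)²+4|c₁×c₂|²))/2. For (z₁,z₂,z) on the unit sphere z₁²+z₂²+z² = 1 set θ(z₁,z₂,z) = z₁²|c₁|² + z₂²|c₂|² + 2z₁z₂|c₁×c₂| + c₃²z², and let G(θ,z) be the four-term entropy-like function with R± = √(r² ± 2rc₃z·tanh x + θ·tanh²x). Assume that for all (z₁,z₂,z) on the unit sphere,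 H₊ ≤ 1+sz·tanh x and H₋ ≤ 1−sz·tanh x hold with θ = b²+(c₃²−b²)z². Then the infimum of G(θ(z₁,z₂,z), z) over the unit sphere equals the minimum over z ∈ [0,1] of F(z) := G(b² + (c₃²−b²)z², z), i.e., of the function F(z) defined via H±(z) = √(b²(1−z²)tanh²x + (r ± c₃z·tanh x)²). -/
private lemma mul_log_combo {a R1 R2 : ℝ} (ha : 0 < a) (h0 : 0 ≤ R1)
    (h12 : R1 ≤ R2) (h2 : R2 ≤ a) :
    (a+R1) * Real.log (a+R1) + (a-R1) * Real.log (a-R1)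
      ≤ (a+R2) * Real.log (a+R2) + (a-R2) * Real.log (a-R2) := by
  rcases eq_or_lt_of_le (h0.trans h12) with h | hR2
  · have hR1 : R1 = 0 := le_antisymm (h12.trans h.symm.le) h0
    rw [hR1, ← h]
  · set μ := (R2 + R1) / (2*R2) with hμdef
    set ν := (R2 - R1) / (2*R2) with hνdef
    have hR2' : (0:ℝ) < 2*R2 := by linarith
    have hμ : 0 ≤ μ := by positivity
    have hν : 0 ≤ ν := by
      apply div_nonneg (by linarith) (by linarith)
    have hμν : μ + ν = 1 := by rw [hμdef, hνdef]; field_simp; ring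
    have hx : (a+R2) ∈ Set.Ici (0:ℝ) := Set.mem_Ici.mpr (by linarith)
    have hy : (a-R2) ∈ Set.Ici (0:ℝ) := Set.mem_Ici.mpr (by linarith)
    have hC := Real.convexOn_mul_log
    have e1 := hC.2 hx hy hμ hν hμν
    have e2 := hC.2 hx hy hν hμ (by linarith)
    have c1 : μ • (a+R2) + ν • (a-R2) = a + R1 := by
      simp only [smul_eq_mul, hμdef, hνdef]; field_simp; ring
    have c2 : ν • (a+R2) + μ • (a-R2) = a - R1 := by
      simp only [smul_eq_mul, hμdef, hνdef]; field_simp; ring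
    rw [c1] at e1
    rw [c2] at e2
    simp only [smul_eq_mul] at e1 e2
    have hkey : μ * ((a+R2) * Real.log (a+R2)) + ν * ((a-R2) * Real.log (a-R2))
        + (ν * ((a+R2) * Real.log (a+R2)) + μ * ((a-R2) * Real.log (a-R2)))
        = (a+R2) * Real.log (a+R2) + (a-R2) * Real.log (a-R2) := by
      have h1 : μ = 1 - ν := by linarith
      rw [h1]; ring
    linarith [e1, e2]

noncomputable def pairF (a R : ℝ) : ℝ :=
  (a+R) * Real.logb 2 ((a+R)/a) + (a-R) * Real.logb 2 ((a-R)/a)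

private lemma pairF_eq {a R : ℝ} (ha : 0 < a) (h0 : 0 ≤ R) (hR : R ≤ a) :
    pairF a R = ((a+R) * Real.log (a+R) + (a-R) * Real.log (a-R)
      - 2 * (a * Real.log a)) / Real.log 2 := by
  have hap : 0 < a + R := by linarith
  have h1 : Real.logb 2 ((a+R)/a) = (Real.log (a+R) - Real.log a) / Real.log 2 := by
    rw [Real.logb, Real.log_div (by linarith) (by linarith)]
  rcases eq_or_lt_of_le hR with h | h
  · rw [pairF, h1, h]
    simp
    field_simp
    ring
  · have h2 : Real.logb 2 ((a-R)/a) = (Real.log (a-R) - Real.log a) / Real.log 2 := by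
      rw [Real.logb, Real.log_div (by linarith) (by linarith)]
    rw [pairF, h1, h2]
    field_simp
    ring

private lemma pairF_mono {a R1 R2 : ℝ} (h0 : 0 ≤ R1) (h12 : R1 ≤ R2) (h2 : R2 ≤ a) :
    pairF a R1 ≤ pairF a R2 := by
  rcases eq_or_lt_of_le (le_trans (h0.trans h12) h2) with h | ha
  · have : R1 = 0 := le_antisymm (by linarith) h0
    have : R1 = R2 := by nlinarith
    rw [this]
  · rw [pairF_eq ha h0 (h12.trans h2), pairF_eq ha (h0.trans h12) h2]
    have hl : (0:ℝ) < Real.log 2 := Real.log_pos one_lt_two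
    have hmono := mul_log_combo ha h0 h12 h2
    exact (div_le_div_iff_of_pos_right hl).mpr (by linarith)

private lemma pairF_le {a R : ℝ} (h0 : 0 ≤ R) (hR : R ≤ a) : pairF a R ≤ 2 * a := by
  have h := pairF_mono h0 hR le_rfl
  refine h.trans (le_of_eq ?_)
  rcases eq_or_lt_of_le (h0.trans hR) with h | ha
  · rw [pairF, ← h]; norm_num
  · rw [pairF]
    have : (a+a)/a = 2 := by field_simp; ring
    simp [this, Real.logb_self_eq_one]
    ring

set_option maxHeartbeats 4000000 in
/-- The infimum of `G(θ(z₁,z₂,z), z)` over the unit sphere equals the infimum (minimum)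
of the one-variable function `F(z) = G(b² + (c₃² − b²)z², z)` over `z ∈ [0,1]`. -/
theorem inf_G_sphere_eq_min_F
    (r s c3 x : ℝ) (c1 c2 : ℂ) (cross bsq : ℝ)
    (hcross : cross = |c1.re * c2.im - c2.re * c1.im|)
    (hbsq : bsq = (‖c1‖ ^ 2 + ‖c2‖ ^ 2
      + Real.sqrt ((‖c1‖ ^ 2 - ‖c2‖ ^ 2)^2 + 4 * cross ^ 2)) / 2)
    (θ : ℝ → ℝ → ℝ → ℝ)
    (hθ : ∀ z1 z2 z : ℝ, θ z1 z2 z = z1 ^ 2 * ‖c1‖ ^ 2 + z2 ^ 2 * ‖c2‖ ^ 2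
      + 2 * z1 * z2 * cross + c3 ^ 2 * z ^ 2)
    (Rp Rm : ℝ → ℝ → ℝ)
    (hRp : ∀ t z : ℝ, Rp t z = Real.sqrt (r ^ 2 + 2 * r * c3 * z * Real.tanh x + t * Real.tanh x ^ 2))
    (hRm : ∀ t z : ℝ, Rm t z = Real.sqrt (r ^ 2 - 2 * r * c3 * z * Real.tanh x + t * Real.tanh x ^ 2))
    (G : ℝ → ℝ → ℝ)
    (hG : ∀ t z : ℝ, G t z = -(1/4) *
      ((1 + s * z * Real.tanh x + Rp t z) *
          Real.logb 2 ((1 + s * z * Real.tanh x + Rp t z) / (1 + s * z * Real.tanh x))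
       + (1 + s * z * Real.tanh x - Rp t z) *
          Real.logb 2 ((1 + s * z * Real.tanh x - Rp t z) / (1 + s * z * Real.tanh x))
       + (1 - s * z * Real.tanh x + Rm t z) *
          Real.logb 2 ((1 - s * z * Real.tanh x + Rm t z) / (1 - s * z * Real.tanh x))
       + (1 - s * z * Real.tanh x - Rm t z) *
          Real.logb 2 ((1 - s * z * Real.tanh x - Rm t z) / (1 - s * z * Real.tanh x))))
    (Hp Hm : ℝ → ℝ)
    (hHp : ∀ z : ℝ, Hp z = Real.sqrt (bsq * (1 - z ^ 2) * Real.tanh x ^ 2 + (r + c3 * z * Real.tanh x) ^ 2))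
    (hHm : ∀ z : ℝ, Hm z = Real.sqrt (bsq * (1 - z ^ 2) * Real.tanh x ^ 2 + (r - c3 * z * Real.tanh x) ^ 2))
    (F : ℝ → ℝ)
    (hF : ∀ z : ℝ, F z = G (bsq + (c3 ^ 2 - bsq) * z ^ 2) z)
    (hbound : ∀ z1 z2 z : ℝ, z1 ^ 2 + z2 ^ 2 + z ^ 2 = 1 →
      Hp z ≤ 1 + s * z * Real.tanh x ∧ Hm z ≤ 1 - s * z * Real.tanh x) :
    sInf {y : ℝ | ∃ z1 z2 z : ℝ, z1 ^ 2 + z2 ^ 2 + z ^ 2 = 1 ∧ y = G (θ z1 z2 z) z}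
      = sInf (F '' Set.Icc (0 : ℝ) 1) := by
  set A1 : ℝ := ‖c1‖ ^ 2 with hA1def
  set A2 : ℝ := ‖c2‖ ^ 2 with hA2def
  set D : ℝ := Real.sqrt ((A1 - A2)^2 + 4 * cross ^ 2) with hDdef
  have hcross0 : 0 ≤ cross := hcross ▸ abs_nonneg _
  have hD0 : 0 ≤ D := Real.sqrt_nonneg _
  have hD : D ^ 2 = (A1 - A2)^2 + 4 * cross ^ 2 := Real.sq_sqrt (by positivity)
  have hDge : |A1 - A2| ≤ D := by
    rw [hDdef]
    rw [← Real.sqrt_sq_eq_abs]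
    exact Real.sqrt_le_sqrt (by nlinarith [sq_nonneg cross])
  have hDge' := abs_le.mp hDge
  have hbsq' : bsq = (A1 + A2 + D) / 2 := hbsq
  have hu : 0 ≤ bsq - A1 := by rw [hbsq']; linarith [hDge'.1]
  have hv : 0 ≤ bsq - A2 := by rw [hbsq']; linarith [hDge'.2]
  have huv : (bsq - A1) * (bsq - A2) = cross ^ 2 := by
    rw [hbsq']; nlinarith [hD]
  -- quadratic form upper bound
  have hQle : ∀ z1 z2 : ℝ,
      z1 ^ 2 * A1 + z2 ^ 2 * A2 + 2 * z1 * z2 * cross ≤ bsq * (z1^2 + z2^2) := by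
    intro z1 z2
    set u := Real.sqrt (bsq - A1) with hudef
    set v := Real.sqrt (bsq - A2) with hvdef
    have hu2 : u ^ 2 = bsq - A1 := Real.sq_sqrt hu
    have hv2 : v ^ 2 = bsq - A2 := Real.sq_sqrt hv
    have huv2 : u * v = cross := by
      rw [hudef, hvdef, ← Real.sqrt_mul hu, huv, Real.sqrt_sq hcross0]
    have e1 : u^2 * z1^2 = (bsq - A1) * z1^2 := by rw [hu2]
    have e2 : v^2 * z2^2 = (bsq - A2) * z2^2 := by rw [hv2]
    have e3 : (u*v) * (z1*z2) = cross * (z1*z2) := by rw [huv2]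
    nlinarith [sq_nonneg (u * z1 - v * z2), e1, e2, e3]
  -- quadratic form nonnegativity
  have hQnn : ∀ z1 z2 : ℝ,
      0 ≤ z1 ^ 2 * A1 + z2 ^ 2 * A2 + 2 * z1 * z2 * cross := by
    intro z1 z2
    have hA1e : A1 = c1.re ^ 2 + c1.im ^ 2 := by
      rw [hA1def, Complex.sq_norm, Complex.normSq_apply]; ring
    have hA2e : A2 = c2.re ^ 2 + c2.im ^ 2 := by
      rw [hA2def, Complex.sq_norm, Complex.normSq_apply]; ring
    rcases abs_cases (c1.re * c2.im - c2.re * c1.im) with ⟨h, _⟩ | ⟨h, _⟩ <;>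
      rw [hcross, h, hA1e, hA2e]
    · nlinarith [sq_nonneg (z1 * c1.re + z2 * c2.im), sq_nonneg (z1 * c1.im - z2 * c2.re)]
    · nlinarith [sq_nonneg (z1 * c1.re - z2 * c2.im), sq_nonneg (z1 * c1.im + z2 * c2.re)]
  -- maximizer existence
  have hQmax : ∀ ρ2 : ℝ, 0 ≤ ρ2 → ∃ z1 z2 : ℝ, z1 ^ 2 + z2 ^ 2 = ρ2 ∧
      z1 ^ 2 * A1 + z2 ^ 2 * A2 + 2 * z1 * z2 * cross = bsq * ρ2 := by
    intro ρ2 hρ2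
    set ρ := Real.sqrt ρ2 with hρdef
    have hρ : 0 ≤ ρ := Real.sqrt_nonneg _
    have hρsq : ρ ^ 2 = ρ2 := Real.sq_sqrt hρ2
    rcases eq_or_lt_of_le hD0 with hDz | hDpos
    · have hzero : (A1 - A2)^2 + 4 * cross ^ 2 = 0 := by
        have := hD; rw [← hDz] at this; nlinarith [this]
      have hA : A1 = A2 := by nlinarith [sq_nonneg (A1 - A2), sq_nonneg cross]
      have hc : cross = 0 := by nlinarith [sq_nonneg (A1 - A2), sq_nonneg cross]
      refine ⟨ρ, 0, by rw [← hρsq]; ring, ?_⟩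
      rw [hbsq', ← hDz, hc, ← hρsq]
      nlinarith [hA]
    · set c := (A1 - A2) / D with hcdef
      have hc1 : c ≤ 1 := by
        rw [hcdef]; exact (div_le_one hDpos).mpr hDge'.2
      have hc2 : -1 ≤ c := by
        rw [hcdef]
        rw [le_div_iff₀ hDpos]
        linarith [hDge'.1]
      refine ⟨ρ * Real.sqrt ((1+c)/2), ρ * Real.sqrt ((1-c)/2), ?_, ?_⟩ <;>
        rw [mul_pow, mul_pow, Real.sq_sqrt (by linarith : (0:ℝ) ≤ (1+c)/2),
          Real.sq_sqrt (by linarith : (0:ℝ) ≤ (1-c)/2)]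
      · rw [← hρsq]; ring
      · have hz12 : Real.sqrt ((1+c)/2) * Real.sqrt ((1-c)/2) = cross / D := by
          rw [← Real.sqrt_mul (by linarith)]
          have harg : (1+c)/2 * ((1-c)/2) = (cross / D) ^ 2 := by
            rw [hcdef]; field_simp; nlinarith [hD]
          rw [harg, Real.sqrt_sq (by positivity)]
        have key : (1+c)/2 * A1 + (1-c)/2 * A2 + 2 * (cross / D) * cross = bsq := by
          rw [hbsq', hcdef]; field_simp; nlinarith [hD]
        calc ρ ^ 2 * ((1+c)/2) * A1 + ρ ^ 2 * ((1-c)/2) * A2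
              + 2 * (ρ * Real.sqrt ((1+c)/2)) * (ρ * Real.sqrt ((1-c)/2)) * cross
            = ρ ^ 2 * ((1+c)/2 * A1 + (1-c)/2 * A2
                + 2 * (Real.sqrt ((1+c)/2) * Real.sqrt ((1-c)/2)) * cross) := by ring
          _ = ρ ^ 2 * bsq := by rw [hz12, ← key]
          _ = bsq * ρ2 := by rw [hρsq]; ring
  -- G as pairF
  have hGpair : ∀ t z : ℝ, G t z = -(1/4) *
      (pairF (1 + s * z * Real.tanh x) (Rp t z)
        + pairF (1 - s * z * Real.tanh x) (Rm t z)) := by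
    intro t z
    rw [hG]
    simp only [pairF]
    ring
  -- symmetry
  have hGsymm : ∀ t z : ℝ, G t (-z) = G t z := by
    intro t z
    have h1 : Rp t (-z) = Rm t z := by rw [hRp, hRm]; congr 1; ring
    have h2 : Rm t (-z) = Rp t z := by rw [hRm, hRp]; congr 1; ring
    have h3 : 1 + s * (-z) * Real.tanh x = 1 - s * z * Real.tanh x := by ring
    have h4 : 1 - s * (-z) * Real.tanh x = 1 + s * z * Real.tanh x := by ring
    rw [hGpair, hGpair, h1, h2, h3, h4]; ring
  -- main per-point facts
  have hfacts : ∀ z1 z2 z : ℝ, z1 ^ 2 + z2 ^ 2 + z ^ 2 = 1 →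
      (0 ≤ Rp (θ z1 z2 z) z ∧ Rp (θ z1 z2 z) z ≤ Rp (bsq + (c3^2 - bsq) * z^2) z
        ∧ Rp (bsq + (c3^2 - bsq) * z^2) z ≤ 1 + s * z * Real.tanh x)
      ∧ (0 ≤ Rm (θ z1 z2 z) z ∧ Rm (θ z1 z2 z) z ≤ Rm (bsq + (c3^2 - bsq) * z^2) z
        ∧ Rm (bsq + (c3^2 - bsq) * z^2) z ≤ 1 - s * z * Real.tanh x) := by
    intro z1 z2 z hs
    obtain ⟨hbp, hbm⟩ := hbound z1 z2 z hs
    have htle : θ z1 z2 z ≤ bsq + (c3^2 - bsq) * z^2 := by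
      rw [hθ]; nlinarith [hQle z1 z2]
    have hRpH : Rp (bsq + (c3^2 - bsq) * z^2) z = Hp z := by
      rw [hRp, hHp]; congr 1; ring
    have hRmH : Rm (bsq + (c3^2 - bsq) * z^2) z = Hm z := by
      rw [hRm, hHm]; congr 1; ring
    refine ⟨⟨?_, ?_, ?_⟩, ⟨?_, ?_, ?_⟩⟩
    · rw [hRp]; exact Real.sqrt_nonneg _
    · rw [hRp, hRp]
      exact Real.sqrt_le_sqrt (by nlinarith [sq_nonneg (Real.tanh x)])
    · rw [hRpH]; exact hbp
    · rw [hRm]; exact Real.sqrt_nonneg _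
    · rw [hRm, hRm]
      exact Real.sqrt_le_sqrt (by nlinarith [sq_nonneg (Real.tanh x)])
    · rw [hRmH]; exact hbm
  -- key inequality
  have hkey : ∀ z1 z2 z : ℝ, z1 ^ 2 + z2 ^ 2 + z ^ 2 = 1 →
      G (bsq + (c3^2 - bsq) * z^2) z ≤ G (θ z1 z2 z) z := by
    intro z1 z2 z hs
    obtain ⟨⟨hp0, hpm, hpl⟩, ⟨hm0, hmm, hml⟩⟩ := hfacts z1 z2 z hs
    rw [hGpair, hGpair]
    have h1 := pairF_mono hp0 hpm hpl
    have h2 := pairF_mono hm0 hmm hml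
    linarith
  -- lower bound
  have hlb : ∀ z1 z2 z : ℝ, z1 ^ 2 + z2 ^ 2 + z ^ 2 = 1 → -1 ≤ G (θ z1 z2 z) z := by
    intro z1 z2 z hs
    obtain ⟨⟨hp0, hpm, hpl⟩, ⟨hm0, hmm, hml⟩⟩ := hfacts z1 z2 z hs
    rw [hGpair]
    have h1 := pairF_le hp0 (hpm.trans hpl)
    have h2 := pairF_le hm0 (hmm.trans hml)
    linarith
  set A := {y : ℝ | ∃ z1 z2 z : ℝ, z1 ^ 2 + z2 ^ 2 + z ^ 2 = 1 ∧ y = G (θ z1 z2 z) z} with hAdef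
  set B := F '' Set.Icc (0 : ℝ) 1 with hBdef
  have hBsubA : B ⊆ A := by
    rintro y ⟨w, hw, rfl⟩
    obtain ⟨hw0, hw1⟩ := hw
    obtain ⟨z1, z2, hsum, hmax⟩ := hQmax (1 - w^2) (by nlinarith)
    refine ⟨z1, z2, w, by linarith, ?_⟩
    rw [hF]
    congr 1
    rw [hθ, hmax]
    ring
  have hAne : A.Nonempty := ⟨G (θ 1 0 0) 0, 1, 0, 0, by norm_num, rfl⟩
  have hBne : B.Nonempty := ⟨F 0, 0, by norm_num, rfl⟩
  have hAbdd : BddBelow A := by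
    refine ⟨-1, ?_⟩
    rintro y ⟨z1, z2, z, hs, rfl⟩
    exact hlb z1 z2 z hs
  have hBbdd : BddBelow B := BddBelow.mono hBsubA hAbdd
  apply le_antisymm
  · exact csInf_le_csInf hAbdd hBne hBsubA
  · apply le_csInf hAne
    rintro y ⟨z1, z2, z, hs, rfl⟩
    have hz1 : z ≤ 1 := by nlinarith [sq_nonneg z1, sq_nonneg z2, sq_nonneg (z-1)]
    have hz2 : -1 ≤ z := by nlinarith [sq_nonneg z1, sq_nonneg z2, sq_nonneg (z+1)]
    have habs : |z| ∈ Set.Icc (0:ℝ) 1 := ⟨abs_nonneg _, abs_le.mpr ⟨hz2, hz1⟩⟩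
    have hFz : F |z| ≤ G (θ z1 z2 z) z := by
      rcases le_or_gt 0 z with hz0 | hz0
      · rw [abs_of_nonneg hz0, hF]; exact hkey z1 z2 z hs
      · rw [abs_of_neg hz0, hF]
        have heq : G (bsq + (c3^2 - bsq) * (-z)^2) (-z)
            = G (bsq + (c3^2 - bsq) * z^2) z := by
          rw [neg_sq, hGsymm]
        rw [heq]
        exact hkey z1 z2 z hs
    exact le_trans (csInf_le hBbdd ⟨|z|, habs, rfl⟩) hFz
end

section
/- Let r, s, c₃, b, x be real numbers and let z ∈ (0,1) satisfy H₊(z) > 0, H₋(z) > 0, H₊(z) < 1 + s z tanh x and H₋(z) < 1 − s z tanh x, where H±(z) = √(b²(1−z²)tanh²x + (r ± c₃z·tanh x)²). Then F is differentiable at z with derivative F′(z) = −(1/(4·ln 2))·{ s·tanh x · ln[ ((1+sz·tanh x)² − H₊(z)²)(1−sz·tanh x)² / (((1−sz·tanh x)² − H₋(z)²)(1+sz·tanh x)²) ] + H₊′(z)·ln((1+sz·tanh x+H₊(z))/(1+sz·tanh x−H₊(z))) + H₋′(z)·ln((1−sz·tanh x+H₋(z))/(1−sz·tanh x−H₋(z)))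 }, where H±′(z) = (±rc₃·tanh x + (c₃²−b²)z·tanh²x)/H±(z). -/
lemma aux_deriv (u h : ℝ → ℝ) (u' h' z : ℝ)
    (hu : HasDerivAt u u' z) (hh : HasDerivAt h h' z)
    (h0 : 0 < h z) (h1 : h z < u z) :
    HasDerivAt (fun w => (u w + h w) * Real.logb 2 ((u w + h w) / (u w))
      + (u w - h w) * Real.logb 2 ((u w - h w) / (u w)))
      ((u' * Real.log ((u z ^ 2 - h z ^ 2) / (u z ^ 2))
        + h' * Real.log ((u z + h z) / (u z - h z))) / Real.log 2) z := by
  have hu0 : 0 < u z := h0.trans h1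
  have hp0 : 0 < u z + h z := by linarith
  have hm0 : 0 < u z - h z := by linarith
  have hne1 : (u z + h z) / u z ≠ 0 := by positivity
  have hne2 : (u z - h z) / u z ≠ 0 := by positivity
  have d1 : HasDerivAt (fun w => (u w + h w) / (u w))
      (((u' + h') * u z - (u z + h z) * u') / u z ^ 2) z :=
    (hu.add hh).div hu hu0.ne'
  have d2 : HasDerivAt (fun w => (u w - h w) / (u w))
      (((u' - h') * u z - (u z - h z) * u') / u z ^ 2) z :=
    (hu.sub hh).div hu hu0.ne'
  have l1 := d1.log hne1
  have l2 := d2.log hne2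
  have m1 := (hu.add hh).mul l1
  have m2 := (hu.sub hh).mul l2
  have G := (m1.add m2).div_const (Real.log 2)
  have hfun : (fun w => ((u w + h w) * Real.log ((u w + h w) / u w)
      + (u w - h w) * Real.log ((u w - h w) / u w)) / Real.log 2)
      = fun w => (u w + h w) * Real.logb 2 ((u w + h w) / (u w))
        + (u w - h w) * Real.logb 2 ((u w - h w) / (u w)) := by
    funext w
    simp only [Real.logb]
    ring
  simp only [Pi.add_apply, Pi.sub_apply, Pi.mul_apply] at G
  rw [hfun] at G
  refine G.congr_deriv ?_
  have hpq : (u z ^ 2 - h z ^ 2) / (u z ^ 2) = ((u z + h z) / u z) * ((u z - h z) / u z) := by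
    field_simp; ring
  have hr : (u z + h z) / (u z - h z) = ((u z + h z) / u z) / ((u z - h z) / u z) := by
    field_simp
  rw [hpq, Real.log_mul hne1 hne2, hr, Real.log_div hne1 hne2]
  field_simp
  ring

/-- Derivative formula for the one-variable function `F` governing the super quantum discord. -/
theorem F_hasDerivAt
    (r s c3 b x : ℝ)
    (Hp Hm : ℝ → ℝ)
    (hHp : ∀ w : ℝ, Hp w = Real.sqrt (b ^ 2 * (1 - w ^ 2) * Real.tanh x ^ 2 + (r + c3 * w * Real.tanh x) ^ 2))
    (hHm : ∀ w : ℝ, Hm w = Real.sqrt (b ^ 2 * (1 - w ^ 2) * Real.tanh x ^ 2 + (r - c3 * w * Real.tanh x) ^ 2))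
    (F : ℝ → ℝ)
    (hF : ∀ w : ℝ, F w = -(1/4) *
      ((1 + s * w * Real.tanh x + Hp w) *
          Real.logb 2 ((1 + s * w * Real.tanh x + Hp w) / (1 + s * w * Real.tanh x))
       + (1 + s * w * Real.tanh x - Hp w) *
          Real.logb 2 ((1 + s * w * Real.tanh x - Hp w) / (1 + s * w * Real.tanh x))
       + (1 - s * w * Real.tanh x + Hm w) *
          Real.logb 2 ((1 - s * w * Real.tanh x + Hm w) / (1 - s * w * Real.tanh x))
       + (1 - s * w * Real.tanh x - Hm w) *
          Real.logb 2 ((1 - s * w * Real.tanh x - Hm w) / (1 - s * w * Real.tanh x))))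
    (z : ℝ) (hz : z ∈ Set.Ioo (0 : ℝ) 1)
    (hHp0 : 0 < Hp z) (hHm0 : 0 < Hm z)
    (hHp1 : Hp z < 1 + s * z * Real.tanh x) (hHm1 : Hm z < 1 - s * z * Real.tanh x) :
    HasDerivAt F
      (-(1 / (4 * Real.log 2)) *
        (s * Real.tanh x *
            Real.log ((((1 + s * z * Real.tanh x) ^ 2 - Hp z ^ 2) * (1 - s * z * Real.tanh x) ^ 2)
              / (((1 - s * z * Real.tanh x) ^ 2 - Hm z ^ 2) * (1 + s * z * Real.tanh x) ^ 2))
         + (r * c3 * Real.tanh x + (c3 ^ 2 - b ^ 2) * z * Real.tanh x ^ 2) / Hp z *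
            Real.log ((1 + s * z * Real.tanh x + Hp z) / (1 + s * z * Real.tanh x - Hp z))
         + (-(r * c3 * Real.tanh x) + (c3 ^ 2 - b ^ 2) * z * Real.tanh x ^ 2) / Hm z *
            Real.log ((1 - s * z * Real.tanh x + Hm z) / (1 - s * z * Real.tanh x - Hm z))))
      z := by
  set t := Real.tanh x with ht
  -- derivatives of the inner radicands
  have hsq : HasDerivAt (fun w : ℝ => 1 - w ^ 2) (-(2 * z)) z := by
    simpa using ((hasDerivAt_pow 2 z).const_sub 1)
  have hlinp : HasDerivAt (fun w : ℝ => r + c3 * w * t) (c3 * t) z := by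
    have := (((hasDerivAt_id z).const_mul c3).mul_const t).const_add r
    simpa using this
  have hlinm : HasDerivAt (fun w : ℝ => r - c3 * w * t) (-(c3 * t)) z := by
    have := (((hasDerivAt_id z).const_mul c3).mul_const t).const_sub r
    simpa using this
  have hgp : HasDerivAt (fun w : ℝ => b ^ 2 * (1 - w ^ 2) * t ^ 2 + (r + c3 * w * t) ^ 2)
      (b ^ 2 * (-(2 * z)) * t ^ 2 + 2 * (r + c3 * z * t) ^ 1 * (c3 * t)) z :=
    ((hsq.const_mul (b ^ 2)).mul_const (t ^ 2)).add (hlinp.pow 2)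
  have hgm : HasDerivAt (fun w : ℝ => b ^ 2 * (1 - w ^ 2) * t ^ 2 + (r - c3 * w * t) ^ 2)
      (b ^ 2 * (-(2 * z)) * t ^ 2 + 2 * (r - c3 * z * t) ^ 1 * (-(c3 * t))) z :=
    ((hsq.const_mul (b ^ 2)).mul_const (t ^ 2)).add (hlinm.pow 2)
  -- positivity of radicands
  have hgpz : 0 < b ^ 2 * (1 - z ^ 2) * t ^ 2 + (r + c3 * z * t) ^ 2 :=
    Real.sqrt_pos.mp (by rw [← hHp z]; exact hHp0)
  have hgmz : 0 < b ^ 2 * (1 - z ^ 2) * t ^ 2 + (r - c3 * z * t) ^ 2 :=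
    Real.sqrt_pos.mp (by rw [← hHm z]; exact hHm0)
  -- derivatives of Hp, Hm
  have hHpD : HasDerivAt Hp ((r * c3 * t + (c3 ^ 2 - b ^ 2) * z * t ^ 2) / Hp z) z := by
    have h' := hgp.sqrt hgpz.ne'
    have hfun : (fun w => Real.sqrt (b ^ 2 * (1 - w ^ 2) * t ^ 2 + (r + c3 * w * t) ^ 2)) = Hp :=
      funext fun w => (hHp w).symm
    rw [hfun] at h'
    convert h' using 1
    rw [hHp z, div_eq_div_iff (Real.sqrt_pos.mpr hgpz).ne'
      (mul_pos two_pos (Real.sqrt_pos.mpr hgpz)).ne']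
    ring
  have hHmD : HasDerivAt Hm ((-(r * c3 * t) + (c3 ^ 2 - b ^ 2) * z * t ^ 2) / Hm z) z := by
    have h' := hgm.sqrt hgmz.ne'
    have hfun : (fun w => Real.sqrt (b ^ 2 * (1 - w ^ 2) * t ^ 2 + (r - c3 * w * t) ^ 2)) = Hm :=
      funext fun w => (hHm w).symm
    rw [hfun] at h'
    convert h' using 1
    rw [hHm z, div_eq_div_iff (Real.sqrt_pos.mpr hgmz).ne'
      (mul_pos two_pos (Real.sqrt_pos.mpr hgmz)).ne']
    ring
  -- derivatives of the linear parts
  have hup : HasDerivAt (fun w : ℝ => 1 + s * w * t) (s * t) z := by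
    have := (((hasDerivAt_id z).const_mul s).mul_const t).const_add 1
    simpa using this
  have hum : HasDerivAt (fun w : ℝ => 1 - s * w * t) (-(s * t)) z := by
    have := (((hasDerivAt_id z).const_mul s).mul_const t).const_sub 1
    simpa using this
  have A := aux_deriv (fun w : ℝ => 1 + s * w * t) Hp (s * t)
    ((r * c3 * t + (c3 ^ 2 - b ^ 2) * z * t ^ 2) / Hp z) z hup hHpD hHp0 hHp1
  have B := aux_deriv (fun w : ℝ => 1 - s * w * t) Hm (-(s * t))
    ((-(r * c3 * t) + (c3 ^ 2 - b ^ 2) * z * t ^ 2) / Hm z) z hum hHmD hHm0 hHm1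
  have hFD := ((A.add B).const_mul (-(1/4) : ℝ))
  have heq : (fun w => -(1/4 : ℝ) *
      (((1 + s * w * t + Hp w) * Real.logb 2 ((1 + s * w * t + Hp w) / (1 + s * w * t))
        + (1 + s * w * t - Hp w) * Real.logb 2 ((1 + s * w * t - Hp w) / (1 + s * w * t)))
       + ((1 - s * w * t + Hm w) * Real.logb 2 ((1 - s * w * t + Hm w) / (1 - s * w * t))
        + (1 - s * w * t - Hm w) * Real.logb 2 ((1 - s * w * t - Hm w) / (1 - s * w * t))))) = F := by
    funext w
    rw [hF w]
    ring
  simp only [Pi.add_apply] at hFD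
  rw [heq] at hFD
  refine hFD.congr_deriv ?_
  -- algebra on derivative values
  have hu0p : 0 < 1 + s * z * t := hHp0.trans hHp1
  have hu0m : 0 < 1 - s * z * t := hHm0.trans hHm1
  have hPpos : 0 < (1 + s * z * t) ^ 2 - Hp z ^ 2 := by nlinarith
  have hMpos : 0 < (1 - s * z * t) ^ 2 - Hm z ^ 2 := by nlinarith
  have hne1 : ((1 + s * z * t) ^ 2 - Hp z ^ 2) / (1 + s * z * t) ^ 2 ≠ 0 := by positivity
  have hne2 : ((1 - s * z * t) ^ 2 - Hm z ^ 2) / (1 - s * z * t) ^ 2 ≠ 0 := by positivity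
  have e1 : (((1 + s * z * t) ^ 2 - Hp z ^ 2) * (1 - s * z * t) ^ 2)
      / (((1 - s * z * t) ^ 2 - Hm z ^ 2) * (1 + s * z * t) ^ 2)
      = (((1 + s * z * t) ^ 2 - Hp z ^ 2) / (1 + s * z * t) ^ 2)
        / (((1 - s * z * t) ^ 2 - Hm z ^ 2) / (1 - s * z * t) ^ 2) := by
    field_simp
  rw [e1, Real.log_div hne1 hne2]
  have hl2 : Real.log 2 ≠ 0 := (Real.log_pos (by norm_num)).ne'
  field_simp
  ring
end

section
/- Let r, s, c₃, b, x be real numbers with s·tanh x ≥ 0, r·c₃·tanh x ≤ 0 and c₃² ≥ b² ≥ 0, and assume that for all z ∈ [0,1], H₊(z) ≤ 1 + s z tanh x and H₋(z) ≤ 1 − s z tanh x. Then F is antitone (monotone nonincreasing) on [0,1]. -/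
set_option maxHeartbeats 1000000

open Real Set


lemma logA {u : ℝ} (h0 : 0 ≤ u) (h1 : u < 1) :
    Real.log ((1+u)/(1-u)) ≤ 2*u/(1-u^2) := by
  rcases eq_or_lt_of_le h0 with h|h
  · simp [← h]
  · have hu1 : (0:ℝ) < 1 - u := by linarith
    have hX : (1:ℝ) < (1+u)/(1-u) := by
      rw [lt_div_iff₀ hu1]; linarith
    have hpos : (0:ℝ) < (1+u)/(1-u) := by linarith
    have hlog : 0 < Real.log ((1+u)/(1-u)) := Real.log_pos hX
    have hs := (Real.self_lt_sinh_iff).2 hlog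
    rw [Real.sinh_log hpos] at hs
    have hinv : ((1+u)/(1-u))⁻¹ = (1-u)/(1+u) := by
      rw [inv_div]
    rw [hinv] at hs
    have : ((1+u)/(1-u) - (1-u)/(1+u))/2 = 2*u/(1-u^2) := by
      have h1u : (1:ℝ) + u ≠ 0 := by linarith
      have h2u : (1:ℝ) - u ≠ 0 := by linarith
      have h3u : (1:ℝ) - u^2 ≠ 0 := by nlinarith
      field_simp
      ring
    linarith [this ▸ hs]

lemma muMono {u v : ℝ} (hu : 0 < u) (huv : u ≤ v) (hv : v < 1) :
    v * Real.log ((1+u)/(1-u)) ≤ u * Real.log ((1+v)/(1-v)) := by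
  have hu1 : (0:ℝ) < 1 - u := by linarith
  have hu2 : (0:ℝ) < 1 + u := by linarith
  set lu := Real.log ((1+u)/(1-u)) with hlu
  -- g y = u * (log (1+y) - log (1-y)) - y * lu, monotone on [u,v]
  set g : ℝ → ℝ := fun y => u * (Real.log (1+y) - Real.log (1-y)) - y * lu with hg
  have key : ∀ y ∈ Icc u v, HasDerivAt g (u * (1/(1+y) + 1/(1-y)) - lu) y := by
    intro y hy
    have hy1 : (0:ℝ) < 1 + y := by linarith [hy.1]
    have hy2 : (0:ℝ) < 1 - y := by linarith [hy.2]
    have d1 : HasDerivAt (fun y : ℝ => Real.log (1+y)) (1/(1+y)) y := by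
      simpa using ((hasDerivAt_id y).const_add 1).log hy1.ne'
    have d2 : HasDerivAt (fun y : ℝ => Real.log (1-y)) (-(1/(1-y))) y := by
      have : HasDerivAt (fun y : ℝ => 1 - y) (-1) y := by
        simpa using ((hasDerivAt_id y).const_sub 1)
      have := this.log hy2.ne'
      convert this using 1
      field_simp
    have d3 : HasDerivAt (fun y : ℝ => y * lu) lu y := by
      simpa using (hasDerivAt_id y).mul_const lu
    have := ((d1.sub d2).const_mul u).sub d3
    refine this.congr_deriv ?_
    ring
  have mono : MonotoneOn g (Icc u v) := by
    apply monotoneOn_of_deriv_nonneg (convex_Icc u v)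
    · exact fun y hy => ((key y hy).continuousAt).continuousWithinAt
    · intro y hy
      rw [interior_Icc] at hy
      exact ((key y (Ioo_subset_Icc_self hy)).differentiableAt).differentiableWithinAt
    · intro y hy
      rw [interior_Icc] at hy
      rw [(key y (Ioo_subset_Icc_self hy)).deriv]
      have hy1 : (0:ℝ) < 1 + y := by linarith [hy.1]
      have hy2 : (0:ℝ) < 1 - y := by linarith [hy.2.le, hv]
      have hy3 : (0:ℝ) < 1 - y^2 := by nlinarith
      have e1 : 1/(1+y) + 1/(1-y) = 2/(1-y^2) := by
        field_simp; ring
      have hu3 : (0:ℝ) < 1 - u^2 := by nlinarith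
      have hle : 1 - y^2 ≤ 1 - u^2 := by nlinarith [hy.1]
      have e2 : 2*u/(1-u^2) ≤ 2*u/(1-y^2) :=
        div_le_div_of_nonneg_left (by linarith) hy3 hle
      have e3 : lu ≤ 2*u/(1-u^2) := logA hu.le (by linarith)
      rw [e1]
      have : u * (2/(1-y^2)) = 2*u/(1-y^2) := by ring
      rw [this]
      linarith
  have h0 : g u = 0 := by
    simp only [hg]
    rw [hlu, Real.log_div hu2.ne' hu1.ne']
    ring
  have h1 := mono (left_mem_Icc.2 huv) (right_mem_Icc.2 huv) huv
  rw [h0] at h1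
  have hv1 : (0:ℝ) < 1 - v := by linarith
  have hv2 : (0:ℝ) < 1 + v := by linarith
  rw [Real.log_div hv2.ne' hv1.ne']
  simp only [hg] at h1
  linarith

lemma mono_glue {f : ℝ → ℝ} {a c b : ℝ} (hac : a ≤ c) (hcb : c ≤ b)
    (h1 : MonotoneOn f (Icc a c)) (h2 : MonotoneOn f (Icc c b)) :
    MonotoneOn f (Icc a b) := by
  intro x hx y hy hxy
  rcases le_total y c with h|h
  · exact h1 ⟨hx.1, le_trans hxy h⟩ ⟨hy.1, h⟩ hxy
  · rcases le_total x c with h'|h'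
    · calc f x ≤ f c := h1 ⟨hx.1, h'⟩ ⟨hac, le_rfl⟩ h'
        _ ≤ f y := h2 ⟨le_rfl, hcb⟩ ⟨h, hy.2⟩ h
    · exact h2 ⟨h', hx.2⟩ ⟨le_trans h' hxy, hy.2⟩ hxy

lemma glueAux (S : Finset ℝ) : ∀ (a b : ℝ) (f : ℝ → ℝ),
    ContinuousOn f (Icc a b) →
    (∀ z ∈ Ioo a b, z ∉ S → ∃ d, HasDerivAt f d z ∧ 0 ≤ d) →
    MonotoneOn f (Icc a b) := by
  induction S using Finset.induction_on with
  | empty =>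
    intro a b f hc hd
    apply monotoneOn_of_deriv_nonneg (convex_Icc a b) hc
    · intro z hz
      rw [interior_Icc] at hz
      obtain ⟨d, hdd, _⟩ := hd z hz (Finset.notMem_empty z)
      exact hdd.differentiableAt.differentiableWithinAt
    · intro z hz
      rw [interior_Icc] at hz
      obtain ⟨d, hdd, hd0⟩ := hd z hz (Finset.notMem_empty z)
      rw [hdd.deriv]; exact hd0
  | @insert c S hc IH =>
    intro a b f hcont hd
    by_cases hmem : c ∈ Ioo a b
    · have m1 : MonotoneOn f (Icc a c) := by
        apply IH a c f (hcont.mono (Icc_subset_Icc le_rfl hmem.2.le))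
        intro z hz hzS
        exact hd z (Ioo_subset_Ioo le_rfl hmem.2.le hz)
          (by simp [Finset.mem_insert, hzS, ne_of_lt hz.2])
      have m2 : MonotoneOn f (Icc c b) := by
        apply IH c b f (hcont.mono (Icc_subset_Icc hmem.1.le le_rfl))
        intro z hz hzS
        exact hd z (Ioo_subset_Ioo hmem.1.le le_rfl hz)
          (by simp [Finset.mem_insert, hzS, (ne_of_gt hz.1)])
      exact mono_glue hmem.1.le hmem.2.le m1 m2
    · apply IH a b f hcont
      intro z hz hzS
      refine hd z hz ?_
      simp only [Finset.mem_insert]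
      rintro (rfl|h)
      · exact hmem hz
      · exact hzS h

lemma quadFinite {A B C : ℝ} (h : ¬(A = 0 ∧ B = 0 ∧ C = 0)) :
    {z : ℝ | A*z^2 + B*z + C = 0}.Finite := by
  classical
  set p : Polynomial ℝ := Polynomial.C A * Polynomial.X^2 + Polynomial.C B * Polynomial.X + Polynomial.C C with hp
  have hpne : p ≠ 0 := by
    intro h0
    apply h
    have h2 : p.coeff 2 = A := by simp [hp, Polynomial.coeff_add, Polynomial.coeff_C]
    have h1 : p.coeff 1 = B := by simp [hp, Polynomial.coeff_add, Polynomial.coeff_C]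
    have h0' : p.coeff 0 = C := by simp [hp, Polynomial.coeff_add, Polynomial.coeff_C]
    rw [h0] at h2 h1 h0'
    simp at h2 h1 h0'
    exact ⟨h2.symm, h1.symm, h0'.symm⟩
  apply Set.Finite.subset (Polynomial.finite_setOf_isRoot hpne)
  intro z hz
  simp only [mem_setOf_eq] at hz ⊢
  show p.eval z = 0
  simp [hp, Polynomial.eval_add, Polynomial.eval_mul]
  linarith

lemma termEq {a h : ℝ} (ha : 0 ≤ a) (h0 : 0 ≤ h) (hha : h ≤ a) :
    (a+h) * Real.logb 2 ((a+h)/a) + (a-h) * Real.logb 2 ((a-h)/a)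
    = ((a+h) * Real.log (a+h) + (a-h) * Real.log (a-h) - 2*(a*Real.log a)) / Real.log 2 := by
  rcases eq_or_lt_of_le ha with h'|h'
  · have : h = 0 := le_antisymm (h' ▸ hha) h0
    simp [← h', this]
  · have hne : a ≠ 0 := h'.ne'
    have hah : (0:ℝ) < a + h := by linarith
    rcases eq_or_lt_of_le hha with he|he
    · -- h = a
      rw [he]
      simp only [sub_self, zero_mul, add_zero, Real.logb, Real.log_zero, mul_zero]
      rw [Real.log_div (by linarith : a + a ≠ 0) hne]
      field_simp
      ring
    · have hah2 : (0:ℝ) < a - h := by linarith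
      simp only [Real.logb]
      rw [Real.log_div hah.ne' hne, Real.log_div hah2.ne' hne]
      field_simp
      ring

lemma signIneq {ap am Hp Hm st kp km : ℝ}
    (hst : 0 ≤ st) (ham : 0 < am) (haa : am ≤ ap)
    (hHp : 0 < Hp) (hHH : Hp ≤ Hm) (hDp : Hp < ap) (hDm : Hm < am)
    (hkm : 0 ≤ km) (hks : 0 ≤ kp + km) :
    0 ≤ st * ((Real.log (ap+Hp) + Real.log (ap-Hp) - 2*Real.log ap)
        - (Real.log (am+Hm) + Real.log (am-Hm) - 2*Real.log am))
      + (kp/Hp) * (Real.log (ap+Hp) - Real.log (ap-Hp))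
      + (km/Hm) * (Real.log (am+Hm) - Real.log (am-Hm)) := by
  have hap : (0:ℝ) < ap := lt_of_lt_of_le ham haa
  have hHm : (0:ℝ) < Hm := lt_of_lt_of_le hHp hHH
  set up := Hp/ap with hup
  set um := Hm/am with hum
  have hup0 : 0 < up := div_pos hHp hap
  have hum0 : 0 < um := div_pos hHm ham
  have hup1 : up < 1 := (div_lt_one hap).2 hDp
  have hum1 : um < 1 := (div_lt_one ham).2 hDm
  have hupum : up ≤ um := by
    rw [hup, hum, div_le_div_iff₀ hap ham]
    nlinarith
  -- rewrite logs
  have hup1' : (0:ℝ) < 1 - up := by linarith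
  have hum1' : (0:ℝ) < 1 - um := by linarith
  have e1 : Real.log (ap+Hp) = Real.log ap + Real.log (1+up) := by
    rw [← Real.log_mul hap.ne' (by positivity)]
    rw [show ap * (1+up) = ap + Hp from by rw [hup]; field_simp]
  have e2 : Real.log (ap-Hp) = Real.log ap + Real.log (1-up) := by
    rw [← Real.log_mul hap.ne' hup1'.ne']
    rw [show ap * (1-up) = ap - Hp from by rw [hup]; field_simp]
  have e3 : Real.log (am+Hm) = Real.log am + Real.log (1+um) := by
    rw [← Real.log_mul ham.ne' (by positivity)]
    rw [show am * (1+um) = am + Hm from by rw [hum]; field_simp]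
  have e4 : Real.log (am-Hm) = Real.log am + Real.log (1-um) := by
    rw [← Real.log_mul ham.ne' hum1'.ne']
    rw [show am * (1-um) = am - Hm from by rw [hum]; field_simp]
  -- part 1
  have p1 : Real.log (1+um) + Real.log (1-um) ≤ Real.log (1+up) + Real.log (1-up) := by
    rw [← Real.log_mul (by positivity) hum1'.ne',
       ← Real.log_mul (by positivity) hup1'.ne']
    apply Real.log_le_log (by nlinarith)
    nlinarith
  -- part 2 : lambda's
  set lp := Real.log (1+up) - Real.log (1-up) with hlp
  set lm := Real.log (1+um) - Real.log (1-um) with hlm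
  have hlp' : lp = Real.log ((1+up)/(1-up)) := by
    rw [hlp, Real.log_div (by positivity) hup1'.ne']
  have hlm' : lm = Real.log ((1+um)/(1-um)) := by
    rw [hlm, Real.log_div (by positivity) hum1'.ne']
  have hlp0 : 0 ≤ lp := by
    rw [hlp']
    apply Real.log_nonneg
    rw [le_div_iff₀ hup1']
    nlinarith
  have hlm0 : 0 ≤ lm := by
    rw [hlm']
    apply Real.log_nonneg
    rw [le_div_iff₀ hum1']
    nlinarith
  have hmu : um * lp ≤ up * lm := by
    rw [hlp', hlm']; exact muMono hup0 hupum hum1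
  -- λp/Hp ≤ λm/Hm
  have hdiv : lp/Hp ≤ lm/Hm := by
    rw [div_le_div_iff₀ hHp hHm]
    -- lp * Hm ≤ lm * Hp;  Hm = am*um, Hp = ap*up
    have hHpv : Hp = ap * up := by rw [hup]; field_simp
    have hHmv : Hm = am * um := by rw [hum]; field_simp
    rw [hHpv, hHmv]
    -- lp * (am*um) ≤ lm * (ap*up)
    have s1 : am * (um * lp) ≤ am * (up * lm) := by
      exact mul_le_mul_of_nonneg_left hmu ham.le
    have s2 : am * (up * lm) ≤ ap * (up * lm) := by
      apply mul_le_mul_of_nonneg_right haa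
      positivity
    calc lp * (am * um) = am * (um * lp) := by ring
      _ ≤ am * (up * lm) := s1
      _ ≤ ap * (up * lm) := s2
      _ = lm * (ap * up) := by ring
  have p2 : 0 ≤ (kp/Hp) * lp + (km/Hm) * lm := by
    rcases le_or_gt 0 kp with hkp|hkp
    · have : 0 ≤ (kp/Hp) * lp := by positivity
      have : 0 ≤ (km/Hm) * lm := by positivity
      positivity
    · have c1 : (kp/Hm) * lm ≤ (kp/Hp) * lp := by
        have : kp * (lm/Hm) ≤ kp * (lp/Hp) := mul_le_mul_of_nonpos_left hdiv hkp.le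
        calc (kp/Hm) * lm = kp * (lm/Hm) := by ring
          _ ≤ kp * (lp/Hp) := this
          _ = (kp/Hp) * lp := by ring
      have c2 : 0 ≤ ((kp+km)/Hm) * lm := by positivity
      have : (kp/Hm)*lm + (km/Hm)*lm = ((kp+km)/Hm)*lm := by ring
      linarith
  have ESp : Real.log (ap+Hp) + Real.log (ap-Hp) - 2*Real.log ap
      = Real.log (1+up) + Real.log (1-up) := by rw [e1, e2]; ring
  have ESm : Real.log (am+Hm) + Real.log (am-Hm) - 2*Real.log am
      = Real.log (1+um) + Real.log (1-um) := by rw [e3, e4]; ring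
  have ELp : Real.log (ap+Hp) - Real.log (ap-Hp) = lp := by rw [e1, e2, hlp]; ring
  have ELm : Real.log (am+Hm) - Real.log (am-Hm) = lm := by rw [e3, e4, hlm]; ring
  rw [ESp, ESm, ELp, ELm]
  have h1 := mul_nonneg hst (by linarith :
    (0:ℝ) ≤ Real.log (1+up) + Real.log (1-up) - (Real.log (1+um) + Real.log (1-um)))
  linarith [p2]

lemma mainCase (r s c3 b t : ℝ) (ht : t ≠ 0)
    (h1 : 0 ≤ s * t) (h2 : r * c3 * t ≤ 0) (h3 : b ^ 2 ≤ c3 ^ 2)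
    (hbp : ∀ z ∈ Icc (0:ℝ) 1,
      Real.sqrt (b^2*(1-z^2)*t^2 + (r + c3*z*t)^2) ≤ 1 + s*z*t)
    (hbm : ∀ z ∈ Icc (0:ℝ) 1,
      Real.sqrt (b^2*(1-z^2)*t^2 + (r - c3*z*t)^2) ≤ 1 - s*z*t)
    (hA : ¬(b = 0 ∧ r = 0 ∧ c3 = 0))
    (hB : ¬(s = 0 ∧ r*c3 = 0 ∧ c3^2 = b^2 ∧ b^2*t^2 + r^2 = 1)) :
    MonotoneOn (fun z =>
      (1 + s*z*t + Real.sqrt (b^2*(1-z^2)*t^2 + (r + c3*z*t)^2)) *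
        Real.log (1 + s*z*t + Real.sqrt (b^2*(1-z^2)*t^2 + (r + c3*z*t)^2))
      + (1 + s*z*t - Real.sqrt (b^2*(1-z^2)*t^2 + (r + c3*z*t)^2)) *
        Real.log (1 + s*z*t - Real.sqrt (b^2*(1-z^2)*t^2 + (r + c3*z*t)^2))
      - 2*((1 + s*z*t) * Real.log (1 + s*z*t))
      + (1 - s*z*t + Real.sqrt (b^2*(1-z^2)*t^2 + (r - c3*z*t)^2)) *
        Real.log (1 - s*z*t + Real.sqrt (b^2*(1-z^2)*t^2 + (r - c3*z*t)^2))
      + (1 - s*z*t - Real.sqrt (b^2*(1-z^2)*t^2 + (r - c3*z*t)^2)) *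
        Real.log (1 - s*z*t - Real.sqrt (b^2*(1-z^2)*t^2 + (r - c3*z*t)^2))
      - 2*((1 - s*z*t) * Real.log (1 - s*z*t))) (Icc (0:ℝ) 1) := by
  have ht2 : (0:ℝ) < t^2 := by positivity
  have hst1 : s * t ≤ 1 := by
    have h := hbm 1 (by norm_num)
    nlinarith [Real.sqrt_nonneg (b^2*(1-(1:ℝ)^2)*t^2 + (r - c3*1*t)^2)]
  -- the four exceptional root sets
  have fq1 : {z : ℝ | ((c3^2-b^2)*t^2)*z^2 + (2*(r*c3*t))*z + (b^2*t^2 + r^2) = 0}.Finite := by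
    apply quadFinite
    rintro ⟨ha, hb, hc⟩
    have hbt : (b*t)^2 = 0 := by nlinarith [sq_nonneg (b*t), sq_nonneg r]
    have hr2 : r^2 = 0 := by nlinarith [sq_nonneg (b*t)]
    have hb0 : b = 0 := by
      rcases mul_eq_zero.1 (sq_eq_zero_iff.1 hbt) with h|h
      · exact h
      · exact absurd h ht
    have hr0 : r = 0 := sq_eq_zero_iff.1 hr2
    have hc3 : c3 = 0 := by
      have : (c3*t)^2 = 0 := by nlinarith [sq_nonneg (c3*t)]
      rcases mul_eq_zero.1 (sq_eq_zero_iff.1 this) with h|h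
      · exact h
      · exact absurd h ht
    exact hA ⟨hb0, hr0, hc3⟩
  have fq2 : {z : ℝ | ((c3^2-b^2)*t^2)*z^2 + (-(2*(r*c3*t)))*z + (b^2*t^2 + r^2) = 0}.Finite := by
    apply quadFinite
    rintro ⟨ha, hb, hc⟩
    have hbt : (b*t)^2 = 0 := by nlinarith [sq_nonneg (b*t), sq_nonneg r]
    have hr2 : r^2 = 0 := by nlinarith [sq_nonneg (b*t)]
    have hb0 : b = 0 := by
      rcases mul_eq_zero.1 (sq_eq_zero_iff.1 hbt) with h|h
      · exact h
      · exact absurd h ht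
    have hr0 : r = 0 := sq_eq_zero_iff.1 hr2
    have hc3 : c3 = 0 := by
      have : (c3*t)^2 = 0 := by nlinarith [sq_nonneg (c3*t)]
      rcases mul_eq_zero.1 (sq_eq_zero_iff.1 this) with h|h
      · exact h
      · exact absurd h ht
    exact hA ⟨hb0, hr0, hc3⟩
  have fD1 : {z : ℝ | ((s^2-(c3^2-b^2))*t^2)*z^2 + (2*(s*t)-2*(r*c3*t))*z + (1-b^2*t^2-r^2) = 0}.Finite := by
    apply quadFinite
    rintro ⟨ha, hb, hc⟩
    have hst0 : s*t = 0 := by linarith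
    have hrc0 : r*c3*t = 0 := by linarith
    have hs0 : s = 0 := by
      rcases mul_eq_zero.1 hst0 with h|h
      · exact h
      · exact absurd h ht
    have hrc : r*c3 = 0 := by
      rcases mul_eq_zero.1 hrc0 with h|h
      · exact h
      · exact absurd h ht
    have hcb : c3^2 = b^2 := by
      have h' : s^2 - (c3^2-b^2) = 0 := by
        rcases mul_eq_zero.1 ha with h|h
        · exact h
        · exact absurd h ht2.ne'
      nlinarith [h']
    exact hB ⟨hs0, hrc, hcb, by linarith⟩
  have fD2 : {z : ℝ | ((s^2-(c3^2-b^2))*t^2)*z^2 + (-(2*(s*t))+2*(r*c3*t))*z + (1-b^2*t^2-r^2) = 0}.Finite := by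
    apply quadFinite
    rintro ⟨ha, hb, hc⟩
    have hst0 : s*t = 0 := by linarith
    have hrc0 : r*c3*t = 0 := by linarith
    have hs0 : s = 0 := by
      rcases mul_eq_zero.1 hst0 with h|h
      · exact h
      · exact absurd h ht
    have hrc : r*c3 = 0 := by
      rcases mul_eq_zero.1 hrc0 with h|h
      · exact h
      · exact absurd h ht
    have hcb : c3^2 = b^2 := by
      have h' : s^2 - (c3^2-b^2) = 0 := by
        rcases mul_eq_zero.1 ha with h|h
        · exact h
        · exact absurd h ht2.ne'
      nlinarith [h']
    exact hB ⟨hs0, hrc, hcb, by linarith⟩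
  have hfin := ((fq1.union fq2).union fD1).union fD2
  apply glueAux hfin.toFinset
  · -- continuity
    have clin : Continuous (fun z : ℝ => s*z*t) :=
      (continuous_const.mul continuous_id).mul continuous_const
    have cA : Continuous (fun z : ℝ => 1 + s*z*t) := continuous_const.add clin
    have cB : Continuous (fun z : ℝ => 1 - s*z*t) := continuous_const.sub clin
    have cw1 : Continuous (fun z : ℝ => b^2*(1-z^2)*t^2) :=
      (continuous_const.mul (continuous_const.sub (continuous_pow 2))).mul continuous_const
    have cw2 : Continuous (fun z : ℝ => (r + c3*z*t)^2) :=
      (continuous_const.add ((continuous_const.mul continuous_id).mul continuous_const)).pow 2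
    have cw3 : Continuous (fun z : ℝ => (r - c3*z*t)^2) :=
      (continuous_const.sub ((continuous_const.mul continuous_id).mul continuous_const)).pow 2
    have cqp : Continuous (fun z : ℝ => b^2*(1-z^2)*t^2 + (r + c3*z*t)^2) := cw1.add cw2
    have cqm : Continuous (fun z : ℝ => b^2*(1-z^2)*t^2 + (r - c3*z*t)^2) := cw1.add cw3
    have csp : Continuous (fun z : ℝ => Real.sqrt (b^2*(1-z^2)*t^2 + (r + c3*z*t)^2)) :=
      Real.continuous_sqrt.comp cqp
    have csm : Continuous (fun z : ℝ => Real.sqrt (b^2*(1-z^2)*t^2 + (r - c3*z*t)^2)) :=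
      Real.continuous_sqrt.comp cqm
    have ml : ∀ (f : ℝ → ℝ), Continuous f → Continuous (fun z => f z * Real.log (f z)) :=
      fun f hf => Real.continuous_mul_log.comp hf
    exact (((((ml _ (cA.add csp)).add (ml _ (cA.sub csp))).sub
      (continuous_const.mul (ml _ cA))).add (ml _ (cB.add csm))).add
      (ml _ (cB.sub csm))).sub (continuous_const.mul (ml _ cB)) |>.continuousOn
  · -- derivative
    intro z hz hzS
    obtain ⟨hz0, hz1⟩ := hz
    simp only [Set.Finite.mem_toFinset, Set.mem_union, Set.mem_setOf_eq, not_or] at hzS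
    obtain ⟨⟨⟨n1, n2⟩, n3⟩, n4⟩ := hzS

    -- bounds at z
    have hb1 := hbp z ⟨hz0.le, hz1.le⟩
    have hb2 := hbm z ⟨hz0.le, hz1.le⟩
    have hsz : 0 ≤ s*z*t := by nlinarith
    have hsz1 : s*z*t < 1 := by nlinarith [mul_nonneg hz0.le (sub_nonneg.2 hst1)]
    set qpz := b^2*(1-z^2)*t^2 + (r + c3*z*t)^2 with hqpz
    set qmz := b^2*(1-z^2)*t^2 + (r - c3*z*t)^2 with hqmz
    set Hpz := Real.sqrt qpz with hHpz
    set Hmz := Real.sqrt qmz with hHmz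
    set apz := 1 + s*z*t with hapz
    set amz := 1 - s*z*t with hamz
    have hap0 : 0 < apz := by rw [hapz]; linarith
    have ham0 : 0 < amz := by rw [hamz]; linarith
    have hz2 : (0:ℝ) ≤ 1 - z^2 := by nlinarith
    have hqp0 : 0 ≤ qpz := by
      rw [hqpz]
      have := mul_nonneg (mul_nonneg (sq_nonneg b) hz2) (sq_nonneg t)
      nlinarith [sq_nonneg (r + c3*z*t)]
    have hqm0 : 0 ≤ qmz := by
      rw [hqmz]
      have := mul_nonneg (mul_nonneg (sq_nonneg b) hz2) (sq_nonneg t)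
      nlinarith [sq_nonneg (r - c3*z*t)]
    have hqpne : qpz ≠ 0 := by
      intro h
      apply n1
      rw [show ((c3^2-b^2)*t^2)*z^2 + (2*(r*c3*t))*z + (b^2*t^2 + r^2) = qpz from by
        rw [hqpz]; ring]
      exact h
    have hqmne : qmz ≠ 0 := by
      intro h
      apply n2
      rw [show ((c3^2-b^2)*t^2)*z^2 + (-(2*(r*c3*t)))*z + (b^2*t^2 + r^2) = qmz from by
        rw [hqmz]; ring]
      exact h
    have hqp_pos : 0 < qpz := hqp0.lt_of_ne (Ne.symm hqpne)
    have hqm_pos : 0 < qmz := hqm0.lt_of_ne (Ne.symm hqmne)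
    have hHp_pos : 0 < Hpz := by rw [hHpz]; exact Real.sqrt_pos.2 hqp_pos
    have hHm_pos : 0 < Hmz := by rw [hHmz]; exact Real.sqrt_pos.2 hqm_pos
    have hHpne : Hpz ≠ 0 := hHp_pos.ne'
    have hHmne : Hmz ≠ 0 := hHm_pos.ne'
    have hqsle : qpz ≤ qmz := by
      rw [hqpz, hqmz]
      nlinarith [mul_nonneg (neg_nonneg.2 h2) hz0.le]
    have hHple : Hpz ≤ Hmz := by rw [hHpz, hHmz]; exact Real.sqrt_le_sqrt hqsle
    -- strict bounds
    have e3 : ((s^2-(c3^2-b^2))*t^2)*z^2 + (2*(s*t)-2*(r*c3*t))*z + (1-b^2*t^2-r^2)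
        = apz^2 - qpz := by rw [hapz, hqpz]; ring
    have e4 : ((s^2-(c3^2-b^2))*t^2)*z^2 + (-(2*(s*t))+2*(r*c3*t))*z + (1-b^2*t^2-r^2)
        = amz^2 - qmz := by rw [hamz, hqmz]; ring
    have hd3 : apz^2 - qpz ≠ 0 := by rw [← e3]; exact n3
    have hd4 : amz^2 - qmz ≠ 0 := by rw [← e4]; exact n4
    have hHp0' : 0 ≤ Hpz := hHp_pos.le
    have hHm0' : 0 ≤ Hmz := hHm_pos.le
    have hqle : qpz ≤ apz^2 := by
      have h5 : Hpz^2 ≤ apz^2 := by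
        apply pow_le_pow_left₀ hHp0' hb1
      have h6 : Hpz^2 = qpz := by rw [hHpz]; exact Real.sq_sqrt hqp0
      linarith
    have hqle' : qmz ≤ amz^2 := by
      have h5 : Hmz^2 ≤ amz^2 := by
        apply pow_le_pow_left₀ hHm0' hb2
      have h6 : Hmz^2 = qmz := by rw [hHmz]; exact Real.sq_sqrt hqm0
      linarith
    have hqlt : qpz < apz^2 := lt_of_le_of_ne hqle (fun h => hd3 (by linarith))
    have hqlt' : qmz < amz^2 := lt_of_le_of_ne hqle' (fun h => hd4 (by linarith))
    have hHpa : Hpz < apz := by rw [hHpz]; exact (Real.sqrt_lt' hap0).2 hqlt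
    have hHma : Hmz < amz := by rw [hHmz]; exact (Real.sqrt_lt' ham0).2 hqlt'
    -- the k's
    set kp := c3*t*(r + c3*z*t) - b^2*t^2*z with hkp
    set km := -(c3*t*(r - c3*z*t)) - b^2*t^2*z with hkm
    have hkey : (0:ℝ) ≤ (c3^2-b^2)*t^2*z :=
      mul_nonneg (mul_nonneg (sub_nonneg.2 h3) (sq_nonneg t)) hz0.le
    have hkm0 : 0 ≤ km := by rw [hkm]; nlinarith
    have hks : 0 ≤ kp + km := by rw [hkp, hkm]; nlinarith
    -- derivatives
    have dap : HasDerivAt (fun w : ℝ => 1 + s*w*t) (s*t) z := by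
      simpa using (((hasDerivAt_id z).const_mul s).mul_const t).const_add 1
    have dam : HasDerivAt (fun w : ℝ => 1 - s*w*t) (-(s*t)) z := by
      simpa using (((hasDerivAt_id z).const_mul s).mul_const t).const_sub 1
    have dqp : HasDerivAt (fun w : ℝ => b^2*(1-w^2)*t^2 + (r + c3*w*t)^2) (2*kp) z := by
      have d1 : HasDerivAt (fun w : ℝ => b^2*(1-w^2)*t^2) ((b^2*(-(2*z)))*t^2) z := by
        have dsq : HasDerivAt (fun w : ℝ => 1 - w^2) (-(2*z)) z := by
          simpa using (hasDerivAt_pow 2 z).const_sub 1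
        exact (dsq.const_mul (b^2)).mul_const (t^2)
      have dlin : HasDerivAt (fun w : ℝ => r + c3*w*t) (c3*t) z := by
        simpa using (((hasDerivAt_id z).const_mul c3).mul_const t).const_add r
      have d2 : HasDerivAt (fun w : ℝ => (r + c3*w*t)^2) (2*(r + c3*z*t)*(c3*t)) z := by
        simpa using dlin.fun_pow 2
      have := d1.add d2
      refine this.congr_deriv ?_
      rw [hkp]; ring
    have dqm : HasDerivAt (fun w : ℝ => b^2*(1-w^2)*t^2 + (r - c3*w*t)^2) (2*km) z := by
      have d1 : HasDerivAt (fun w : ℝ => b^2*(1-w^2)*t^2) ((b^2*(-(2*z)))*t^2) z := by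
        have dsq : HasDerivAt (fun w : ℝ => 1 - w^2) (-(2*z)) z := by
          simpa using (hasDerivAt_pow 2 z).const_sub 1
        exact (dsq.const_mul (b^2)).mul_const (t^2)
      have dlin : HasDerivAt (fun w : ℝ => r - c3*w*t) (-(c3*t)) z := by
        simpa using (((hasDerivAt_id z).const_mul c3).mul_const t).const_sub r
      have d2 : HasDerivAt (fun w : ℝ => (r - c3*w*t)^2) (2*(r - c3*z*t)*(-(c3*t))) z := by
        simpa using dlin.fun_pow 2
      have := d1.add d2
      refine this.congr_deriv ?_
      rw [hkm]; ring
    have dsp : HasDerivAt (fun w : ℝ => Real.sqrt (b^2*(1-w^2)*t^2 + (r + c3*w*t)^2))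
        (kp/Hpz) z := by
      have h0 : HasDerivAt Real.sqrt (1/(2*Hpz)) qpz := by
        rw [hHpz]; exact Real.hasDerivAt_sqrt hqpne
      have h1 := h0.comp z dqp
      refine h1.congr_deriv ?_
      ring
    have dsm : HasDerivAt (fun w : ℝ => Real.sqrt (b^2*(1-w^2)*t^2 + (r - c3*w*t)^2))
        (km/Hmz) z := by
      have h0 : HasDerivAt Real.sqrt (1/(2*Hmz)) qmz := by
        rw [hHmz]; exact Real.hasDerivAt_sqrt hqmne
      have h1 := h0.comp z dqm
      refine h1.congr_deriv ?_
      ring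
    have hf1 : apz + Hpz ≠ 0 := by positivity
    have hf2 : apz - Hpz ≠ 0 := ne_of_gt (by linarith : (0:ℝ) < apz - Hpz)
    have hf3 : amz + Hmz ≠ 0 := by positivity
    have hf4 : amz - Hmz ≠ 0 := ne_of_gt (by linarith : (0:ℝ) < amz - Hmz)
    have D1 : HasDerivAt (fun w : ℝ =>
        (1 + s*w*t + Real.sqrt (b^2*(1-w^2)*t^2 + (r + c3*w*t)^2)) *
          Real.log (1 + s*w*t + Real.sqrt (b^2*(1-w^2)*t^2 + (r + c3*w*t)^2)))
        ((Real.log (apz + Hpz) + 1) * (s*t + kp/Hpz)) z := by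
      have := (Real.hasDerivAt_mul_log hf1).comp z (dap.fun_add dsp); exact this
    have D2 : HasDerivAt (fun w : ℝ =>
        (1 + s*w*t - Real.sqrt (b^2*(1-w^2)*t^2 + (r + c3*w*t)^2)) *
          Real.log (1 + s*w*t - Real.sqrt (b^2*(1-w^2)*t^2 + (r + c3*w*t)^2)))
        ((Real.log (apz - Hpz) + 1) * (s*t - kp/Hpz)) z := by
      have := (Real.hasDerivAt_mul_log hf2).comp z (dap.fun_sub dsp); exact this
    have D3 : HasDerivAt (fun w : ℝ => 2*((1 + s*w*t) * Real.log (1 + s*w*t)))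
        (2*((Real.log apz + 1) * (s*t))) z := by
      have := ((Real.hasDerivAt_mul_log hap0.ne').comp z dap).const_mul 2; exact this
    have D4 : HasDerivAt (fun w : ℝ =>
        (1 - s*w*t + Real.sqrt (b^2*(1-w^2)*t^2 + (r - c3*w*t)^2)) *
          Real.log (1 - s*w*t + Real.sqrt (b^2*(1-w^2)*t^2 + (r - c3*w*t)^2)))
        ((Real.log (amz + Hmz) + 1) * (-(s*t) + km/Hmz)) z := by
      have := (Real.hasDerivAt_mul_log hf3).comp z (dam.fun_add dsm); exact this
    have D5 : HasDerivAt (fun w : ℝ =>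
        (1 - s*w*t - Real.sqrt (b^2*(1-w^2)*t^2 + (r - c3*w*t)^2)) *
          Real.log (1 - s*w*t - Real.sqrt (b^2*(1-w^2)*t^2 + (r - c3*w*t)^2)))
        ((Real.log (amz - Hmz) + 1) * (-(s*t) - km/Hmz)) z := by
      have := (Real.hasDerivAt_mul_log hf4).comp z (dam.fun_sub dsm); exact this
    have D6 : HasDerivAt (fun w : ℝ => 2*((1 - s*w*t) * Real.log (1 - s*w*t)))
        (2*((Real.log amz + 1) * (-(s*t)))) z := by
      have := ((Real.hasDerivAt_mul_log ham0.ne').comp z dam).const_mul 2; exact this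
    have DG := ((((D1.add D2).sub D3).add D4).add D5).sub D6
    refine ⟨_, DG, ?_⟩
    have key := signIneq (st := s*t) (kp := kp) h1 ham0 (by rw [hapz, hamz]; linarith)
      hHp_pos hHple hHpa hHma hkm0 hks
    have eqn : (Real.log (apz + Hpz) + 1) * (s*t + kp/Hpz)
        + (Real.log (apz - Hpz) + 1) * (s*t - kp/Hpz)
        - 2*((Real.log apz + 1) * (s*t))
        + (Real.log (amz + Hmz) + 1) * (-(s*t) + km/Hmz)
        + (Real.log (amz - Hmz) + 1) * (-(s*t) - km/Hmz)
        - 2*((Real.log amz + 1) * (-(s*t)))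
        = (s*t) * ((Real.log (apz+Hpz) + Real.log (apz-Hpz) - 2*Real.log apz)
            - (Real.log (amz+Hmz) + Real.log (amz-Hmz) - 2*Real.log amz))
          + (kp/Hpz) * (Real.log (apz+Hpz) - Real.log (apz-Hpz))
          + (km/Hmz) * (Real.log (amz+Hmz) - Real.log (amz-Hmz)) := by
      ring
    rw [eqn]
    exact key


lemma selfdiv (c y : ℝ) : y * Real.logb c (y/y) = 0 := by
  rcases eq_or_ne y 0 with h|h
  · simp [h]
  · simp [div_self h]

/-- Case (a)(i): if `s·tanh x ≥ 0`, `r·c₃·tanh x ≤ 0` and `c₃² ≥ b² ≥ 0`, then `F` is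
antitone on `[0,1]`. -/
theorem F_antitone_case_a_i
    (r s c3 b x : ℝ)
    (h1 : 0 ≤ s * Real.tanh x) (h2 : r * c3 * Real.tanh x ≤ 0)
    (h3 : b ^ 2 ≤ c3 ^ 2) (h4 : 0 ≤ b ^ 2)
    (Hp Hm : ℝ → ℝ)
    (hHp : ∀ w : ℝ, Hp w = Real.sqrt (b ^ 2 * (1 - w ^ 2) * Real.tanh x ^ 2 + (r + c3 * w * Real.tanh x) ^ 2))
    (hHm : ∀ w : ℝ, Hm w = Real.sqrt (b ^ 2 * (1 - w ^ 2) * Real.tanh x ^ 2 + (r - c3 * w * Real.tanh x) ^ 2))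
    (F : ℝ → ℝ)
    (hF : ∀ w : ℝ, F w = -(1/4) *
      ((1 + s * w * Real.tanh x + Hp w) *
          Real.logb 2 ((1 + s * w * Real.tanh x + Hp w) / (1 + s * w * Real.tanh x))
       + (1 + s * w * Real.tanh x - Hp w) *
          Real.logb 2 ((1 + s * w * Real.tanh x - Hp w) / (1 + s * w * Real.tanh x))
       + (1 - s * w * Real.tanh x + Hm w) *
          Real.logb 2 ((1 - s * w * Real.tanh x + Hm w) / (1 - s * w * Real.tanh x))
       + (1 - s * w * Real.tanh x - Hm w) *
          Real.logb 2 ((1 - s * w * Real.tanh x - Hm w) / (1 - s * w * Real.tanh x))))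
    (hbound : ∀ z ∈ Set.Icc (0 : ℝ) 1,
      Hp z ≤ 1 + s * z * Real.tanh x ∧ Hm z ≤ 1 - s * z * Real.tanh x) :
    AntitoneOn F (Set.Icc (0 : ℝ) 1) := by
  set t := Real.tanh x with htdef
  by_cases ht : t = 0
  · intro z1 hz1 z2 hz2 h12
    have e : F z2 = F z1 := by
      rw [hF z2, hF z1, hHp z2, hHp z1, hHm z2, hHm z1, ht]
      norm_num
    exact e.le
  by_cases hA : b = 0 ∧ r = 0 ∧ c3 = 0
  · obtain ⟨hb0, hr0, hc0⟩ := hA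
    intro z1 hz1 z2 hz2 h12
    have hC : ∀ w : ℝ, F w = 0 := by
      intro w
      rw [hF w, hHp w, hHm w, hb0, hr0, hc0]
      norm_num [selfdiv]
    rw [hC z1, hC z2]
  by_cases hB : s = 0 ∧ r*c3 = 0 ∧ c3^2 = b^2 ∧ b^2*t^2 + r^2 = 1
  · obtain ⟨hs0, hrc, hc3b, hbt1⟩ := hB
    intro z1 hz1 z2 hz2 h12
    have ep : ∀ w : ℝ, Hp w = 1 := by
      intro w
      rw [hHp w, show b ^ 2 * (1 - w ^ 2) * t ^ 2 + (r + c3 * w * t) ^ 2 = 1 from by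
        linear_combination hbt1 + (w^2*t^2)*hc3b + (2*w*t)*hrc]
      exact Real.sqrt_one
    have em : ∀ w : ℝ, Hm w = 1 := by
      intro w
      rw [hHm w, show b ^ 2 * (1 - w ^ 2) * t ^ 2 + (r - c3 * w * t) ^ 2 = 1 from by
        linear_combination hbt1 + (w^2*t^2)*hc3b - (2*w*t)*hrc]
      exact Real.sqrt_one
    have e : F z2 = F z1 := by
      rw [hF z2, hF z1, ep z2, ep z1, em z2, em z1, hs0]
      norm_num
    exact e.le
  · have hmono := mainCase r s c3 b t ht h1 h2 h3
      (fun z hz => by rw [← hHp z]; exact (hbound z hz).1)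
      (fun z hz => by rw [← hHm z]; exact (hbound z hz).2) hA hB
    have hL : 0 < Real.log 2 := Real.log_pos (by norm_num)
    have hF2 : ∀ w ∈ Icc (0:ℝ) 1, F w = -(1/(4*Real.log 2)) *
        ((fun z : ℝ =>
          (1 + s*z*t + Real.sqrt (b^2*(1-z^2)*t^2 + (r + c3*z*t)^2)) *
            Real.log (1 + s*z*t + Real.sqrt (b^2*(1-z^2)*t^2 + (r + c3*z*t)^2))
          + (1 + s*z*t - Real.sqrt (b^2*(1-z^2)*t^2 + (r + c3*z*t)^2)) *
            Real.log (1 + s*z*t - Real.sqrt (b^2*(1-z^2)*t^2 + (r + c3*z*t)^2))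
          - 2*((1 + s*z*t) * Real.log (1 + s*z*t))
          + (1 - s*z*t + Real.sqrt (b^2*(1-z^2)*t^2 + (r - c3*z*t)^2)) *
            Real.log (1 - s*z*t + Real.sqrt (b^2*(1-z^2)*t^2 + (r - c3*z*t)^2))
          + (1 - s*z*t - Real.sqrt (b^2*(1-z^2)*t^2 + (r - c3*z*t)^2)) *
            Real.log (1 - s*z*t - Real.sqrt (b^2*(1-z^2)*t^2 + (r - c3*z*t)^2))
          - 2*((1 - s*z*t) * Real.log (1 - s*z*t))) w) := by
      intro w hw
      have hw0 : 0 ≤ s*w*t := by nlinarith [mul_nonneg h1 hw.1]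
      have hp0 : 0 ≤ Hp w := by rw [hHp w]; exact Real.sqrt_nonneg _
      have hm0 : 0 ≤ Hm w := by rw [hHm w]; exact Real.sqrt_nonneg _
      have hb1 := (hbound w hw).1
      have hb2 := (hbound w hw).2
      have t1 := termEq (a := 1 + s*w*t) (h := Hp w) (by linarith) hp0 hb1
      have t2 := termEq (a := 1 - s*w*t) (h := Hm w) (by linarith) hm0 hb2
      rw [hF w]
      rw [hHp w] at t1 hp0
      rw [hHm w] at t2 hm0
      rw [hHp w, hHm w]
      beta_reduce
      linear_combination (-(1/4))*t1 + (-(1/4))*t2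
    intro z1 hz1 z2 hz2 h12
    rw [hF2 z1 hz1, hF2 z2 hz2]
    exact mul_le_mul_of_nonpos_left (hmono hz1 hz2 h12)
      (neg_nonpos_of_nonneg (by positivity))
end

section
/- Let r, s, c₃, b, x be real numbers with s·tanh x ≥ 0, r·c₃·tanh x ≤ 0 and s·r·c₃ ≤ c₃² − b² ≤ 0, and assume that for all z ∈ [0,1], H₊(z) ≤ 1 + s z tanh x and H₋(z) ≤ 1 − s z tanh x. Then F is antitone (monotone nonincreasing) on [0,1]. -/
noncomputable def mlog (x : ℝ) : ℝ := x * Real.log x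

lemma continuous_mlog : Continuous mlog := by
  have := Real.continuous_negMulLog.neg
  convert this using 1
  funext x
  simp [mlog, Real.negMulLog]

lemma hasDerivAt_mlog {y : ℝ} (hy : y ≠ 0) : HasDerivAt mlog (Real.log y + 1) y := by
  have h := (hasDerivAt_id y).mul (Real.hasDerivAt_log hy)
  have h2 : (1 : ℝ) * Real.log y + id y * y⁻¹ = Real.log y + 1 := by
    field_simp
    simp only [id_eq]; ring
  rw [h2] at h
  exact h.congr_of_eventuallyEq (by filter_upwards with x; simp [mlog])

lemma hasDerivAt_log_one_add {y : ℝ} (h : (1 : ℝ) + y ≠ 0) :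
    HasDerivAt (fun y : ℝ => Real.log (1 + y)) (1 / (1 + y)) y := by
  have h1 : HasDerivAt (fun y : ℝ => 1 + y) 1 y := by
    simpa using (hasDerivAt_id y).const_add 1
  have := (Real.hasDerivAt_log h).comp y h1
  rw [mul_one] at this; rw [one_div]; exact this

lemma hasDerivAt_log_one_sub {y : ℝ} (h : (1 : ℝ) - y ≠ 0) :
    HasDerivAt (fun y : ℝ => Real.log (1 - y)) (-(1 / (1 - y))) y := by
  have h1 : HasDerivAt (fun y : ℝ => 1 - y) (-1) y := by
    simpa using (hasDerivAt_id y).const_sub 1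
  have := (Real.hasDerivAt_log h).comp y h1
  have e : (1 - y)⁻¹ * (-1) = -(1 / (1 - y)) := by field_simp
  rw [e] at this
  exact this

private lemma hasDerivAt_aux_f {y : ℝ} (hd1 : (1 : ℝ) - y ^ 2 ≠ 0)
    (hd2 : (1 : ℝ) + y ≠ 0) (hd3 : (1 : ℝ) - y ≠ 0) :
    HasDerivAt (fun y : ℝ => 2 * y / (1 - y ^ 2) - (Real.log (1 + y) - Real.log (1 - y)))
      (4 * y ^ 2 / (1 - y ^ 2) ^ 2) y := by
  have hn : HasDerivAt (fun y : ℝ => 2 * y) 2 y := by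
    simpa using (hasDerivAt_id y).const_mul 2
  have hdd : HasDerivAt (fun y : ℝ => 1 - y ^ 2) (-(2 * y ^ 1)) y := by
    simpa using (hasDerivAt_pow 2 y).const_sub 1
  have hq := hn.div hdd hd1
  have hD := hq.sub ((hasDerivAt_log_one_add hd2).sub (hasDerivAt_log_one_sub hd3))
  refine hD.congr_deriv ?_
  have e2 : (1 : ℝ) - y ^ 2 = (1 + y) * (1 - y) := by ring
  field_simp
  ring

/-- L(m) ≤ 2m/(1-m²) for 0 ≤ m < 1 -/
lemma L_le {m : ℝ} (h0 : 0 ≤ m) (h1 : m < 1) :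
    Real.log (1 + m) - Real.log (1 - m) ≤ 2 * m / (1 - m ^ 2) := by
  set f : ℝ → ℝ := fun y => 2 * y / (1 - y ^ 2) - (Real.log (1 + y) - Real.log (1 - y)) with hf
  have hne : ∀ y ∈ Set.Ioo (0:ℝ) m, (1 : ℝ) - y ^ 2 ≠ 0 ∧ (1:ℝ) + y ≠ 0 ∧ (1:ℝ) - y ≠ 0 := by
    intro y hy
    obtain ⟨hy0, hym⟩ := hy
    have hy1 : y < 1 := lt_of_lt_of_le hym h1.le
    refine ⟨by nlinarith, by nlinarith, by nlinarith⟩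
  have key : MonotoneOn f (Set.Icc 0 m) := by
    apply monotoneOn_of_deriv_nonneg (convex_Icc 0 m)
    · apply ContinuousOn.sub
      · apply ContinuousOn.div (by fun_prop) (by fun_prop)
        intro y hy
        obtain ⟨hy0, hym⟩ := hy
        nlinarith
      · apply ContinuousOn.sub
        · apply ContinuousOn.log (by fun_prop)
          intro y hy; obtain ⟨hy0, hym⟩ := hy; nlinarith
        · apply ContinuousOn.log (by fun_prop)
          intro y hy; obtain ⟨hy0, hym⟩ := hy; nlinarith
    · intro y hy
      rw [interior_Icc] at hy
      obtain ⟨e1, e2, e3⟩ := hne y hy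
      exact (hasDerivAt_aux_f e1 e2 e3).differentiableAt.differentiableWithinAt
    · intro y hy
      rw [interior_Icc] at hy
      obtain ⟨e1, e2, e3⟩ := hne y hy
      rw [(hasDerivAt_aux_f e1 e2 e3).deriv]
      positivity
  have h0m : (0 : ℝ) ∈ Set.Icc 0 m := by constructor <;> simp [h0]
  have hmm : m ∈ Set.Icc (0 : ℝ) m := by constructor <;> simp [h0]
  have := key h0m hmm h0
  simp only [hf] at this
  simp at this
  linarith [this]

/-- monotonicity of L(m)/m : m₂ L(m₁) ≤ m₁ L(m₂) for 0 < m₁ ≤ m₂ < 1. -/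
lemma L_mono {m₁ m₂ : ℝ} (h0 : 0 < m₁) (h12 : m₁ ≤ m₂) (h2 : m₂ < 1) :
    m₂ * (Real.log (1 + m₁) - Real.log (1 - m₁)) ≤ m₁ * (Real.log (1 + m₂) - Real.log (1 - m₂)) := by
  set L1 : ℝ := Real.log (1 + m₁) - Real.log (1 - m₁) with hL1
  set g : ℝ → ℝ := fun m => m₁ * (Real.log (1 + m) - Real.log (1 - m)) - m * L1 with hg
  have h11 : m₁ < 1 := lt_of_le_of_lt h12 h2
  have hne : ∀ y ∈ Set.Ioo m₁ m₂, (1:ℝ) + y ≠ 0 ∧ (1:ℝ) - y ≠ 0 := by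
    intro y hy
    obtain ⟨hy0, hym⟩ := hy
    have : y < 1 := lt_trans hym h2
    constructor <;> nlinarith
  have hd : ∀ y ∈ Set.Ioo m₁ m₂, HasDerivAt g (m₁ * (1 / (1 + y) - -(1 / (1 - y))) - L1) y := by
    intro y hy
    obtain ⟨e2, e3⟩ := hne y hy
    exact (((hasDerivAt_log_one_add e2).sub (hasDerivAt_log_one_sub e3)).const_mul m₁).sub
      (by simpa using (hasDerivAt_id y).mul_const L1)
  have key : MonotoneOn g (Set.Icc m₁ m₂) := by
    apply monotoneOn_of_deriv_nonneg (convex_Icc m₁ m₂)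
    · apply ContinuousOn.sub
      · apply ContinuousOn.mul continuousOn_const
        apply ContinuousOn.sub
        · apply ContinuousOn.log (by fun_prop)
          intro y hy; obtain ⟨hy0, hym⟩ := hy; nlinarith
        · apply ContinuousOn.log (by fun_prop)
          intro y hy; obtain ⟨hy0, hym⟩ := hy
          have : y < 1 := lt_of_le_of_lt hym h2
          nlinarith
      · fun_prop
    · intro y hy
      rw [interior_Icc] at hy
      exact (hd y hy).differentiableAt.differentiableWithinAt
    · intro y hy
      rw [interior_Icc] at hy
      rw [(hd y hy).deriv]
      obtain ⟨hy1, hy2⟩ := hy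
      have hylt : y < 1 := lt_trans hy2 h2
      have hy0 : 0 < y := lt_trans h0 hy1
      have e1 : (0:ℝ) < 1 - y ^ 2 := by nlinarith
      have e2 : (0:ℝ) < 1 - m₁ ^ 2 := by nlinarith
      have ha : (1:ℝ) + y ≠ 0 := by nlinarith
      have hb : (1:ℝ) - y ≠ 0 := by nlinarith
      have estep : m₁ * (1 / (1 + y) - -(1 / (1 - y))) = 2 * m₁ / (1 - y ^ 2) := by
        have efac : (1:ℝ) - y ^ 2 = (1 + y) * (1 - y) := by ring
        rw [efac]
        field_simp
        ring
      rw [estep]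
      have hcmp : 2 * m₁ / (1 - m₁ ^ 2) ≤ 2 * m₁ / (1 - y ^ 2) := by
        apply div_le_div_of_nonneg_left (by linarith) e1
        nlinarith
      have := L_le h0.le h11
      rw [← hL1] at this
      linarith
  have hm1 : m₁ ∈ Set.Icc m₁ m₂ := by constructor <;> simp [h12]
  have hm2 : m₂ ∈ Set.Icc m₁ m₂ := by constructor <;> simp [h12]
  have := key hm1 hm2 h12
  simp only [hg] at this
  have hgm1 : m₁ * (Real.log (1 + m₁) - Real.log (1 - m₁)) - m₁ * L1 = 0 := by
    rw [hL1]; ring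
  nlinarith [this]

set_option maxHeartbeats 1000000 in
/-- The core derivative-sign inequality. -/
lemma Npos {σ r γ B z hp hm : ℝ}
    (hσ : 0 ≤ σ) (hrγ : r * γ ≤ 0) (h3 : σ * (r * γ) ≤ γ ^ 2 - B) (hz : 0 ≤ z)
    (hp0 : 0 < hp) (hm0 : 0 < hm)
    (hpsq : hp ^ 2 = B * (1 - z ^ 2) + (r + γ * z) ^ 2)
    (hmsq : hm ^ 2 = B * (1 - z ^ 2) + (r - γ * z) ^ 2)
    (hpa : hp < 1 + σ * z) (hma : hm < 1 - σ * z) :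
    0 ≤ σ * (Real.log (1 + σ * z + hp) + Real.log (1 + σ * z - hp) - 2 * Real.log (1 + σ * z)
          - Real.log (1 - σ * z + hm) - Real.log (1 - σ * z - hm) + 2 * Real.log (1 - σ * z))
      + ((r * γ + (γ ^ 2 - B) * z) / hp) * (Real.log (1 + σ * z + hp) - Real.log (1 + σ * z - hp))
      + ((-(r * γ) + (γ ^ 2 - B) * z) / hm) * (Real.log (1 - σ * z + hm) - Real.log (1 - σ * z - hm)) := by
  set ap : ℝ := 1 + σ * z with hap
  set am : ℝ := 1 - σ * z with ham
  have ham0 : 0 < am := lt_of_le_of_lt hm0.le hma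
  have hap0 : 0 < ap := by positivity
  have hama : am ≤ ap := by simp [hap, ham]; nlinarith
  have hphm : hp ≤ hm := by nlinarith [sq_nonneg (hp + hm)]
  have hmle : hp * am ≤ hm * ap := by
    nlinarith [mul_le_mul_of_nonneg_right hphm ham0.le, mul_le_mul_of_nonneg_left hama hm0.le]
  -- the four positive μ's
  have hμ1 : 0 < ap + hp := by linarith
  have hμ2 : 0 < ap - hp := by linarith
  have hμ3 : 0 < am + hm := by linarith
  have hμ4 : 0 < am - hm := by linarith
  set Lp : ℝ := Real.log (ap + hp) - Real.log (ap - hp) with hLp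
  set Lm : ℝ := Real.log (am + hm) - Real.log (am - hm) with hLm
  have hLp0 : 0 ≤ Lp := by
    have := Real.log_le_log hμ2 (by linarith : ap - hp ≤ ap + hp)
    simp [hLp]; linarith
  have hLm0 : 0 ≤ Lm := by
    have := Real.log_le_log hμ4 (by linarith : am - hm ≤ am + hm)
    simp [hLm]; linarith
  -- E1 : bracket of logs is nonneg
  have hbr : 0 ≤ Real.log (ap + hp) + Real.log (ap - hp) - 2 * Real.log ap
      - Real.log (am + hm) - Real.log (am - hm) + 2 * Real.log am := by
    have e1 : Real.log (ap + hp) + Real.log (ap - hp) + 2 * Real.log am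
        = Real.log ((ap + hp) * (ap - hp) * am ^ 2) := by
      rw [Real.log_mul (by positivity) (by positivity), Real.log_mul (by positivity) (by positivity),
        Real.log_pow]
      push_cast; ring
    have e2 : Real.log (am + hm) + Real.log (am - hm) + 2 * Real.log ap
        = Real.log ((am + hm) * (am - hm) * ap ^ 2) := by
      rw [Real.log_mul (by positivity) (by positivity), Real.log_mul (by positivity) (by positivity),
        Real.log_pow]
      push_cast; ring
    have hle : (am + hm) * (am - hm) * ap ^ 2 ≤ (ap + hp) * (ap - hp) * am ^ 2 := by
      nlinarith [hmle, mul_pos hp0 ham0, mul_pos hm0 hap0]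
    have := Real.log_le_log (by positivity) hle
    rw [← e1, ← e2] at this
    linarith
  -- E2 : the L(m)/m monotonicity part
  have hLL : ap * Lp * hm ≤ am * Lm * hp := by
    have hm1pos : 0 < hp / ap := by positivity
    have hm12 : hp / ap ≤ hm / am := by
      rw [div_le_div_iff₀ hap0 ham0]; exact hmle
    have hm21 : hm / am < 1 := by
      rw [div_lt_one ham0]; exact hma
    have := L_mono hm1pos hm12 hm21
    have ep : Real.log (1 + hp / ap) - Real.log (1 - hp / ap) = Lp := by
      rw [hLp]
      have e1 : (1 : ℝ) + hp / ap = (ap + hp) / ap := by field_simp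
      have e2 : (1 : ℝ) - hp / ap = (ap - hp) / ap := by field_simp
      rw [e1, e2, Real.log_div (by positivity) (by positivity),
        Real.log_div (by positivity) (by positivity)]
      ring
    have em : Real.log (1 + hm / am) - Real.log (1 - hm / am) = Lm := by
      rw [hLm]
      have e1 : (1 : ℝ) + hm / am = (am + hm) / am := by field_simp
      have e2 : (1 : ℝ) - hm / am = (am - hm) / am := by field_simp
      rw [e1, e2, Real.log_div (by positivity) (by positivity),
        Real.log_div (by positivity) (by positivity)]
      ring
    rw [ep, em] at this
    -- this : (hm/am) * Lp ≤ (hp/ap) * Lm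
    rw [div_mul_eq_mul_div, div_mul_eq_mul_div, div_le_div_iff₀ ham0 hap0] at this
    nlinarith
  -- assemble
  have hgoal : σ * (Real.log (ap + hp) + Real.log (ap - hp) - 2 * Real.log ap
          - Real.log (am + hm) - Real.log (am - hm) + 2 * Real.log am)
      + ((r * γ + (γ ^ 2 - B) * z) / hp) * Lp
      + ((-(r * γ) + (γ ^ 2 - B) * z) / hm) * Lm
      = σ * (Real.log (ap + hp) + Real.log (ap - hp) - 2 * Real.log ap
          - Real.log (am + hm) - Real.log (am - hm) + 2 * Real.log am)
        + (r * γ) * (ap * Lp / hp - am * Lm / hm)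
        + ((γ ^ 2 - B) - σ * (r * γ)) * z * (Lp / hp + Lm / hm) := by
    field_simp
    ring
  have hE2 : 0 ≤ (r * γ) * (ap * Lp / hp - am * Lm / hm) := by
    have hle2 : ap * Lp / hp ≤ am * Lm / hm := by
      rw [div_le_div_iff₀ hp0 hm0]
      nlinarith [hLL]
    have : (0:ℝ) ≤ (-(r*γ)) * (-(ap * Lp / hp - am * Lm / hm)) := by
      apply mul_nonneg <;> linarith
    nlinarith [this]
  have hE3 : 0 ≤ ((γ ^ 2 - B) - σ * (r * γ)) * z * (Lp / hp + Lm / hm) := by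
    apply mul_nonneg (mul_nonneg (by linarith) hz)
    positivity
  have hE1 : 0 ≤ σ * (Real.log (ap + hp) + Real.log (ap - hp) - 2 * Real.log ap
          - Real.log (am + hm) - Real.log (am - hm) + 2 * Real.log am) :=
    mul_nonneg hσ hbr
  calc (0:ℝ) ≤ _ := add_nonneg (add_nonneg hE1 hE2) hE3
  _ = _ := hgoal.symm

noncomputable def Tfun (σ r γ B : ℝ) : ℝ → ℝ := fun z =>
  mlog (1 + σ * z + Real.sqrt (B * (1 - z ^ 2) + (r + γ * z) ^ 2))
  + mlog (1 + σ * z - Real.sqrt (B * (1 - z ^ 2) + (r + γ * z) ^ 2))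
  + mlog (1 - σ * z + Real.sqrt (B * (1 - z ^ 2) + (r - γ * z) ^ 2))
  + mlog (1 - σ * z - Real.sqrt (B * (1 - z ^ 2) + (r - γ * z) ^ 2))
  - 2 * mlog (1 + σ * z) - 2 * mlog (1 - σ * z)

lemma continuous_Tfun (σ r γ B : ℝ) : Continuous (Tfun σ r γ B) := by
  unfold Tfun
  have h1 : Continuous (fun z : ℝ => Real.sqrt (B * (1 - z ^ 2) + (r + γ * z) ^ 2)) :=
    Real.continuous_sqrt.comp (by fun_prop)
  have h2 : Continuous (fun z : ℝ => Real.sqrt (B * (1 - z ^ 2) + (r - γ * z) ^ 2)) :=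
    Real.continuous_sqrt.comp (by fun_prop)
  apply Continuous.sub
  apply Continuous.sub
  · exact ((((continuous_mlog.comp ((by fun_prop : Continuous fun z : ℝ => 1 + σ * z).add h1)).add
      (continuous_mlog.comp ((by fun_prop : Continuous fun z : ℝ => 1 + σ * z).sub h1))).add
      (continuous_mlog.comp ((by fun_prop : Continuous fun z : ℝ => 1 - σ * z).add h2))).add
      (continuous_mlog.comp ((by fun_prop : Continuous fun z : ℝ => 1 - σ * z).sub h2)))
  · have c1 : Continuous (fun z : ℝ => mlog (1 + σ * z)) := continuous_mlog.comp (by fun_prop)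
    exact continuous_const.mul c1
  · have c1 : Continuous (fun z : ℝ => mlog (1 - σ * z)) := continuous_mlog.comp (by fun_prop)
    exact continuous_const.mul c1

set_option maxHeartbeats 1600000 in
lemma hasDerivAt_Tfun (σ r γ B z : ℝ)
    (hQp : 0 < B * (1 - z ^ 2) + (r + γ * z) ^ 2)
    (hQm : 0 < B * (1 - z ^ 2) + (r - γ * z) ^ 2)
    (hpa : Real.sqrt (B * (1 - z ^ 2) + (r + γ * z) ^ 2) < 1 + σ * z)
    (hma : Real.sqrt (B * (1 - z ^ 2) + (r - γ * z) ^ 2) < 1 - σ * z) :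
    HasDerivAt (Tfun σ r γ B)
      (σ * (Real.log (1 + σ * z + Real.sqrt (B * (1 - z ^ 2) + (r + γ * z) ^ 2))
            + Real.log (1 + σ * z - Real.sqrt (B * (1 - z ^ 2) + (r + γ * z) ^ 2))
            - 2 * Real.log (1 + σ * z)
            - Real.log (1 - σ * z + Real.sqrt (B * (1 - z ^ 2) + (r - γ * z) ^ 2))
            - Real.log (1 - σ * z - Real.sqrt (B * (1 - z ^ 2) + (r - γ * z) ^ 2))
            + 2 * Real.log (1 - σ * z))
        + ((r * γ + (γ ^ 2 - B) * z) / Real.sqrt (B * (1 - z ^ 2) + (r + γ * z) ^ 2))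
            * (Real.log (1 + σ * z + Real.sqrt (B * (1 - z ^ 2) + (r + γ * z) ^ 2))
               - Real.log (1 + σ * z - Real.sqrt (B * (1 - z ^ 2) + (r + γ * z) ^ 2)))
        + ((-(r * γ) + (γ ^ 2 - B) * z) / Real.sqrt (B * (1 - z ^ 2) + (r - γ * z) ^ 2))
            * (Real.log (1 - σ * z + Real.sqrt (B * (1 - z ^ 2) + (r - γ * z) ^ 2))
               - Real.log (1 - σ * z - Real.sqrt (B * (1 - z ^ 2) + (r - γ * z) ^ 2)))) z := by
  set hp : ℝ := Real.sqrt (B * (1 - z ^ 2) + (r + γ * z) ^ 2) with hhp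
  set hm : ℝ := Real.sqrt (B * (1 - z ^ 2) + (r - γ * z) ^ 2) with hhm
  have hp0 : 0 < hp := Real.sqrt_pos.mpr hQp
  have hm0 : 0 < hm := Real.sqrt_pos.mpr hQm
  have ham0 : 0 < 1 - σ * z := lt_of_le_of_lt hm0.le hma
  have hap0 : 0 < 1 + σ * z := lt_of_le_of_lt hp0.le hpa
  -- derivative of the two quadratics
  have hQpd : HasDerivAt (fun z : ℝ => B * (1 - z ^ 2) + (r + γ * z) ^ 2)
      (2 * (r * γ + (γ ^ 2 - B) * z)) z := by
    have h1 : HasDerivAt (fun z : ℝ => 1 - z ^ 2) (-(2 * z ^ 1)) z := by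
      simpa using (hasDerivAt_pow 2 z).const_sub 1
    have h2 : HasDerivAt (fun z : ℝ => r + γ * z) γ z := by
      simpa using ((hasDerivAt_id z).const_mul γ).const_add r
    have h3 := (h1.const_mul B).add (h2.pow 2)
    refine h3.congr_deriv ?_
    push_cast
    ring
  have hQmd : HasDerivAt (fun z : ℝ => B * (1 - z ^ 2) + (r - γ * z) ^ 2)
      (2 * (-(r * γ) + (γ ^ 2 - B) * z)) z := by
    have h1 : HasDerivAt (fun z : ℝ => 1 - z ^ 2) (-(2 * z ^ 1)) z := by
      simpa using (hasDerivAt_pow 2 z).const_sub 1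
    have h2 : HasDerivAt (fun z : ℝ => r - γ * z) (-γ) z := by
      simpa using ((hasDerivAt_id z).const_mul γ).const_sub r
    have h3 := (h1.const_mul B).add (h2.pow 2)
    refine h3.congr_deriv ?_
    push_cast
    ring
  -- derivative of the sqrts
  have hpd : HasDerivAt (fun z : ℝ => Real.sqrt (B * (1 - z ^ 2) + (r + γ * z) ^ 2))
      ((r * γ + (γ ^ 2 - B) * z) / hp) z := by
    have := (Real.hasDerivAt_sqrt (ne_of_gt hQp)).comp z hQpd
    refine this.congr_deriv ?_
    rw [← hhp]
    field_simp
  have hmd : HasDerivAt (fun z : ℝ => Real.sqrt (B * (1 - z ^ 2) + (r - γ * z) ^ 2))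
      ((-(r * γ) + (γ ^ 2 - B) * z) / hm) z := by
    have := (Real.hasDerivAt_sqrt (ne_of_gt hQm)).comp z hQmd
    refine this.congr_deriv ?_
    rw [← hhm]
    field_simp
  -- affine parts
  have hapd : HasDerivAt (fun z : ℝ => 1 + σ * z) σ z := by
    simpa using ((hasDerivAt_id z).const_mul σ).const_add 1
  have hamd : HasDerivAt (fun z : ℝ => 1 - σ * z) (-σ) z := by
    simpa using ((hasDerivAt_id z).const_mul σ).const_sub 1
  -- the six mlog terms
  have t1 := (hasDerivAt_mlog (by linarith : (1 + σ * z + hp) ≠ 0)).comp z (hapd.add hpd)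
  have t2 := (hasDerivAt_mlog (by linarith : (1 + σ * z - hp) ≠ 0)).comp z (hapd.sub hpd)
  have t3 := (hasDerivAt_mlog (by linarith : (1 - σ * z + hm) ≠ 0)).comp z (hamd.add hmd)
  have t4 := (hasDerivAt_mlog (by linarith : (1 - σ * z - hm) ≠ 0)).comp z (hamd.sub hmd)
  have t5 := (hasDerivAt_mlog (ne_of_gt hap0)).comp z hapd
  have t6 := (hasDerivAt_mlog (ne_of_gt ham0)).comp z hamd
  have big := ((((t1.add t2).add t3).add t4).sub (t5.const_mul 2)).sub (t6.const_mul 2)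
  refine big.congr_deriv ?_
  field_simp
  ring

lemma pipeline (σ r γ B u v : ℝ) (hu0 : 0 ≤ u)
    (hσ : 0 ≤ σ) (hrγ : r * γ ≤ 0) (h3 : σ * (r * γ) ≤ γ ^ 2 - B)
    (hgood : ∀ z ∈ Set.Ioo u v,
      0 < B * (1 - z ^ 2) + (r + γ * z) ^ 2 ∧
      0 < B * (1 - z ^ 2) + (r - γ * z) ^ 2 ∧
      Real.sqrt (B * (1 - z ^ 2) + (r + γ * z) ^ 2) < 1 + σ * z ∧
      Real.sqrt (B * (1 - z ^ 2) + (r - γ * z) ^ 2) < 1 - σ * z) :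
    MonotoneOn (Tfun σ r γ B) (Set.Icc u v) := by
  apply monotoneOn_of_deriv_nonneg (convex_Icc u v)
    ((continuous_Tfun σ r γ B).continuousOn)
  · intro z hz
    rw [interior_Icc] at hz
    obtain ⟨h1, h2, h3', h4⟩ := hgood z hz
    exact (hasDerivAt_Tfun σ r γ B z h1 h2 h3' h4).differentiableAt.differentiableWithinAt
  · intro z hz
    rw [interior_Icc] at hz
    obtain ⟨h1, h2, h3', h4⟩ := hgood z hz
    rw [(hasDerivAt_Tfun σ r γ B z h1 h2 h3' h4).deriv]
    exact Npos hσ hrγ h3 (le_trans hu0 hz.1.le) (Real.sqrt_pos.mpr h1) (Real.sqrt_pos.mpr h2)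
      (Real.sq_sqrt h1.le) (Real.sq_sqrt h2.le) h3' h4

lemma glueMono {f : ℝ → ℝ} {a b c : ℝ} (hab : a ≤ b) (hbc : b ≤ c)
    (h1 : MonotoneOn f (Set.Icc a b)) (h2 : MonotoneOn f (Set.Icc b c)) :
    MonotoneOn f (Set.Icc a c) := by
  intro x hx y hy hxy
  rcases le_total y b with hyb | hby
  · exact h1 ⟨hx.1, le_trans hxy hyb⟩ ⟨hy.1, hyb⟩ hxy
  · rcases le_total x b with hxb | hbx
    · calc f x ≤ f b := h1 ⟨hx.1, hxb⟩ ⟨hab, le_refl b⟩ hxb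
        _ ≤ f y := h2 ⟨le_refl b, hbc⟩ ⟨hby, hy.2⟩ hby
    · exact h2 ⟨hbx, hx.2⟩ ⟨hby, hy.2⟩ hxy

lemma constantOn_mono {f : ℝ → ℝ} {s : Set ℝ} {c : ℝ} (h : ∀ z ∈ s, f z = c) :
    MonotoneOn f s := fun a ha b hb _ => by rw [h a ha, h b hb]

lemma sq_le_of_sqrt_le {x a : ℝ} (hx : 0 ≤ x) (h : Real.sqrt x ≤ a) : x ≤ a ^ 2 := by
  nlinarith [Real.sq_sqrt hx, Real.sqrt_nonneg x]

set_option maxHeartbeats 1000000 in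
lemma key (σ r γ B : ℝ) (hB : 0 ≤ B) (hσ : 0 ≤ σ) (hrγ : r * γ ≤ 0)
    (h3 : σ * (r * γ) ≤ γ ^ 2 - B) (h4 : γ ^ 2 - B ≤ 0)
    (hbd : ∀ z ∈ Set.Icc (0:ℝ) 1,
      Real.sqrt (B * (1 - z ^ 2) + (r + γ * z) ^ 2) ≤ 1 + σ * z ∧
      Real.sqrt (B * (1 - z ^ 2) + (r - γ * z) ^ 2) ≤ 1 - σ * z) :
    MonotoneOn (Tfun σ r γ B) (Set.Icc 0 1) := by
  -- basic consequences of hbd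
  have hQnn : ∀ z ∈ Set.Icc (0:ℝ) 1, 0 ≤ B * (1 - z ^ 2) + (r + γ * z) ^ 2 ∧
      0 ≤ B * (1 - z ^ 2) + (r - γ * z) ^ 2 := by
    intro z hz
    obtain ⟨hz0, hz1⟩ := hz
    constructor <;> nlinarith [sq_nonneg (r + γ * z), sq_nonneg (r - γ * z),
      mul_nonneg hB (by nlinarith : (0:ℝ) ≤ 1 - z ^ 2)]
  have hDp : ∀ z ∈ Set.Icc (0:ℝ) 1, B * (1 - z ^ 2) + (r + γ * z) ^ 2 ≤ (1 + σ * z) ^ 2 := by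
    intro z hz
    exact sq_le_of_sqrt_le (hQnn z hz).1 (hbd z hz).1
  have hDm : ∀ z ∈ Set.Icc (0:ℝ) 1, B * (1 - z ^ 2) + (r - γ * z) ^ 2 ≤ (1 - σ * z) ^ 2 := by
    intro z hz
    exact sq_le_of_sqrt_le (hQnn z hz).2 (hbd z hz).2
  have hamnn : ∀ z ∈ Set.Icc (0:ℝ) 1, 0 ≤ 1 - σ * z := by
    intro z hz
    exact le_trans (Real.sqrt_nonneg _) (hbd z hz).2
  have h01 : (0:ℝ) ∈ Set.Icc (0:ℝ) 1 := by norm_num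
  have h11 : (1:ℝ) ∈ Set.Icc (0:ℝ) 1 := by norm_num
  have hσ1 : σ ≤ 1 := by have := hamnn 1 h11; linarith
  have hc0 : B + r ^ 2 ≤ 1 := by have := hDp 0 h01; nlinarith
  rcases eq_or_lt_of_le hσ with hσ0 | hσpos
  · -- Case σ = 0
    have hσ0 : σ = 0 := hσ0.symm
    have hBγ : γ ^ 2 - B = 0 := by
      have : (0:ℝ) ≤ γ ^ 2 - B := by rw [hσ0] at h3; simpa using h3
      linarith
    rcases eq_or_lt_of_le hrγ with hrγ0 | hrγneg
    · -- constant case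
      have hqp : ∀ z : ℝ, B * (1 - z ^ 2) + (r + γ * z) ^ 2 = B + r ^ 2 := by
        intro z; linear_combination (z ^ 2) * hBγ + (2 * z) * hrγ0
      have hqm : ∀ z : ℝ, B * (1 - z ^ 2) + (r - γ * z) ^ 2 = B + r ^ 2 := by
        intro z; linear_combination (z ^ 2) * hBγ + (-(2 * z)) * hrγ0
      apply constantOn_mono (c := Tfun σ r γ B 0)
      intro z _
      simp only [Tfun, hqp, hqm, hσ0]
      norm_num
    · -- σ = 0, rγ < 0 : pipeline on [0,1]
      apply pipeline σ r γ B 0 1 le_rfl hσ hrγ h3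
      intro z hz
      obtain ⟨hz0, hz1⟩ := hz
      have hqp : B * (1 - z ^ 2) + (r + γ * z) ^ 2 = B + r ^ 2 + 2 * (r * γ) * z := by
        linear_combination (z ^ 2) * hBγ
      have hqm : B * (1 - z ^ 2) + (r - γ * z) ^ 2 = B + r ^ 2 - 2 * (r * γ) * z := by
        linear_combination (z ^ 2) * hBγ
      have hqm1 : B + r ^ 2 - 2 * (r * γ) ≤ 1 := by
        have := hDm 1 h11; nlinarith
      refine ⟨?_, ?_, ?_, ?_⟩
      · rw [hqp]
        nlinarith [sq_nonneg (r + γ), hBγ]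
      · rw [hqm]
        nlinarith [mul_pos (neg_pos.mpr hrγneg) hz0, sq_nonneg r]
      · rw [Real.sqrt_lt' (by nlinarith : (0:ℝ) < 1 + σ * z), hqp, hσ0]
        nlinarith [mul_pos (neg_pos.mpr hrγneg) hz0]
      · rw [Real.sqrt_lt' (by rw [hσ0]; norm_num : (0:ℝ) < 1 - σ * z), hqm, hσ0]
        nlinarith [mul_pos (neg_pos.mpr hrγneg) (by linarith : (0:ℝ) < 1 - z)]
  · -- Case σ > 0
    rcases eq_or_lt_of_le hB with hB0 | hBpos
    · -- B = 0, hence γ = 0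
      have hB0 : B = 0 := hB0.symm
      have hγ0 : γ = 0 := by
        have : γ ^ 2 ≤ 0 := by rw [hB0] at h4; linarith
        nlinarith [sq_nonneg γ]
      rcases eq_or_ne r 0 with hr0 | hrne
      · -- everything zero, T constant
        apply constantOn_mono (c := 0)
        intro z _
        simp only [Tfun, hB0, hγ0, hr0]
        norm_num
        ring
      · -- Q ≡ r², pipeline on [0,1]
        apply pipeline σ r γ B 0 1 le_rfl hσ hrγ h3
        intro z hz
        obtain ⟨hz0, hz1⟩ := hz
        have hqp : B * (1 - z ^ 2) + (r + γ * z) ^ 2 = r ^ 2 := by rw [hB0, hγ0]; ring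
        have hqm : B * (1 - z ^ 2) + (r - γ * z) ^ 2 = r ^ 2 := by rw [hB0, hγ0]; ring
        have hr1 : r ^ 2 ≤ 1 := by nlinarith [hc0, hB]
        have hrm : r ^ 2 ≤ (1 - σ) ^ 2 := by
          have := hDm 1 h11
          nlinarith
        have hampos : (0:ℝ) < 1 - σ * z := by nlinarith
        refine ⟨?_, ?_, ?_, ?_⟩
        · rw [hqp]; positivity
        · rw [hqm]; positivity
        · rw [Real.sqrt_lt' (by nlinarith : (0:ℝ) < 1 + σ * z), hqp]
          nlinarith [mul_pos hσpos hz0]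
        · rw [Real.sqrt_lt' hampos, hqm]
          nlinarith [mul_pos hσpos (by linarith : (0:ℝ) < 1 - z)]
    · -- B > 0
      have hgood1 : ∀ z ∈ Set.Ioo (0:ℝ) 1, 0 < B * (1 - z ^ 2) + (r + γ * z) ^ 2 ∧
          0 < B * (1 - z ^ 2) + (r - γ * z) ^ 2 ∧
          Real.sqrt (B * (1 - z ^ 2) + (r + γ * z) ^ 2) < 1 + σ * z := by
        intro z hz
        obtain ⟨hz0, hz1⟩ := hz
        have hBz : 0 < B * (1 - z ^ 2) := mul_pos hBpos (by nlinarith)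
        refine ⟨by nlinarith [sq_nonneg (r + γ * z)], by nlinarith [sq_nonneg (r - γ * z)], ?_⟩
        rw [Real.sqrt_lt' (by nlinarith : (0:ℝ) < 1 + σ * z)]
        have t1 : 0 ≤ (σ ^ 2 + B - γ ^ 2) * z ^ 2 := mul_nonneg (by nlinarith) (sq_nonneg z)
        have t2 : 0 < (σ - r * γ) * z := mul_pos (by linarith) hz0
        nlinarith [t1, t2]
      by_cases hex : ∃ w, w ∈ Set.Ioo (0:ℝ) 1 ∧
          (1 - σ * w) ^ 2 = B * (1 - w ^ 2) + (r - γ * w) ^ 2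
      · obtain ⟨z₀, hz₀, hzeq⟩ := hex
        have huniq : ∀ z ∈ Set.Ioo (0:ℝ) 1, z ≠ z₀ →
            B * (1 - z ^ 2) + (r - γ * z) ^ 2 < (1 - σ * z) ^ 2 := by
          intro z hz hne
          rcases lt_or_eq_of_le (hDm z ⟨hz.1.le, hz.2.le⟩) with h | h
          · exact h
          · exfalso
            -- two zeros of the quadratic D₋, midpoint is negative
            set m := (z + z₀) / 2 with hm
            have hmIcc : m ∈ Set.Icc (0:ℝ) 1 := by
              constructor
              · simp only [hm]; nlinarith [hz.1, hz₀.1]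
              · simp only [hm]; nlinarith [hz.2, hz₀.2]
            have hDmm := hDm m hmIcc
            have hc2 : 0 < σ ^ 2 + B - γ ^ 2 := by nlinarith
            have hiden : (1 - σ * m) ^ 2 - (B * (1 - m ^ 2) + (r - γ * m) ^ 2)
                = -((σ ^ 2 + B - γ ^ 2) * (z - z₀) ^ 2) / 4 := by
              simp only [hm]
              linear_combination (-(1:ℝ)/2) * h + ((1:ℝ)/2) * hzeq
            have hzz : 0 < (z - z₀) ^ 2 := by
              have := sub_ne_zero.mpr hne
              positivity
            nlinarith [mul_pos hc2 hzz]
        have hgoodL : ∀ z ∈ Set.Ioo (0:ℝ) z₀,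
            0 < B * (1 - z ^ 2) + (r + γ * z) ^ 2 ∧
            0 < B * (1 - z ^ 2) + (r - γ * z) ^ 2 ∧
            Real.sqrt (B * (1 - z ^ 2) + (r + γ * z) ^ 2) < 1 + σ * z ∧
            Real.sqrt (B * (1 - z ^ 2) + (r - γ * z) ^ 2) < 1 - σ * z := by
          intro z hz
          have hzI : z ∈ Set.Ioo (0:ℝ) 1 := ⟨hz.1, lt_trans hz.2 hz₀.2⟩
          obtain ⟨g1, g2, g3⟩ := hgood1 z hzI
          refine ⟨g1, g2, g3, ?_⟩
          have hampos : (0:ℝ) < 1 - σ * z := by nlinarith [hzI.1, hzI.2]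
          rw [Real.sqrt_lt' hampos]
          exact huniq z hzI (ne_of_lt hz.2)
        have hgoodR : ∀ z ∈ Set.Ioo z₀ (1:ℝ),
            0 < B * (1 - z ^ 2) + (r + γ * z) ^ 2 ∧
            0 < B * (1 - z ^ 2) + (r - γ * z) ^ 2 ∧
            Real.sqrt (B * (1 - z ^ 2) + (r + γ * z) ^ 2) < 1 + σ * z ∧
            Real.sqrt (B * (1 - z ^ 2) + (r - γ * z) ^ 2) < 1 - σ * z := by
          intro z hz
          have hzI : z ∈ Set.Ioo (0:ℝ) 1 := ⟨lt_trans hz₀.1 hz.1, hz.2⟩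
          obtain ⟨g1, g2, g3⟩ := hgood1 z hzI
          refine ⟨g1, g2, g3, ?_⟩
          have hampos : (0:ℝ) < 1 - σ * z := by nlinarith [hzI.1, hzI.2]
          rw [Real.sqrt_lt' hampos]
          exact huniq z hzI (ne_of_gt hz.1)
        exact glueMono hz₀.1.le hz₀.2.le
          (pipeline σ r γ B 0 z₀ le_rfl hσ hrγ h3 hgoodL)
          (pipeline σ r γ B z₀ 1 hz₀.1.le hσ hrγ h3 hgoodR)
      · push_neg at hex
        apply pipeline σ r γ B 0 1 le_rfl hσ hrγ h3
        intro z hz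
        obtain ⟨g1, g2, g3⟩ := hgood1 z hz
        refine ⟨g1, g2, g3, ?_⟩
        have hampos : (0:ℝ) < 1 - σ * z := by nlinarith [hz.1, hz.2]
        rw [Real.sqrt_lt' hampos]
        rcases lt_or_eq_of_le (hDm z ⟨hz.1.le, hz.2.le⟩) with h | h
        · exact h
        · exact absurd h.symm (hex z hz)

lemma pair_eq {a h : ℝ} (h0 : 0 ≤ h) (hha : h ≤ a) :
    (a + h) * Real.logb 2 ((a + h) / a) + (a - h) * Real.logb 2 ((a - h) / a)
    = (mlog (a + h) + mlog (a - h) - 2 * mlog a) / Real.log 2 := by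
  rcases eq_or_lt_of_le (le_trans h0 hha) with ha0 | hapos
  · -- a = 0, h = 0
    have ha : a = 0 := ha0.symm
    have hh : h = 0 := le_antisymm (ha ▸ hha) h0
    simp [ha, hh, mlog]
  · have hane : a ≠ 0 := ne_of_gt hapos
    have hphpos : 0 < a + h := by linarith
    rcases eq_or_lt_of_le hha with heq | hlt
    · -- h = a
      simp only [Real.logb]
      rw [heq]
      rw [Real.log_div (by positivity : a + a ≠ 0) hane]
      simp only [mlog]
      norm_num
      field_simp
      ring
    · have hmpos : 0 < a - h := by linarith
      simp only [Real.logb]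
      rw [Real.log_div (ne_of_gt hphpos) hane, Real.log_div (ne_of_gt hmpos) hane]
      simp only [mlog]
      field_simp
      ring


/-- Case (a)(ii): if `s·tanh x ≥ 0`, `r·c₃·tanh x ≤ 0` and `s·r·c₃ ≤ c₃² − b² ≤ 0`, then
`F` is antitone on `[0,1]`. -/
theorem F_antitone_case_a_ii
    (r s c3 b x : ℝ)
    (h1 : 0 ≤ s * Real.tanh x) (h2 : r * c3 * Real.tanh x ≤ 0)
    (h3 : s * r * c3 ≤ c3 ^ 2 - b ^ 2) (h4 : c3 ^ 2 - b ^ 2 ≤ 0)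
    (Hp Hm : ℝ → ℝ)
    (hHp : ∀ w : ℝ, Hp w = Real.sqrt (b ^ 2 * (1 - w ^ 2) * Real.tanh x ^ 2 + (r + c3 * w * Real.tanh x) ^ 2))
    (hHm : ∀ w : ℝ, Hm w = Real.sqrt (b ^ 2 * (1 - w ^ 2) * Real.tanh x ^ 2 + (r - c3 * w * Real.tanh x) ^ 2))
    (F : ℝ → ℝ)
    (hF : ∀ w : ℝ, F w = -(1/4) *
      ((1 + s * w * Real.tanh x + Hp w) *
          Real.logb 2 ((1 + s * w * Real.tanh x + Hp w) / (1 + s * w * Real.tanh x))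
       + (1 + s * w * Real.tanh x - Hp w) *
          Real.logb 2 ((1 + s * w * Real.tanh x - Hp w) / (1 + s * w * Real.tanh x))
       + (1 - s * w * Real.tanh x + Hm w) *
          Real.logb 2 ((1 - s * w * Real.tanh x + Hm w) / (1 - s * w * Real.tanh x))
       + (1 - s * w * Real.tanh x - Hm w) *
          Real.logb 2 ((1 - s * w * Real.tanh x - Hm w) / (1 - s * w * Real.tanh x))))
    (hbound : ∀ z ∈ Set.Icc (0 : ℝ) 1,
      Hp z ≤ 1 + s * z * Real.tanh x ∧ Hm z ≤ 1 - s * z * Real.tanh x) :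
    AntitoneOn F (Set.Icc (0 : ℝ) 1) := by
  set t := Real.tanh x with ht
  have hσ : (0:ℝ) ≤ s * t := h1
  have hrγ : r * (c3 * t) ≤ 0 := by rw [← mul_assoc]; exact h2
  have hBnn : (0:ℝ) ≤ b ^ 2 * t ^ 2 := by positivity
  have h4' : (c3 * t) ^ 2 - b ^ 2 * t ^ 2 ≤ 0 := by nlinarith [sq_nonneg t]
  have h3' : (s * t) * (r * (c3 * t)) ≤ (c3 * t) ^ 2 - b ^ 2 * t ^ 2 := by
    nlinarith [mul_nonneg (sub_nonneg.mpr h3) (sq_nonneg t)]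
  have hHpT : ∀ w : ℝ, Hp w = Real.sqrt (b ^ 2 * t ^ 2 * (1 - w ^ 2) + (r + c3 * t * w) ^ 2) := by
    intro w; rw [hHp w]; congr 1; ring
  have hHmT : ∀ w : ℝ, Hm w = Real.sqrt (b ^ 2 * t ^ 2 * (1 - w ^ 2) + (r - c3 * t * w) ^ 2) := by
    intro w; rw [hHm w]; congr 1; ring
  have hbd : ∀ z ∈ Set.Icc (0:ℝ) 1,
      Real.sqrt (b ^ 2 * t ^ 2 * (1 - z ^ 2) + (r + c3 * t * z) ^ 2) ≤ 1 + s * t * z ∧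
      Real.sqrt (b ^ 2 * t ^ 2 * (1 - z ^ 2) + (r - c3 * t * z) ^ 2) ≤ 1 - s * t * z := by
    intro z hz
    obtain ⟨hb1, hb2⟩ := hbound z hz
    rw [hHpT z] at hb1
    rw [hHmT z] at hb2
    have e : s * z * t = s * t * z := by ring
    rw [e] at hb1 hb2
    exact ⟨hb1, hb2⟩
  have hkey := key (s * t) r (c3 * t) (b ^ 2 * t ^ 2) hBnn hσ hrγ h3' h4' hbd
  have hFz : ∀ z ∈ Set.Icc (0:ℝ) 1,
      F z = -(1/4) * (Tfun (s * t) r (c3 * t) (b ^ 2 * t ^ 2) z / Real.log 2) := by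
    intro z hz
    obtain ⟨hb1, hb2⟩ := hbound z hz
    rw [hHpT z] at hb1
    rw [hHmT z] at hb2
    have e : s * z * t = s * t * z := by ring
    rw [e] at hb1 hb2
    rw [hF z, hHpT z, hHmT z, e]
    have e1 := pair_eq (a := 1 + s * t * z)
      (h := Real.sqrt (b ^ 2 * t ^ 2 * (1 - z ^ 2) + (r + c3 * t * z) ^ 2))
      (Real.sqrt_nonneg _) hb1
    have e2 := pair_eq (a := 1 - s * t * z)
      (h := Real.sqrt (b ^ 2 * t ^ 2 * (1 - z ^ 2) + (r - c3 * t * z) ^ 2))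
      (Real.sqrt_nonneg _) hb2
    simp only [Tfun]
    linear_combination (-(1:ℝ)/4) * e1 + (-(1:ℝ)/4) * e2
  intro u hu v hv huv
  rw [hFz u hu, hFz v hv]
  have hTuv := hkey hu hv huv
  have hl2 : 0 < Real.log 2 := Real.log_pos one_lt_two
  have hdiv : Tfun (s * t) r (c3 * t) (b ^ 2 * t ^ 2) u / Real.log 2
      ≤ Tfun (s * t) r (c3 * t) (b ^ 2 * t ^ 2) v / Real.log 2 := by gcongr
  linarith
end

section
/- Let r, s, c₃, b, x be real numbers with s·tanh x ≤ 0, r·c₃·tanh x ≥ 0 and c₃² − b² ≥ s·r·c₃ (b ≥ 0), and assume that for all z ∈ [0,1], H₊(z) ≤ 1 + s z tanh x and H₋(z) ≤ 1 − s z tanh x. Then F attains its minimum over [0,1] at z = 1, i.e., F(1) ≤ F(z) for all z ∈ [0,1]. -/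
open Real Set Filter Topology

lemma FminG_convex : ConvexOn ℝ (Set.Ico (0:ℝ) 1) (fun x => Real.log (1+x) - Real.log (1-x)) := by
  apply MonotoneOn.convexOn_of_deriv (convex_Ico 0 1)
  · apply ContinuousOn.sub
    · apply ContinuousOn.log (Continuous.continuousOn (by continuity))
      intro x hx; simp only [mem_Ico] at hx; nlinarith [hx.1]
    · apply ContinuousOn.log (Continuous.continuousOn (by continuity))
      intro x hx; simp only [mem_Ico] at hx; nlinarith [hx.2]
  · intro x hx
    rw [interior_Ico] at hx
    simp only [mem_Ioo] at hx
    have h1 : HasDerivAt (fun x : ℝ => Real.log (1+x)) ((1+x)⁻¹ * 1) x :=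
      (Real.hasDerivAt_log (by nlinarith [hx.1])).comp x ((hasDerivAt_id x).const_add 1)
    have h2 : HasDerivAt (fun x : ℝ => Real.log (1-x)) ((1-x)⁻¹ * (-1)) x := by
      have : HasDerivAt (fun x : ℝ => 1 - x) (-1) x := by
        exact (hasDerivAt_id x).const_sub 1
      exact (Real.hasDerivAt_log (by nlinarith [hx.2])).comp x this
    exact ((h1.sub h2).differentiableAt).differentiableWithinAt
  · rw [interior_Ico]
    have key : ∀ x ∈ Set.Ioo (0:ℝ) 1,
        deriv (fun x => Real.log (1+x) - Real.log (1-x)) x = 2 / (1 - x^2) := by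
      intro x hx
      simp only [mem_Ioo] at hx
      have h1 : HasDerivAt (fun x : ℝ => Real.log (1+x)) ((1+x)⁻¹ * 1) x :=
        (Real.hasDerivAt_log (by nlinarith [hx.1])).comp x ((hasDerivAt_id x).const_add 1)
      have h2 : HasDerivAt (fun x : ℝ => Real.log (1-x)) ((1-x)⁻¹ * (-1)) x := by
        have : HasDerivAt (fun x : ℝ => 1 - x) (-1) x := by
          exact (hasDerivAt_id x).const_sub 1
        exact (Real.hasDerivAt_log (by nlinarith [hx.2])).comp x this
      rw [HasDerivAt.deriv (f := fun x => Real.log (1+x) - Real.log (1-x)) (h1.sub h2)]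
      have hp1 : (0:ℝ) < 1 + x := by nlinarith [hx.1]
      have hp2 : (0:ℝ) < 1 - x := by nlinarith [hx.2]
      have hq : (1:ℝ) - x^2 ≠ 0 := by nlinarith
      field_simp
      ring
    intro x hx y hy hxy
    rw [key x hx, key y hy]
    simp only [mem_Ioo] at hx hy
    rw [div_le_div_iff₀ (by nlinarith [hx.1, hx.2]) (by nlinarith [hy.1, hy.2])]
    nlinarith [hx.1, hy.2]

lemma FminG_mono_ratio (j k : ℝ) (hj : 0 ≤ j) (hjk : j ≤ k) (hk : k < 1) :
    k * (Real.log (1+j) - Real.log (1-j)) ≤ j * (Real.log (1+k) - Real.log (1-k)) := by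
  rcases eq_or_lt_of_le (hj.trans hjk) with hk0 | hk0
  · have hj0 : j = 0 := le_antisymm (hjk.trans hk0.symm.le) hj
    simp [← hk0, hj0]
  · have hmem0 : (0:ℝ) ∈ Set.Ico (0:ℝ) 1 := by norm_num
    have hmemk : k ∈ Set.Ico (0:ℝ) 1 := ⟨hk0.le, hk⟩
    have hab : (1 - j/k) + j/k = 1 := by ring
    have h := FminG_convex.2 hmem0 hmemk
      (sub_nonneg.2 (div_le_one_of_le₀ hjk (by positivity))) (by positivity) hab
    simp only [smul_eq_mul, mul_zero, zero_add] at h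
    rw [div_mul_cancel₀ j hk0.ne'] at h
    norm_num at h
    -- h : log (1+j) - log (1-j) ≤ j/k * (log (1+k) - log (1-k))
    have hmul := mul_le_mul_of_nonneg_left h hk0.le
    have hid : k * (j/k * (Real.log (1+k) - Real.log (1-k))) = j * (Real.log (1+k) - Real.log (1-k)) := by
      field_simp
    linarith [hmul, hid.le, hid.ge]

lemma Fmin_log_split (u H : ℝ) (hu : 0 < u) (hH : |H| < u) :
    Real.log (u+H) - Real.log (u-H) = Real.log (1+H/u) - Real.log (1-H/u) := by
  obtain ⟨hl, hr⟩ := abs_lt.mp hH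
  have p1 : (0:ℝ) < 1 + H/u := by
    have : -1 < H/u := by rw [lt_div_iff₀ hu]; linarith
    linarith
  have p2 : (0:ℝ) < 1 - H/u := by
    have : H/u < 1 := (div_lt_one hu).2 hr
    linarith
  have e1 : u + H = u * (1+H/u) := by field_simp
  have e2 : u - H = u * (1-H/u) := by field_simp
  rw [e1, e2, Real.log_mul hu.ne' p1.ne', Real.log_mul hu.ne' p2.ne']
  ring

lemma FminG_nonneg (k : ℝ) (h0 : 0 ≤ k) (h1 : k < 1) :
    0 ≤ Real.log (1+k) - Real.log (1-k) := by
  have := Real.log_le_log (by linarith : (0:ℝ) < 1 - k) (by linarith : 1 - k ≤ 1 + k)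
  linarith

lemma Fmin_side_low (u H α mh : ℝ) (hu : 0 < u) (hH : |H| < u) (hm : 0 ≤ mh)
    (hα : mh * u ≤ α * H) :
    mh * ((u / |H|) * (Real.log (1 + |H|/u) - Real.log (1 - |H|/u)))
      ≤ α * (Real.log (u+H) - Real.log (u-H)) := by
  have hk1 : |H|/u < 1 := (div_lt_one hu).2 hH
  have hk0 : (0:ℝ) ≤ |H|/u := div_nonneg (abs_nonneg H) hu.le
  have hG0 : 0 ≤ Real.log (1 + |H|/u) - Real.log (1 - |H|/u) := FminG_nonneg _ hk0 hk1
  rcases lt_trichotomy H 0 with hs | hs | hs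
  · have habs : |H| = -H := abs_of_neg hs
    rw [habs] at hG0 ⊢
    have hL : Real.log (u+H) - Real.log (u-H)
        = -(Real.log (1 + -H/u) - Real.log (1 - -H/u)) := by
      rw [Fmin_log_split u H hu hH]
      have e1 : 1 + -H/u = 1 - H/u := by ring
      have e2 : 1 - -H/u = 1 + H/u := by ring
      rw [e1, e2]; ring
    rw [hL]
    have h2 : mh * (u / -H) ≤ -α := by
      rw [mul_div_assoc', div_le_iff₀ (by linarith : (0:ℝ) < -H)]
      nlinarith
    nlinarith [mul_le_mul_of_nonneg_right h2 hG0]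
  · simp [hs]
  · have habs : |H| = H := abs_of_pos hs
    rw [habs] at hG0 ⊢
    have hL : Real.log (u+H) - Real.log (u-H)
        = Real.log (1 + H/u) - Real.log (1 - H/u) := Fmin_log_split u H hu hH
    rw [hL]
    have h2 : mh * (u / H) ≤ α := by
      rw [mul_div_assoc', div_le_iff₀ hs]
      nlinarith
    nlinarith [mul_le_mul_of_nonneg_right h2 hG0]

lemma Fmin_side_up (v K β mh : ℝ) (hv : 0 < v) (hK : |K| < v) (hm : 0 ≤ mh)
    (hβ : -(mh * v) ≤ β * K) :
    -(mh * ((v / |K|) * (Real.log (1 + |K|/v) - Real.log (1 - |K|/v))))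
      ≤ β * (Real.log (v+K) - Real.log (v-K)) := by
  have hk1 : |K|/v < 1 := (div_lt_one hv).2 hK
  have hk0 : (0:ℝ) ≤ |K|/v := div_nonneg (abs_nonneg K) hv.le
  have hG0 : 0 ≤ Real.log (1 + |K|/v) - Real.log (1 - |K|/v) := FminG_nonneg _ hk0 hk1
  rcases lt_trichotomy K 0 with hs | hs | hs
  · have habs : |K| = -K := abs_of_neg hs
    rw [habs] at hG0 ⊢
    have hL : Real.log (v+K) - Real.log (v-K)
        = -(Real.log (1 + -K/v) - Real.log (1 - -K/v)) := by
      rw [Fmin_log_split v K hv hK]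
      have e1 : 1 + -K/v = 1 - K/v := by ring
      have e2 : 1 - -K/v = 1 + K/v := by ring
      rw [e1, e2]; ring
    rw [hL]
    have h2 : β ≤ mh * (v / -K) := by
      rw [mul_div_assoc', le_div_iff₀ (by linarith : (0:ℝ) < -K)]
      nlinarith
    nlinarith [mul_le_mul_of_nonneg_right h2 hG0]
  · simp [hs]
  · have habs : |K| = K := abs_of_pos hs
    rw [habs] at hG0 ⊢
    have hL : Real.log (v+K) - Real.log (v-K)
        = Real.log (1 + K/v) - Real.log (1 - K/v) := Fmin_log_split v K hv hK
    rw [hL]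
    have h2 : -(mh * (v / K)) ≤ β := by
      rw [neg_le, mul_div_assoc', le_div_iff₀ hs]
      nlinarith
    nlinarith [mul_le_mul_of_nonneg_right h2 hG0]

lemma Fmin_ratio_le (u v H K : ℝ) (hu : 0 < u) (huv : u ≤ v) (hH : |H| < u)
    (hKH : |K| ≤ |H|) :
    (v / |K|) * (Real.log (1 + |K|/v) - Real.log (1 - |K|/v))
      ≤ (u / |H|) * (Real.log (1 + |H|/u) - Real.log (1 - |H|/u)) := by
  have hv : 0 < v := lt_of_lt_of_le hu huv
  have hk1 : |H|/u < 1 := (div_lt_one hu).2 hH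
  have hk0 : (0:ℝ) ≤ |H|/u := div_nonneg (abs_nonneg H) hu.le
  have hGk : 0 ≤ Real.log (1 + |H|/u) - Real.log (1 - |H|/u) := FminG_nonneg _ hk0 hk1
  rcases eq_or_ne K 0 with hK0 | hK0
  · simp only [hK0, abs_zero, div_zero, zero_mul]
    norm_num
    positivity
  · have hKpos : 0 < |K| := abs_pos.2 hK0
    have hHpos : 0 < |H| := lt_of_lt_of_le hKpos hKH
    have hjk : |K|/v ≤ |H|/u := by
      calc |K|/v ≤ |H|/v := by gcongr
        _ ≤ |H|/u := by gcongr
    have hj0 : (0:ℝ) ≤ |K|/v := div_nonneg (abs_nonneg K) hv.le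
    have hmr := FminG_mono_ratio (|K|/v) (|H|/u) hj0 hjk hk1
    -- (|H|/u) * G(|K|/v) ≤ (|K|/v) * G(|H|/u)
    have hjpos : 0 < |K|/v := div_pos hKpos hv
    have hkpos : 0 < |H|/u := div_pos hHpos hu
    have e1 : (v / |K|) = (|K|/v)⁻¹ := by rw [inv_div]
    have e2 : (u / |H|) = (|H|/u)⁻¹ := by rw [inv_div]
    rw [e1, e2, inv_mul_le_iff₀ hjpos]
    have hstep := mul_le_mul_of_nonneg_left hmr (inv_nonneg.2 hkpos.le)
    calc Real.log (1 + |K|/v) - Real.log (1 - |K|/v)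
        = (|H|/u)⁻¹ * ((|H|/u) * (Real.log (1 + |K|/v) - Real.log (1 - |K|/v))) := by
          rw [← mul_assoc, inv_mul_cancel₀ hkpos.ne', one_mul]
      _ ≤ (|H|/u)⁻¹ * ((|K|/v) * (Real.log (1 + |H|/u) - Real.log (1 - |H|/u))) := hstep
      _ = |K|/v * ((|H|/u)⁻¹ * (Real.log (1 + |H|/u) - Real.log (1 - |H|/u))) := by ring

lemma Fmin_core (a mh u v H K α β : ℝ) (ha : a ≤ 0) (hm : 0 ≤ mh) (hu : 0 < u)
    (huv : u ≤ v) (hH : |H| < u) (hK : |K| < v) (hKH : |K| ≤ |H|)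
    (hα : mh * u ≤ α * H) (hβ : -(mh * v) ≤ β * K) :
    0 ≤ a * ((Real.log (u+H) + Real.log (u-H) - 2*Real.log u)
            - (Real.log (v+K) + Real.log (v-K) - 2*Real.log v))
      + α * (Real.log (u+H) - Real.log (u-H)) + β * (Real.log (v+K) - Real.log (v-K)) := by
  have hv : 0 < v := lt_of_lt_of_le hu huv
  obtain ⟨hH1, hH2⟩ := abs_lt.mp hH
  obtain ⟨hK1, hK2⟩ := abs_lt.mp hK
  have puH : 0 < u + H := by linarith
  have puH' : 0 < u - H := by linarith
  have pvK : 0 < v + K := by linarith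
  have pvK' : 0 < v - K := by linarith
  have hsqKH : K^2 ≤ H^2 := by
    nlinarith [sq_abs K, sq_abs H, mul_self_le_mul_self (abs_nonneg K) hKH]
  have huv2 : u^2 ≤ v^2 := by nlinarith
  have hp1 : K^2*u^2 ≤ H^2*u^2 := mul_le_mul_of_nonneg_right hsqKH (sq_nonneg u)
  have hp2 : H^2*u^2 ≤ H^2*v^2 := mul_le_mul_of_nonneg_left huv2 (sq_nonneg H)
  have hprod : (u+H)*(u-H)*(v*v) ≤ (v+K)*(v-K)*(u*u) := by nlinarith [hp1, hp2]
  have hA : Real.log (u+H) + Real.log (u-H) - 2*Real.log u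
      ≤ Real.log (v+K) + Real.log (v-K) - 2*Real.log v := by
    have l1 : Real.log ((u+H)*(u-H)*(v*v)) ≤ Real.log ((v+K)*(v-K)*(u*u)) :=
      Real.log_le_log (by positivity) hprod
    rw [Real.log_mul (mul_pos puH puH').ne' (mul_pos hv hv).ne',
        Real.log_mul puH.ne' puH'.ne',
        Real.log_mul (mul_pos pvK pvK').ne' (mul_pos hu hu).ne',
        Real.log_mul pvK.ne' pvK'.ne',
        Real.log_mul hv.ne' hv.ne', Real.log_mul hu.ne' hu.ne'] at l1
    linarith
  have hApart : 0 ≤ a * ((Real.log (u+H) + Real.log (u-H) - 2*Real.log u)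
            - (Real.log (v+K) + Real.log (v-K) - 2*Real.log v)) := by
    have h1 : (Real.log (u+H) + Real.log (u-H) - 2*Real.log u)
            - (Real.log (v+K) + Real.log (v-K) - 2*Real.log v) ≤ 0 := by linarith
    nlinarith [mul_nonneg (neg_nonneg.2 ha) (neg_nonneg.2 h1)]
  have l1 := Fmin_side_low u H α mh hu hH hm hα
  have l2 := Fmin_side_up v K β mh hv hK hm hβ
  have l3 := mul_le_mul_of_nonneg_left (Fmin_ratio_le u v H K hu huv hH hKH) hm
  linarith

lemma Fmin_branch_deriv (f : ℝ → ℝ) (u0 a : ℝ) {w f' : ℝ} (hf : HasDerivAt f f' w)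
    (h1 : 0 < u0 + a*w + f w) (h2 : 0 < u0 + a*w - f w) (h3 : 0 < u0 + a*w) :
    HasDerivAt (fun z => (u0+a*z+f z) * Real.log (u0+a*z+f z)
        + (u0+a*z-f z) * Real.log (u0+a*z-f z) - 2*((u0+a*z) * Real.log (u0+a*z)))
      (a * (Real.log (u0+a*w+f w) + Real.log (u0+a*w-f w) - 2*Real.log (u0+a*w))
        + f' * (Real.log (u0+a*w+f w) - Real.log (u0+a*w-f w))) w := by
  have d0 : HasDerivAt (fun z : ℝ => u0 + a*z) a w := by
    simpa using ((hasDerivAt_id w).const_mul a).const_add u0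
  have d1 : HasDerivAt (fun z : ℝ => u0 + a*z + f z) (a + f') w := d0.add hf
  have d2 : HasDerivAt (fun z : ℝ => u0 + a*z - f z) (a - f') w := d0.sub hf
  have m1 := (Real.hasDerivAt_mul_log h1.ne').comp w d1
  have m2 := (Real.hasDerivAt_mul_log h2.ne').comp w d2
  have m3 := (Real.hasDerivAt_mul_log h3.ne').comp w d0
  simp only [Function.comp_def] at m1 m2 m3
  have := (m1.add m2).sub (m3.const_mul 2)
  exact this.congr_deriv (by ring)

lemma Fmin_S_mono (a mh : ℝ) (f g : ℝ → ℝ)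
    (ha0 : a ≤ 0) (ha1 : -1 ≤ a) (hm : 0 ≤ mh)
    (hcf : Continuous f) (hcg : Continuous g)
    (hfb : ∀ w ∈ Set.Ioo (0:ℝ) 1, |f w| < 1 + a*w)
    (hgb : ∀ w ∈ Set.Ioo (0:ℝ) 1, |g w| < 1 + -a*w)
    (hgf : ∀ w ∈ Set.Ioo (0:ℝ) 1, |g w| ≤ |f w|)
    (hd : ∀ w ∈ Set.Ioo (0:ℝ) 1, ∃ f' g', HasDerivAt f f' w ∧ HasDerivAt g g' w ∧
        mh * (1+a*w) ≤ f' * f w ∧ -(mh * (1 + -a*w)) ≤ g' * g w) :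
    MonotoneOn (fun z => ((1+a*z+f z) * Real.log (1+a*z+f z)
        + (1+a*z-f z) * Real.log (1+a*z-f z) - 2*((1+a*z) * Real.log (1+a*z)))
      + ((1+ -a*z+g z) * Real.log (1+ -a*z+g z)
        + (1+ -a*z-g z) * Real.log (1+ -a*z-g z) - 2*((1+ -a*z) * Real.log (1+ -a*z))))
      (Set.Icc 0 1) := by
  have c0 : ∀ b : ℝ, Continuous (fun z : ℝ => 1 + b*z) := fun b =>
    continuous_const.add (continuous_const.mul continuous_id)
  have cc : Continuous (fun z => ((1+a*z+f z) * Real.log (1+a*z+f z)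
        + (1+a*z-f z) * Real.log (1+a*z-f z) - 2*((1+a*z) * Real.log (1+a*z)))
      + ((1+ -a*z+g z) * Real.log (1+ -a*z+g z)
        + (1+ -a*z-g z) * Real.log (1+ -a*z-g z) - 2*((1+ -a*z) * Real.log (1+ -a*z)))) := by
    have A1 := Real.continuous_mul_log.comp ((c0 a).add hcf)
    have A2 := Real.continuous_mul_log.comp ((c0 a).sub hcf)
    have A3 := Real.continuous_mul_log.comp (c0 a)
    have B1 := Real.continuous_mul_log.comp ((c0 (-a)).add hcg)
    have B2 := Real.continuous_mul_log.comp ((c0 (-a)).sub hcg)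
    have B3 := Real.continuous_mul_log.comp (c0 (-a))
    exact ((A1.add A2).sub (continuous_const.mul A3)).add
      ((B1.add B2).sub (continuous_const.mul B3))
  have keyderiv : ∀ w ∈ Set.Ioo (0:ℝ) 1, ∃ d, 0 ≤ d ∧
      HasDerivAt (fun z => ((1+a*z+f z) * Real.log (1+a*z+f z)
        + (1+a*z-f z) * Real.log (1+a*z-f z) - 2*((1+a*z) * Real.log (1+a*z)))
      + ((1+ -a*z+g z) * Real.log (1+ -a*z+g z)
        + (1+ -a*z-g z) * Real.log (1+ -a*z-g z) - 2*((1+ -a*z) * Real.log (1+ -a*z)))) d w := by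
    intro w hw
    obtain ⟨hw0, hw1⟩ := hw
    obtain ⟨f', g', hdf, hdg, hbf, hbg⟩ := hd w ⟨hw0, hw1⟩
    have hu : 0 < 1 + a*w := by nlinarith [mul_nonneg (by linarith : (0:ℝ) ≤ a+1) hw0.le]
    have hv : 0 < 1 + -a*w := by nlinarith [mul_nonneg (by linarith : (0:ℝ) ≤ -a) hw0.le]
    have huv : 1 + a*w ≤ 1 + -a*w := by nlinarith [mul_nonneg (by linarith : (0:ℝ) ≤ -a) hw0.le]
    have hHlt := hfb w ⟨hw0, hw1⟩
    have hKlt := hgb w ⟨hw0, hw1⟩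
    obtain ⟨hf1, hf2⟩ := abs_lt.mp hHlt
    obtain ⟨hg1, hg2⟩ := abs_lt.mp hKlt
    have D1 := Fmin_branch_deriv f 1 a hdf (by linarith) (by linarith) hu
    have D2 := Fmin_branch_deriv g 1 (-a) hdg (by linarith) (by linarith) hv
    refine ⟨_, ?_, D1.add D2⟩
    have core := Fmin_core a mh (1+a*w) (1+ -a*w) (f w) (g w) f' g'
      ha0 hm hu huv hHlt hKlt (hgf w ⟨hw0, hw1⟩) hbf hbg
    linarith [core]
  apply monotoneOn_of_deriv_nonneg (convex_Icc 0 1) cc.continuousOn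
  · rw [interior_Icc]
    intro w hw
    obtain ⟨d, _, hD⟩ := keyderiv w hw
    exact hD.differentiableAt.differentiableWithinAt
  · rw [interior_Icc]
    intro w hw
    obtain ⟨d, hd0, hD⟩ := keyderiv w hw
    rw [hD.deriv]
    exact hd0

lemma Fmin_poly_deriv (c0 c1 c2 w : ℝ) :
    HasDerivAt (fun w : ℝ => c0 + c1*w + c2*w^2) (c1 + 2*c2*w) w := by
  have h1 : HasDerivAt (fun w : ℝ => w) 1 w := hasDerivAt_id w
  have h2 : HasDerivAt (fun w : ℝ => w^2) (2*w) w := by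
    simpa using hasDerivAt_pow 2 w
  have h := ((h1.const_mul c1).const_add c0).add (h2.const_mul c2)
  exact h.congr_deriv (by ring)

lemma Fmin_E_abs (u h : ℝ) :
    (u+|h|) * Real.log (u+|h|) + (u-|h|) * Real.log (u-|h|) - 2*(u*Real.log u)
    = (u+h) * Real.log (u+h) + (u-h) * Real.log (u-h) - 2*(u*Real.log u) := by
  rcases abs_cases h with ⟨e, _⟩ | ⟨e, _⟩
  · rw [e]
  · rw [e, show u + -h = u - h from by ring, show u - -h = u + h from by ring]
    ring

lemma Fmin_logb_pair (u H : ℝ) (h0 : 0 ≤ H) (hHu : H ≤ u) :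
    (u+H) * Real.logb 2 ((u+H)/u) + (u-H) * Real.logb 2 ((u-H)/u)
    = ((u+H) * Real.log (u+H) + (u-H) * Real.log (u-H) - 2*(u*Real.log u)) / Real.log 2 := by
  have hlog2 : Real.log 2 ≠ 0 := (Real.log_pos one_lt_two).ne'
  rcases eq_or_lt_of_le (h0.trans hHu) with hu0 | hu0
  · have hH0 : H = 0 := le_antisymm (hHu.trans hu0.symm.le) h0
    simp [← hu0, hH0]
  · have hup : 0 < u + H := by linarith
    have l1 : Real.logb 2 ((u+H)/u) = (Real.log (u+H) - Real.log u)/Real.log 2 := by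
      rw [← Real.log_div_log, Real.log_div hup.ne' hu0.ne']
    have l2 : (u-H) * Real.logb 2 ((u-H)/u)
        = (u-H)*((Real.log (u-H) - Real.log u)/Real.log 2) := by
      rcases eq_or_lt_of_le (sub_nonneg.2 hHu) with he | hp
      · rw [← he]; simp
      · rw [← Real.log_div_log, Real.log_div hp.ne' hu0.ne']
    rw [l1, l2]
    field_simp
    ring

set_option maxHeartbeats 1000000 in
/-- Case (b): if `s·tanh x ≤ 0`, `r·c₃·tanh x ≥ 0` and `c₃² − b² ≥ s·r·c₃` (with `b ≥ 0`),
then `F` attains its minimum over `[0,1]` at `z = 1`. -/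
theorem F_min_at_one_case_b
    (r s c3 b x : ℝ)
    (h1 : s * Real.tanh x ≤ 0) (h2 : 0 ≤ r * c3 * Real.tanh x)
    (h3 : s * r * c3 ≤ c3 ^ 2 - b ^ 2) (hb : 0 ≤ b)
    (Hp Hm : ℝ → ℝ)
    (hHp : ∀ w : ℝ, Hp w = Real.sqrt (b ^ 2 * (1 - w ^ 2) * Real.tanh x ^ 2 + (r + c3 * w * Real.tanh x) ^ 2))
    (hHm : ∀ w : ℝ, Hm w = Real.sqrt (b ^ 2 * (1 - w ^ 2) * Real.tanh x ^ 2 + (r - c3 * w * Real.tanh x) ^ 2))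
    (F : ℝ → ℝ)
    (hF : ∀ w : ℝ, F w = -(1/4) *
      ((1 + s * w * Real.tanh x + Hp w) *
          Real.logb 2 ((1 + s * w * Real.tanh x + Hp w) / (1 + s * w * Real.tanh x))
       + (1 + s * w * Real.tanh x - Hp w) *
          Real.logb 2 ((1 + s * w * Real.tanh x - Hp w) / (1 + s * w * Real.tanh x))
       + (1 - s * w * Real.tanh x + Hm w) *
          Real.logb 2 ((1 - s * w * Real.tanh x + Hm w) / (1 - s * w * Real.tanh x))
       + (1 - s * w * Real.tanh x - Hm w) *
          Real.logb 2 ((1 - s * w * Real.tanh x - Hm w) / (1 - s * w * Real.tanh x))))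
    (hbound : ∀ z ∈ Set.Icc (0 : ℝ) 1,
      Hp z ≤ 1 + s * z * Real.tanh x ∧ Hm z ≤ 1 - s * z * Real.tanh x) :
    ∀ z ∈ Set.Icc (0 : ℝ) 1, F 1 ≤ F z := by
  intro z hz
  obtain ⟨hz0, hz1⟩ := hz
  obtain ⟨t, htdef⟩ : ∃ t', Real.tanh x = t' := ⟨_, rfl⟩
  rw [htdef] at h1 h2
  simp only [htdef] at hHp hHm hF hbound
  by_cases ht : t = 0
  · have e : F z = F 1 := by
      rw [hF z, hF 1, hHp z, hHp 1, hHm z, hHm 1]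
      simp [ht]
    rw [e]
  -- main case t ≠ 0
  have ht2 : 0 < t^2 := by positivity
  obtain ⟨a, hadef⟩ : ∃ a', s * t = a' := ⟨_, rfl⟩
  obtain ⟨m, hmdef⟩ : ∃ m', r * c3 * t = m' := ⟨_, rfl⟩
  obtain ⟨c, hcdef⟩ : ∃ c', (c3^2 - b^2) * t^2 = c' := ⟨_, rfl⟩
  rw [hadef] at h1
  rw [hmdef] at h2
  have ha0 : a ≤ 0 := h1
  have hm0 : 0 ≤ m := h2
  have ham : a * m ≤ c := by
    rw [← hadef, ← hmdef, ← hcdef]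
    nlinarith [mul_le_mul_of_nonneg_right h3 ht2.le]
  -- bounds on Hp, Hm
  have hP0 : ∀ w : ℝ, 0 ≤ Hp w := fun w => by rw [hHp w]; exact Real.sqrt_nonneg _
  have hM0 : ∀ w : ℝ, 0 ≤ Hm w := fun w => by rw [hHm w]; exact Real.sqrt_nonneg _
  have hPb : ∀ w ∈ Set.Icc (0:ℝ) 1, Hp w ≤ 1 + a*w := by
    intro w hw
    have h := (hbound w hw).1
    have e : 1 + s*w*t = 1 + a*w := by rw [← hadef]; ring
    rw [← e]; exact h
  have hMb : ∀ w ∈ Set.Icc (0:ℝ) 1, Hm w ≤ 1 + -a*w := by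
    intro w hw
    have h := (hbound w hw).2
    have e : 1 - s*w*t = 1 + -a*w := by rw [← hadef]; ring
    rw [← e]; exact h
  have ha1 : -1 ≤ a := by
    have h := hPb 1 (by norm_num)
    have h0 := hP0 1
    simp at h
    linarith
  -- squared forms
  have hinner : ∀ w ∈ Set.Icc (0:ℝ) 1, (0:ℝ) ≤ b^2*(1-w^2)*t^2 := by
    intro w hw
    have h1w : (0:ℝ) ≤ 1 - w^2 := by nlinarith [hw.1, hw.2]
    positivity
  have hPsq : ∀ w ∈ Set.Icc (0:ℝ) 1, Hp w ^ 2 = (b^2*t^2 + r^2) + (2*m)*w + c*w^2 := by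
    intro w hw
    rw [hHp w, Real.sq_sqrt (by nlinarith [hinner w hw, sq_nonneg (r + c3*w*t)])]
    rw [← hmdef, ← hcdef]; ring
  have hMsq : ∀ w ∈ Set.Icc (0:ℝ) 1, Hm w ^ 2 = (b^2*t^2 + r^2) + (-(2*m))*w + c*w^2 := by
    intro w hw
    rw [hHm w, Real.sq_sqrt (by nlinarith [hinner w hw, sq_nonneg (r - c3*w*t)])]
    rw [← hmdef, ← hcdef]; ring
  -- Key inequality for each θ ∈ (0,1)
  have KEY : ∀ θ ∈ Set.Ioo (0:ℝ) 1,
      (((1+a*z+θ*Hp z) * Real.log (1+a*z+θ*Hp z)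
        + (1+a*z-θ*Hp z) * Real.log (1+a*z-θ*Hp z) - 2*((1+a*z) * Real.log (1+a*z)))
      + ((1+ -a*z+θ*Hm z) * Real.log (1+ -a*z+θ*Hm z)
        + (1+ -a*z-θ*Hm z) * Real.log (1+ -a*z-θ*Hm z) - 2*((1+ -a*z) * Real.log (1+ -a*z))))
      ≤ (((1+a*1+θ*Hp 1) * Real.log (1+a*1+θ*Hp 1)
        + (1+a*1-θ*Hp 1) * Real.log (1+a*1-θ*Hp 1) - 2*((1+a*1) * Real.log (1+a*1)))
      + ((1+ -a*1+θ*Hm 1) * Real.log (1+ -a*1+θ*Hm 1)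
        + (1+ -a*1-θ*Hm 1) * Real.log (1+ -a*1-θ*Hm 1) - 2*((1+ -a*1) * Real.log (1+ -a*1)))) := by
    intro θ hθ
    obtain ⟨hθ0, hθ1⟩ := hθ
    have hb1 : ∀ w ∈ Set.Ioo (0:ℝ) 1, 0 < 1 + a*w := by
      intro w hw
      nlinarith [mul_nonneg (by linarith : (0:ℝ) ≤ a+1) hw.1.le, hw.2]
    have hv1 : ∀ w ∈ Set.Ioo (0:ℝ) 1, 0 < 1 + -a*w := by
      intro w hw
      nlinarith [mul_nonneg (by linarith : (0:ℝ) ≤ -a) hw.1.le, hw.2]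
    have hPs : ∀ w ∈ Set.Ioo (0:ℝ) 1, θ * Hp w < 1 + a*w := by
      intro w hw
      have hx1 := hPb w ⟨hw.1.le, hw.2.le⟩
      have hx2 := hP0 w
      have hx3 := hb1 w hw
      nlinarith [mul_le_mul_of_nonneg_left hx1 hθ0.le,
        mul_pos (by linarith : (0:ℝ) < 1-θ) hx3]
    have hMs : ∀ w ∈ Set.Ioo (0:ℝ) 1, θ * Hm w < 1 + -a*w := by
      intro w hw
      have hx1 := hMb w ⟨hw.1.le, hw.2.le⟩
      have hx2 := hM0 w
      have hx3 := hv1 w hw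
      nlinarith [mul_le_mul_of_nonneg_left hx1 hθ0.le,
        mul_pos (by linarith : (0:ℝ) < 1-θ) hx3]
    have hlin : ∀ w : ℝ, 0 ≤ w → m*(1+a*w) ≤ m + c*w := by
      intro w hw
      nlinarith [mul_le_mul_of_nonneg_right ham hw]
    have hlin2 : ∀ w : ℝ, 0 ≤ w → -(m*(1+ -a*w)) ≤ -m + c*w := by
      intro w hw
      nlinarith [mul_le_mul_of_nonneg_right ham hw]
    by_cases hb0 : b = 0
    · -- degenerate case b = 0 : use signed affine branch functions
      have hPabs : ∀ w : ℝ, Hp w = |r + c3*t*w| := by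
        intro w
        rw [hHp w, hb0, show (0:ℝ)^2*(1-w^2)*t^2 + (r + c3*w*t)^2 = (r + c3*t*w)^2 from by ring]
        exact Real.sqrt_sq_eq_abs _
      have hMabs : ∀ w : ℝ, Hm w = |r - c3*t*w| := by
        intro w
        rw [hHm w, hb0, show (0:ℝ)^2*(1-w^2)*t^2 + (r - c3*w*t)^2 = (r - c3*t*w)^2 from by ring]
        exact Real.sqrt_sq_eq_abs _
      have hfabs : ∀ w : ℝ, |θ*(r + c3*t*w)| = θ * Hp w := by
        intro w
        rw [abs_mul, abs_of_pos hθ0, hPabs w]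
      have hgabs : ∀ w : ℝ, |θ*(r - c3*t*w)| = θ * Hm w := by
        intro w
        rw [abs_mul, abs_of_pos hθ0, hMabs w]
      have hcf : Continuous (fun w : ℝ => θ*(r + c3*t*w)) := by fun_prop
      have hcg : Continuous (fun w : ℝ => θ*(r - c3*t*w)) := by fun_prop
      have hfb : ∀ w ∈ Set.Ioo (0:ℝ) 1, |θ*(r + c3*t*w)| < 1 + a*w := by
        intro w hw; rw [hfabs w]; exact hPs w hw
      have hgb : ∀ w ∈ Set.Ioo (0:ℝ) 1, |θ*(r - c3*t*w)| < 1 + -a*w := by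
        intro w hw; rw [hgabs w]; exact hMs w hw
      have hgf : ∀ w ∈ Set.Ioo (0:ℝ) 1, |θ*(r - c3*t*w)| ≤ |θ*(r + c3*t*w)| := by
        intro w hw
        rw [hfabs w, hgabs w]
        have hmw : 0 ≤ (r*c3*t)*w := mul_nonneg (by rw [hmdef]; exact hm0) hw.1.le
        have : Hm w ≤ Hp w := by
          rw [hPabs w, hMabs w, ← Real.sqrt_sq_eq_abs, ← Real.sqrt_sq_eq_abs]
          apply Real.sqrt_le_sqrt
          nlinarith [hmw]
        nlinarith
      have hdd : ∀ w ∈ Set.Ioo (0:ℝ) 1, ∃ f' g',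
          HasDerivAt (fun w : ℝ => θ*(r + c3*t*w)) f' w ∧
          HasDerivAt (fun w : ℝ => θ*(r - c3*t*w)) g' w ∧
          (θ^2*m) * (1+a*w) ≤ f' * (θ*(r + c3*t*w)) ∧
          -((θ^2*m) * (1 + -a*w)) ≤ g' * (θ*(r - c3*t*w)) := by
        intro w hw
        refine ⟨θ*(c3*t), -(θ*(c3*t)), ?_, ?_, ?_, ?_⟩
        · have h := (((hasDerivAt_id w).const_mul (c3*t)).const_add r).const_mul θ
          simpa using h
        · have h := (((hasDerivAt_id w).const_mul (c3*t)).const_sub r).const_mul θ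
          simpa using h
        · have e : (θ*(c3*t)) * (θ*(r + c3*t*w)) = θ^2*(m + c*w) := by
            rw [← hmdef, ← hcdef, hb0]; ring
          rw [e]
          nlinarith [mul_le_mul_of_nonneg_left (hlin w hw.1.le) (sq_nonneg θ)]
        · have e : -(θ*(c3*t)) * (θ*(r - c3*t*w)) = θ^2*(-m + c*w) := by
            rw [← hmdef, ← hcdef, hb0]; ring
          rw [e]
          nlinarith [mul_le_mul_of_nonneg_left (hlin2 w hw.1.le) (sq_nonneg θ)]
      have MONO := Fmin_S_mono a (θ^2*m) (fun w => θ*(r + c3*t*w)) (fun w => θ*(r - c3*t*w))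
        ha0 ha1 (by positivity) hcf hcg hfb hgb hgf hdd
      have SS := MONO ⟨hz0, hz1⟩ ⟨(by norm_num : (0:ℝ) ≤ 1), le_refl (1:ℝ)⟩ hz1
      rw [show θ*Hp z = |θ*(r + c3*t*z)| from (hfabs z).symm,
          show θ*Hm z = |θ*(r - c3*t*z)| from (hgabs z).symm,
          show θ*Hp 1 = |θ*(r + c3*t*1)| from (hfabs 1).symm,
          show θ*Hm 1 = |θ*(r - c3*t*1)| from (hgabs 1).symm,
          Fmin_E_abs (1+a*z) (θ*(r + c3*t*z)), Fmin_E_abs (1+ -a*z) (θ*(r - c3*t*z)),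
          Fmin_E_abs (1+a*1) (θ*(r + c3*t*1)), Fmin_E_abs (1+ -a*1) (θ*(r - c3*t*1))]
      exact SS
    · -- main case b ≠ 0 : smooth sqrt branch functions
      have hq : ∀ w : ℝ, θ^2*(b^2*t^2+r^2) + (θ^2*(2*m))*w + (θ^2*c)*w^2
          = θ^2 * (b^2*(1-w^2)*t^2 + (r + c3*w*t)^2) := by
        intro w; rw [← hmdef, ← hcdef]; ring
      have hqm : ∀ w : ℝ, θ^2*(b^2*t^2+r^2) + (-(θ^2*(2*m)))*w + (θ^2*c)*w^2
          = θ^2 * (b^2*(1-w^2)*t^2 + (r - c3*w*t)^2) := by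
        intro w; rw [← hmdef, ← hcdef]; ring
      have hb2 : 0 < b^2 := by positivity
      have hqpos : ∀ w ∈ Set.Ioo (0:ℝ) 1,
          0 < θ^2*(b^2*t^2+r^2) + (θ^2*(2*m))*w + (θ^2*c)*w^2 := by
        intro w hw
        rw [hq w]
        have h1w : 0 < 1 - w^2 := by nlinarith [hw.1, hw.2]
        have : 0 < b^2*(1-w^2)*t^2 := by positivity
        nlinarith [sq_nonneg (r + c3*w*t), pow_pos hθ0 2]
      have hqmpos : ∀ w ∈ Set.Ioo (0:ℝ) 1,
          0 < θ^2*(b^2*t^2+r^2) + (-(θ^2*(2*m)))*w + (θ^2*c)*w^2 := by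
        intro w hw
        rw [hqm w]
        have h1w : 0 < 1 - w^2 := by nlinarith [hw.1, hw.2]
        have : 0 < b^2*(1-w^2)*t^2 := by positivity
        nlinarith [sq_nonneg (r - c3*w*t), pow_pos hθ0 2]
      have hfP : ∀ w : ℝ,
          Real.sqrt (θ^2*(b^2*t^2+r^2) + (θ^2*(2*m))*w + (θ^2*c)*w^2) = θ * Hp w := by
        intro w
        rw [hq w, hHp w, Real.sqrt_mul (sq_nonneg θ), Real.sqrt_sq hθ0.le]
      have hgM : ∀ w : ℝ,
          Real.sqrt (θ^2*(b^2*t^2+r^2) + (-(θ^2*(2*m)))*w + (θ^2*c)*w^2) = θ * Hm w := by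
        intro w
        rw [hqm w, hHm w, Real.sqrt_mul (sq_nonneg θ), Real.sqrt_sq hθ0.le]
      have hcf : Continuous (fun w : ℝ => Real.sqrt (θ^2*(b^2*t^2+r^2) + (θ^2*(2*m))*w + (θ^2*c)*w^2)) := by
        fun_prop
      have hcg : Continuous (fun w : ℝ => Real.sqrt (θ^2*(b^2*t^2+r^2) + (-(θ^2*(2*m)))*w + (θ^2*c)*w^2)) := by
        fun_prop
      have hfb : ∀ w ∈ Set.Ioo (0:ℝ) 1,
          |Real.sqrt (θ^2*(b^2*t^2+r^2) + (θ^2*(2*m))*w + (θ^2*c)*w^2)| < 1 + a*w := by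
        intro w hw
        rw [abs_of_nonneg (Real.sqrt_nonneg _), hfP w]
        exact hPs w hw
      have hgb : ∀ w ∈ Set.Ioo (0:ℝ) 1,
          |Real.sqrt (θ^2*(b^2*t^2+r^2) + (-(θ^2*(2*m)))*w + (θ^2*c)*w^2)| < 1 + -a*w := by
        intro w hw
        rw [abs_of_nonneg (Real.sqrt_nonneg _), hgM w]
        exact hMs w hw
      have hgf : ∀ w ∈ Set.Ioo (0:ℝ) 1,
          |Real.sqrt (θ^2*(b^2*t^2+r^2) + (-(θ^2*(2*m)))*w + (θ^2*c)*w^2)|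
            ≤ |Real.sqrt (θ^2*(b^2*t^2+r^2) + (θ^2*(2*m))*w + (θ^2*c)*w^2)| := by
        intro w hw
        rw [abs_of_nonneg (Real.sqrt_nonneg _), abs_of_nonneg (Real.sqrt_nonneg _)]
        apply Real.sqrt_le_sqrt
        nlinarith [mul_nonneg (mul_nonneg (sq_nonneg θ) hm0) hw.1.le]
      have hdd : ∀ w ∈ Set.Ioo (0:ℝ) 1, ∃ f' g',
          HasDerivAt (fun w : ℝ => Real.sqrt (θ^2*(b^2*t^2+r^2) + (θ^2*(2*m))*w + (θ^2*c)*w^2)) f' w ∧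
          HasDerivAt (fun w : ℝ => Real.sqrt (θ^2*(b^2*t^2+r^2) + (-(θ^2*(2*m)))*w + (θ^2*c)*w^2)) g' w ∧
          (θ^2*m) * (1+a*w) ≤ f' * (Real.sqrt (θ^2*(b^2*t^2+r^2) + (θ^2*(2*m))*w + (θ^2*c)*w^2)) ∧
          -((θ^2*m) * (1 + -a*w)) ≤ g' * (Real.sqrt (θ^2*(b^2*t^2+r^2) + (-(θ^2*(2*m)))*w + (θ^2*c)*w^2)) := by
        intro w hw
        have hfpos := hqpos w hw
        have hgpos := hqmpos w hw
        have hsf : Real.sqrt (θ^2*(b^2*t^2+r^2) + (θ^2*(2*m))*w + (θ^2*c)*w^2) ≠ 0 :=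
          (Real.sqrt_pos.mpr hfpos).ne'
        have hsg : Real.sqrt (θ^2*(b^2*t^2+r^2) + (-(θ^2*(2*m)))*w + (θ^2*c)*w^2) ≠ 0 :=
          (Real.sqrt_pos.mpr hgpos).ne'
        refine ⟨1/(2*Real.sqrt (θ^2*(b^2*t^2+r^2) + (θ^2*(2*m))*w + (θ^2*c)*w^2)) * (θ^2*(2*m) + 2*(θ^2*c)*w),
          1/(2*Real.sqrt (θ^2*(b^2*t^2+r^2) + (-(θ^2*(2*m)))*w + (θ^2*c)*w^2)) * (-(θ^2*(2*m)) + 2*(θ^2*c)*w),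
          ?_, ?_, ?_, ?_⟩
        · have h := (Real.hasDerivAt_sqrt hfpos.ne').comp w
            (Fmin_poly_deriv (θ^2*(b^2*t^2+r^2)) (θ^2*(2*m)) (θ^2*c) w)
          simpa [Function.comp_def] using h
        · have h := (Real.hasDerivAt_sqrt hgpos.ne').comp w
            (Fmin_poly_deriv (θ^2*(b^2*t^2+r^2)) (-(θ^2*(2*m))) (θ^2*c) w)
          simpa [Function.comp_def] using h
        · have e : 1/(2*Real.sqrt (θ^2*(b^2*t^2+r^2) + (θ^2*(2*m))*w + (θ^2*c)*w^2)) * (θ^2*(2*m) + 2*(θ^2*c)*w)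
              * Real.sqrt (θ^2*(b^2*t^2+r^2) + (θ^2*(2*m))*w + (θ^2*c)*w^2) = θ^2*(m + c*w) := by
            have key : Real.sqrt (θ^2*(b^2*t^2+r^2) + (θ^2*(2*m))*w + (θ^2*c)*w^2)
                * (Real.sqrt (θ^2*(b^2*t^2+r^2) + (θ^2*(2*m))*w + (θ^2*c)*w^2))⁻¹ = 1 :=
              mul_inv_cancel₀ hsf
            have e2 : 1/(2*Real.sqrt (θ^2*(b^2*t^2+r^2) + (θ^2*(2*m))*w + (θ^2*c)*w^2)) * (θ^2*(2*m) + 2*(θ^2*c)*w)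
                * Real.sqrt (θ^2*(b^2*t^2+r^2) + (θ^2*(2*m))*w + (θ^2*c)*w^2)
                = (θ^2*(2*m) + 2*(θ^2*c)*w)/2 * (Real.sqrt (θ^2*(b^2*t^2+r^2) + (θ^2*(2*m))*w + (θ^2*c)*w^2)
                  * (Real.sqrt (θ^2*(b^2*t^2+r^2) + (θ^2*(2*m))*w + (θ^2*c)*w^2))⁻¹) := by
              ring
            rw [e2, key]
            ring
          rw [e]
          nlinarith [mul_le_mul_of_nonneg_left (hlin w hw.1.le) (sq_nonneg θ)]
        · have e : 1/(2*Real.sqrt (θ^2*(b^2*t^2+r^2) + (-(θ^2*(2*m)))*w + (θ^2*c)*w^2)) * (-(θ^2*(2*m)) + 2*(θ^2*c)*w)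
              * Real.sqrt (θ^2*(b^2*t^2+r^2) + (-(θ^2*(2*m)))*w + (θ^2*c)*w^2) = θ^2*(-m + c*w) := by
            have key : Real.sqrt (θ^2*(b^2*t^2+r^2) + (-(θ^2*(2*m)))*w + (θ^2*c)*w^2)
                * (Real.sqrt (θ^2*(b^2*t^2+r^2) + (-(θ^2*(2*m)))*w + (θ^2*c)*w^2))⁻¹ = 1 :=
              mul_inv_cancel₀ hsg
            have e2 : 1/(2*Real.sqrt (θ^2*(b^2*t^2+r^2) + (-(θ^2*(2*m)))*w + (θ^2*c)*w^2)) * (-(θ^2*(2*m)) + 2*(θ^2*c)*w)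
                * Real.sqrt (θ^2*(b^2*t^2+r^2) + (-(θ^2*(2*m)))*w + (θ^2*c)*w^2)
                = (-(θ^2*(2*m)) + 2*(θ^2*c)*w)/2 * (Real.sqrt (θ^2*(b^2*t^2+r^2) + (-(θ^2*(2*m)))*w + (θ^2*c)*w^2)
                  * (Real.sqrt (θ^2*(b^2*t^2+r^2) + (-(θ^2*(2*m)))*w + (θ^2*c)*w^2))⁻¹) := by
              ring
            rw [e2, key]
            ring
          rw [e]
          nlinarith [mul_le_mul_of_nonneg_left (hlin2 w hw.1.le) (sq_nonneg θ)]
      have MONO := Fmin_S_mono a (θ^2*m)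
        (fun w => Real.sqrt (θ^2*(b^2*t^2+r^2) + (θ^2*(2*m))*w + (θ^2*c)*w^2))
        (fun w => Real.sqrt (θ^2*(b^2*t^2+r^2) + (-(θ^2*(2*m)))*w + (θ^2*c)*w^2))
        ha0 ha1 (by positivity) hcf hcg hfb hgb hgf hdd
      have SS := MONO ⟨hz0, hz1⟩ ⟨(by norm_num : (0:ℝ) ≤ 1), le_refl (1:ℝ)⟩ hz1
      rw [← hfP z, ← hgM z, ← hfP 1, ← hgM 1]
      exact SS
  -- pass to the limit θ → 1⁻
  have cbr : ∀ p q : ℝ, Continuous (fun θ : ℝ =>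
      (p+θ*q) * Real.log (p+θ*q) + (p-θ*q) * Real.log (p-θ*q) - 2*(p * Real.log p)) := by
    intro p q
    exact ((Real.continuous_mul_log.comp (continuous_const.add (continuous_id.mul continuous_const))).add
      (Real.continuous_mul_log.comp (continuous_const.sub (continuous_id.mul continuous_const)))).sub
      continuous_const
  have cS : Continuous (fun θ : ℝ =>
      ((((1+a*z)+θ*Hp z) * Real.log ((1+a*z)+θ*Hp z)
        + ((1+a*z)-θ*Hp z) * Real.log ((1+a*z)-θ*Hp z) - 2*((1+a*z) * Real.log (1+a*z)))
      + (((1+ -a*z)+θ*Hm z) * Real.log ((1+ -a*z)+θ*Hm z)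
        + ((1+ -a*z)-θ*Hm z) * Real.log ((1+ -a*z)-θ*Hm z) - 2*((1+ -a*z) * Real.log (1+ -a*z))))
      - ((((1+a*1)+θ*Hp 1) * Real.log ((1+a*1)+θ*Hp 1)
        + ((1+a*1)-θ*Hp 1) * Real.log ((1+a*1)-θ*Hp 1) - 2*((1+a*1) * Real.log (1+a*1)))
      + (((1+ -a*1)+θ*Hm 1) * Real.log ((1+ -a*1)+θ*Hm 1)
        + ((1+ -a*1)-θ*Hm 1) * Real.log ((1+ -a*1)-θ*Hm 1) - 2*((1+ -a*1) * Real.log (1+ -a*1))))) :=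
    ((cbr (1+a*z) (Hp z)).add (cbr (1+ -a*z) (Hm z))).sub
      ((cbr (1+a*1) (Hp 1)).add (cbr (1+ -a*1) (Hm 1)))
  have hne : (𝓝[Set.Ioo (0:ℝ) 1] (1:ℝ)).NeBot := by
    rw [← mem_closure_iff_nhdsWithin_neBot, closure_Ioo (by norm_num : (0:ℝ) ≠ 1)]
    exact ⟨by norm_num, le_refl 1⟩
  haveI := hne
  have hfin := le_of_tendsto (cS.continuousWithinAt (s := Set.Ioo (0:ℝ) 1) (x := 1))
    (eventually_mem_nhdsWithin.mono (fun θ hθ => sub_nonpos.mpr (KEY θ hθ)))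
  simp only [one_mul] at hfin
  -- hfin : S z - S 1 ≤ 0  (with θ = 1)
  have hlog2 : (0:ℝ) < Real.log 2 := Real.log_pos one_lt_two
  have transl : ∀ w, w ∈ Set.Icc (0:ℝ) 1 → F w = -(1/4) *
      ((((1+a*w) + Hp w) * Real.log ((1+a*w) + Hp w)
        + ((1+a*w) - Hp w) * Real.log ((1+a*w) - Hp w) - 2*((1+a*w) * Real.log (1+a*w))) / Real.log 2
      + (((1+ -a*w) + Hm w) * Real.log ((1+ -a*w) + Hm w)
        + ((1+ -a*w) - Hm w) * Real.log ((1+ -a*w) - Hm w) - 2*((1+ -a*w) * Real.log (1+ -a*w))) / Real.log 2) := by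
    intro w hw
    have e1 : 1 + s*w*t = 1 + a*w := by rw [← hadef]; ring
    have e2 : 1 - s*w*t = 1 + -a*w := by rw [← hadef]; ring
    have pair1 := Fmin_logb_pair (1+a*w) (Hp w) (hP0 w) (hPb w hw)
    have pair2 := Fmin_logb_pair (1+ -a*w) (Hm w) (hM0 w) (hMb w hw)
    rw [hF w, e1, e2]
    linarith [pair1, pair2]
  rw [transl z ⟨hz0, hz1⟩, transl 1 ⟨(by norm_num : (0:ℝ) ≤ 1), le_refl (1:ℝ)⟩]
  have key2 : (((1+a*z) + Hp z) * Real.log ((1+a*z) + Hp z)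
        + ((1+a*z) - Hp z) * Real.log ((1+a*z) - Hp z) - 2*((1+a*z) * Real.log (1+a*z)))
      + (((1+ -a*z) + Hm z) * Real.log ((1+ -a*z) + Hm z)
        + ((1+ -a*z) - Hm z) * Real.log ((1+ -a*z) - Hm z) - 2*((1+ -a*z) * Real.log (1+ -a*z)))
      ≤ (((1+a*1) + Hp 1) * Real.log ((1+a*1) + Hp 1)
        + ((1+a*1) - Hp 1) * Real.log ((1+a*1) - Hp 1) - 2*((1+a*1) * Real.log (1+a*1)))
      + (((1+ -a*1) + Hm 1) * Real.log ((1+ -a*1) + Hm 1)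
        + ((1+ -a*1) - Hm 1) * Real.log ((1+ -a*1) - Hm 1) - 2*((1+ -a*1) * Real.log (1+ -a*1))) := by
    exact sub_nonpos.mp hfin
  have hinv : (0:ℝ) < (Real.log 2)⁻¹ := by positivity
  have := mul_le_mul_of_nonneg_right key2 hinv.le
  have e1 : ∀ p q : ℝ, p / Real.log 2 + q / Real.log 2 = (p + q) * (Real.log 2)⁻¹ := by
    intro p q; rw [← add_div, div_eq_mul_inv]
  rw [e1, e1]
  nlinarith [this]
end

section
/- Let r = s = 0, and let c₃, b, x be real numbers with c₃² ≤ b² and b·|tanh x| ≤ 1. Then F attains its minimum over [0,1] at z = 0, i.e., F(0) ≤ F(z) for all z ∈ [0,1], and F(0) = E(b·tanh x) − 1, where in this case F(z) = −(1/2)(1+H(z))log₂(1+H(z)) − (1/2)(1−H(z))log₂(1−H(z)) with H(z) = √(b²(1−z²)tanh²x + c₃²z²tanh²x). -/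
open Real Set

private noncomputable def phi (h : ℝ) : ℝ :=
  -((1 + h) * Real.log (1 + h)) - (1 - h) * Real.log (1 - h)

private lemma hasDerivAt_phi {h : ℝ} (h1 : 1 + h ≠ 0) (h2 : 1 - h ≠ 0) :
    HasDerivAt phi (Real.log (1 - h) - Real.log (1 + h)) h := by
  have A : HasDerivAt (fun h : ℝ => (1 + h) * Real.log (1 + h)) (Real.log (1 + h) + 1) h := by
    have := (Real.hasDerivAt_mul_log h1).comp h ((hasDerivAt_id h).const_add 1)
    simpa [Function.comp_def] using this
  have B : HasDerivAt (fun h : ℝ => (1 - h) * Real.log (1 - h)) (-(Real.log (1 - h) + 1)) h := by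
    have := (Real.hasDerivAt_mul_log h2).comp h ((hasDerivAt_id h).neg.const_add 1)
    simpa [sub_eq_add_neg, Function.comp_def] using this
  have := A.neg.sub B
  exact this.congr_deriv (by ring)

private lemma phi_cont : Continuous phi := by
  have := Real.continuous_mul_log
  unfold phi
  fun_prop

private lemma phi_anti : AntitoneOn phi (Set.Ici 0) := by
  have h01 : StrictAntiOn phi (Set.Icc 0 1) := by
    apply strictAntiOn_of_deriv_neg (convex_Icc 0 1) phi_cont.continuousOn
    intro y hy
    rw [interior_Icc] at hy
    rw [(hasDerivAt_phi (by linarith [hy.1]) (by linarith [hy.2])).deriv]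
    have h' : (0:ℝ) < 1 - y := by linarith [hy.2]
    have := Real.log_lt_log h' (by linarith [hy.1] : (1:ℝ) - y < 1 + y)
    linarith
  have h1i : StrictAntiOn phi (Set.Ici 1) := by
    apply strictAntiOn_of_deriv_neg (convex_Ici 1) phi_cont.continuousOn
    intro y hy
    rw [interior_Ici] at hy
    have hy1 : (1:ℝ) < y := hy
    rw [(hasDerivAt_phi (by linarith) (by linarith)).deriv]
    have e1 : Real.log (1 - y) = Real.log (y - 1) := by
      rw [show (1:ℝ) - y = -(y - 1) by ring, Real.log_neg_eq_log]
    rw [e1]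
    have := Real.log_lt_log (by linarith : (0:ℝ) < y - 1) (by linarith : y - 1 < 1 + y)
    linarith
  intro a ha b hb hab
  rcases le_total b 1 with hb1 | hb1
  · exact h01.antitoneOn ⟨ha, le_trans hab hb1⟩ ⟨le_trans ha hab, hb1⟩ hab
  · rcases le_total a 1 with ha1 | ha1
    · calc phi b ≤ phi 1 := h1i.antitoneOn (by norm_num) hb1 hb1
        _ ≤ phi a := h01.antitoneOn ⟨ha, ha1⟩ (by norm_num) ha1
    · exact h1i.antitoneOn ha1 (le_trans ha1 hab) hab

/-- Case (c): if `r = s = 0` and `c₃² ≤ b²`, then `F` attains its minimum over `[0,1]` at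
`z = 0`, and `F(0) = E(b·tanh x) − 1`. -/
theorem F_min_at_zero_case_c
    (c3 b x : ℝ)
    (h1 : c3 ^ 2 ≤ b ^ 2) (h2 : b * |Real.tanh x| ≤ 1)
    (E : ℝ → ℝ)
    (hE : ∀ y : ℝ, E y = 1 - (1 + y) / 2 * Real.logb 2 (1 + y)
                          - (1 - y) / 2 * Real.logb 2 (1 - y))
    (H : ℝ → ℝ)
    (hH : ∀ w : ℝ, H w = Real.sqrt (b ^ 2 * (1 - w ^ 2) * Real.tanh x ^ 2
                                      + c3 ^ 2 * w ^ 2 * Real.tanh x ^ 2))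
    (F : ℝ → ℝ)
    (hF : ∀ w : ℝ, F w = -(1/2) * (1 + H w) * Real.logb 2 (1 + H w)
                          - (1/2) * (1 - H w) * Real.logb 2 (1 - H w)) :
    (∀ z ∈ Set.Icc (0 : ℝ) 1, F 0 ≤ F z) ∧ F 0 = E (b * Real.tanh x) - 1 := by
  have hL : 0 < Real.log 2 := Real.log_pos one_lt_two
  have hFg : ∀ w : ℝ, F w = phi (H w) / (2 * Real.log 2) := by
    intro w
    rw [hF]
    unfold phi
    rw [Real.logb, Real.logb]
    field_simp
  have hHnn : ∀ w : ℝ, 0 ≤ H w := by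
    intro w; rw [hH]; exact Real.sqrt_nonneg _
  constructor
  · intro z hz
    have hle : H z ≤ H 0 := by
      rw [hH, hH]
      apply Real.sqrt_le_sqrt
      have hz2 : 0 ≤ z ^ 2 := sq_nonneg z
      nlinarith [sq_nonneg (Real.tanh x), mul_nonneg (mul_nonneg (sub_nonneg.2 h1) hz2) (sq_nonneg (Real.tanh x))]
    have := phi_anti (Set.mem_Ici.2 (hHnn z)) (Set.mem_Ici.2 (hHnn 0)) hle
    rw [hFg, hFg]
    gcongr
  · have hH0 : H 0 = |b * Real.tanh x| := by
      rw [hH, show b ^ 2 * (1 - (0:ℝ) ^ 2) * Real.tanh x ^ 2 + c3 ^ 2 * (0:ℝ) ^ 2 * Real.tanh x ^ 2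
          = (b * Real.tanh x) ^ 2 by ring, Real.sqrt_sq_eq_abs]
    rw [hF 0, hE, hH0]
    rcases abs_cases (b * Real.tanh x) with ⟨he, _⟩ | ⟨he, _⟩
    · rw [he]; ring
    · rw [he, show 1 + -(b * Real.tanh x) = 1 - b * Real.tanh x by ring,
        show 1 - -(b * Real.tanh x) = 1 + b * Real.tanh x by ring]
      ring
end

section
/- Let r = s = 0, and let c₃, b, x be real numbers with c₃² ≥ b² ≥ 0 and |c₃·tanh x| ≤ 1. Then F attains its minimum over [0,1] at z = 1, i.e., F(1) ≤ F(z) for all z ∈ [0,1], and F(1) = E(c₃·tanh x) − 1 = −(1/2)(1+c₃·tanh x)log₂(1+c₃·tanh x) − (1/2)(1−c₃·tanh x)log₂(1−c₃·tanh x). -/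
lemma phi_mono_aux {a y : ℝ} (ha : 0 ≤ a) (hay : a ≤ y) (hy : y ≤ 1) :
    (1+a) * Real.log (1+a) + (1-a) * Real.log (1-a) ≤
    (1+y) * Real.log (1+y) + (1-y) * Real.log (1-y) := by
  rcases eq_or_lt_of_le (ha.trans hay) with h0 | h0
  · have ha0 : a = 0 := le_antisymm (by linarith) ha
    rw [ha0, ← h0]
  · have hlam : (0:ℝ) ≤ (y + a) / (2 * y) := by positivity
    have hmu : (0:ℝ) ≤ (y - a) / (2 * y) := by
      apply div_nonneg (by linarith) (by linarith)
    have hsum : (y + a) / (2 * y) + (y - a) / (2 * y) = 1 := by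
      field_simp; ring
    have hu : (1 + y) ∈ Set.Ici (0:ℝ) := by simp; linarith
    have hv : (1 - y) ∈ Set.Ici (0:ℝ) := by simp; linarith
    have c1 := Real.convexOn_mul_log.2 hu hv hlam hmu hsum
    have c2 := Real.convexOn_mul_log.2 hu hv hmu hlam (by linarith [hsum])
    simp only [smul_eq_mul] at c1 c2
    have e1 : (y + a) / (2 * y) * (1 + y) + (y - a) / (2 * y) * (1 - y) = 1 + a := by
      field_simp; ring
    have e2 : (y - a) / (2 * y) * (1 + y) + (y + a) / (2 * y) * (1 - y) = 1 - a := by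
      field_simp; ring
    rw [e1] at c1
    rw [e2] at c2
    have key : (y + a) / (2 * y) * ((1 + y) * Real.log (1 + y)) + (y - a) / (2 * y) * ((1 - y) * Real.log (1 - y))
        + ((y - a) / (2 * y) * ((1 + y) * Real.log (1 + y)) + (y + a) / (2 * y) * ((1 - y) * Real.log (1 - y)))
        = (1 + y) * Real.log (1 + y) + (1 - y) * Real.log (1 - y) := by
      linear_combination ((1 + y) * Real.log (1 + y) + (1 - y) * Real.log (1 - y)) * hsum
    linarith [c1, c2, key]



/-- If `r = s = 0` and `c₃² ≥ b² ≥ 0` with `|c₃·tanh x| ≤ 1`, then `F` attains its minimum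
over `[0,1]` at `z = 1`, and `F(1) = E(c₃·tanh x) − 1`. -/
theorem F_min_at_one_bell_case
    (r s c3 b x : ℝ) (hr : r = 0) (hs : s = 0)
    (h1 : b ^ 2 ≤ c3 ^ 2) (h2 : 0 ≤ b ^ 2) (h3 : |c3 * Real.tanh x| ≤ 1)
    (E : ℝ → ℝ)
    (hE : ∀ y : ℝ, E y = 1 - (1 + y) / 2 * Real.logb 2 (1 + y)
                          - (1 - y) / 2 * Real.logb 2 (1 - y))
    (Hp Hm : ℝ → ℝ)
    (hHp : ∀ w : ℝ, Hp w = Real.sqrt (b ^ 2 * (1 - w ^ 2) * Real.tanh x ^ 2 + (r + c3 * w * Real.tanh x) ^ 2))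
    (hHm : ∀ w : ℝ, Hm w = Real.sqrt (b ^ 2 * (1 - w ^ 2) * Real.tanh x ^ 2 + (r - c3 * w * Real.tanh x) ^ 2))
    (F : ℝ → ℝ)
    (hF : ∀ w : ℝ, F w = -(1/4) *
      ((1 + s * w * Real.tanh x + Hp w) *
          Real.logb 2 ((1 + s * w * Real.tanh x + Hp w) / (1 + s * w * Real.tanh x))
       + (1 + s * w * Real.tanh x - Hp w) *
          Real.logb 2 ((1 + s * w * Real.tanh x - Hp w) / (1 + s * w * Real.tanh x))
       + (1 - s * w * Real.tanh x + Hm w) *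
          Real.logb 2 ((1 - s * w * Real.tanh x + Hm w) / (1 - s * w * Real.tanh x))
       + (1 - s * w * Real.tanh x - Hm w) *
          Real.logb 2 ((1 - s * w * Real.tanh x - Hm w) / (1 - s * w * Real.tanh x)))) :
    (∀ z ∈ Set.Icc (0 : ℝ) 1, F 1 ≤ F z) ∧
    F 1 = E (c3 * Real.tanh x) - 1 ∧
    F 1 = -(1/2) * (1 + c3 * Real.tanh x) * Real.logb 2 (1 + c3 * Real.tanh x)
          - (1/2) * (1 - c3 * Real.tanh x) * Real.logb 2 (1 - c3 * Real.tanh x) := by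
  subst hr hs
  set t := Real.tanh x with ht
  -- simplified form of F
  have hFr : ∀ w : ℝ, F w = -(1/(2*Real.log 2)) *
      ((1 + Hp w) * Real.log (1 + Hp w) + (1 - Hp w) * Real.log (1 - Hp w)) := by
    intro w
    have hm : Hm w = Hp w := by
      rw [hHm, hHp]; congr 1; ring
    rw [hF w, hm]
    have hl2 : Real.log 2 ≠ 0 := ne_of_gt (Real.log_pos one_lt_two)
    simp only [zero_mul, add_zero, sub_zero, div_one, Real.logb]
    field_simp
    ring
  have hHp1 : Hp 1 = |c3 * t| := by
    have e : b ^ 2 * (1 - (1:ℝ) ^ 2) * t ^ 2 + (0 + c3 * 1 * t) ^ 2 = (c3 * t) ^ 2 := by ring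
    rw [hHp, e, Real.sqrt_sq_eq_abs]
  have hl2 : (0:ℝ) < Real.log 2 := Real.log_pos one_lt_two
  have hF1 : F 1 = -(1/2) * (1 + c3 * t) * Real.logb 2 (1 + c3 * t)
      - (1/2) * (1 - c3 * t) * Real.logb 2 (1 - c3 * t) := by
    rw [hFr 1, hHp1]
    simp only [Real.logb]
    rcases abs_cases (c3 * t) with ⟨he, _⟩ | ⟨he, _⟩ <;> rw [he] <;> field_simp <;> ring
  refine ⟨?_, ?_, hF1⟩
  · intro z hz
    have hz0 := hz.1
    have hz1 := hz.2
    have h0a : 0 ≤ Hp z := by rw [hHp]; exact Real.sqrt_nonneg _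
    have hle : Hp z ≤ Hp 1 := by
      rw [hHp, hHp]
      apply Real.sqrt_le_sqrt
      have hprod : 0 ≤ (1 - z ^ 2) * (c3 ^ 2 - b ^ 2) * t ^ 2 :=
        mul_nonneg (mul_nonneg (by nlinarith) (by linarith)) (sq_nonneg _)
      nlinarith [hprod]
    have hy1 : Hp 1 ≤ 1 := by rw [hHp1]; exact h3
    have key := phi_mono_aux h0a hle hy1
    rw [hFr 1, hFr z]
    have hc : (0:ℝ) ≤ 1/(2*Real.log 2) := by positivity
    exact mul_le_mul_of_nonpos_left key (neg_nonpos.mpr hc)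
  · rw [hF1, hE]; ring
end

section
/- For a ∈ [0,1] define T(a,γ) = (1/4)(1−a)log₂(1−a) + (1/4)(1+3a)log₂(1+3a) − (1/4)(1+a−2a(1−γ))log₂(1+a−2a(1−γ)) − (1/4)(1+a+2a(1−γ))log₂(1+a+2a(1−γ)). Then for every a ∈ [0,1] and γ ∈ (0,1], the partial derivative of T with respect to γ exists and equals (a/2)·log₂((1+a+2a(1−γ))/(1+a−2a(1−γ))), which is nonnegative. -/
/-- The partial derivative of `T(a,γ)` with respect to `γ` exists, equals
`(a/2)·log₂((1+a+2a(1−γ))/(1+a−2a(1−γ)))`, and is nonnegative. -/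
theorem T_partial_deriv_gamma
    (T : ℝ → ℝ → ℝ)
    (hT : ∀ a γ : ℝ, T a γ =
      (1/4) * (1 - a) * Real.logb 2 (1 - a)
      + (1/4) * (1 + 3 * a) * Real.logb 2 (1 + 3 * a)
      - (1/4) * (1 + a - 2 * a * (1 - γ)) * Real.logb 2 (1 + a - 2 * a * (1 - γ))
      - (1/4) * (1 + a + 2 * a * (1 - γ)) * Real.logb 2 (1 + a + 2 * a * (1 - γ)))
    (a : ℝ) (ha : a ∈ Set.Icc (0 : ℝ) 1) (γ : ℝ) (hγ : γ ∈ Set.Ioc (0 : ℝ) 1) :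
    HasDerivAt (fun g : ℝ => T a g)
      ((a / 2) * Real.logb 2 ((1 + a + 2 * a * (1 - γ)) / (1 + a - 2 * a * (1 - γ)))) γ ∧
    0 ≤ (a / 2) * Real.logb 2 ((1 + a + 2 * a * (1 - γ)) / (1 + a - 2 * a * (1 - γ))) := by
  obtain ⟨ha0, ha1⟩ := ha
  obtain ⟨hγ0, hγ1⟩ := hγ
  have hu : (0:ℝ) < 1 + a - 2 * a * (1 - γ) := by nlinarith
  have hv : (0:ℝ) < 1 + a + 2 * a * (1 - γ) := by nlinarith
  have hl2 : Real.log 2 ≠ 0 := by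
    have : (0:ℝ) < Real.log 2 := Real.log_pos (by norm_num)
    linarith
  set C : ℝ := (1/4) * (1 - a) * Real.logb 2 (1 - a)
      + (1/4) * (1 + 3 * a) * Real.logb 2 (1 + 3 * a) with hC
  set c : ℝ := 1 / (4 * Real.log 2) with hc
  have heqT : (fun g : ℝ => T a g) = fun g : ℝ =>
      C - c * ((1 + a - 2 * a * (1 - g)) * Real.log (1 + a - 2 * a * (1 - g)))
        - c * ((1 + a + 2 * a * (1 - g)) * Real.log (1 + a + 2 * a * (1 - g))) := by
    funext g
    rw [hT]
    simp only [Real.logb, hc, hC]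
    field_simp
  -- derivative of the inner affine maps
  have h1 : HasDerivAt (fun g : ℝ => 1 + a - 2 * a * (1 - g)) (2 * a) γ := by
    have heq : (fun g : ℝ => 1 + a - 2 * a * (1 - g))
        = fun g : ℝ => (1 + a - 2 * a) + 2 * a * g := by funext g; ring
    rw [heq]
    simpa using ((hasDerivAt_id γ).const_mul (2 * a)).const_add (1 + a - 2 * a)
  have h2 : HasDerivAt (fun g : ℝ => 1 + a + 2 * a * (1 - g)) (-(2 * a)) γ := by
    have heq : (fun g : ℝ => 1 + a + 2 * a * (1 - g))
        = fun g : ℝ => (1 + a + 2 * a) + (-(2 * a)) * g := by funext g; ring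
    rw [heq]
    simpa using ((hasDerivAt_id γ).const_mul (-(2 * a))).const_add (1 + a + 2 * a)
  have h3 : HasDerivAt (fun g : ℝ =>
      (1 + a - 2 * a * (1 - g)) * Real.log (1 + a - 2 * a * (1 - g)))
      ((Real.log (1 + a - 2 * a * (1 - γ)) + 1) * (2 * a)) γ :=
    by have := (Real.hasDerivAt_mul_log hu.ne').comp γ h1; exact this
  have h4 : HasDerivAt (fun g : ℝ =>
      (1 + a + 2 * a * (1 - g)) * Real.log (1 + a + 2 * a * (1 - g)))
      ((Real.log (1 + a + 2 * a * (1 - γ)) + 1) * (-(2 * a))) γ :=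
    by have := (Real.hasDerivAt_mul_log hv.ne').comp γ h2; exact this
  have H := ((hasDerivAt_const γ C).sub (h3.const_mul c)).sub (h4.const_mul c)
  have hder : (a / 2) * Real.logb 2 ((1 + a + 2 * a * (1 - γ)) / (1 + a - 2 * a * (1 - γ)))
      = 0 - c * ((Real.log (1 + a - 2 * a * (1 - γ)) + 1) * (2 * a))
        - c * ((Real.log (1 + a + 2 * a * (1 - γ)) + 1) * (-(2 * a))) := by
    rw [Real.logb, Real.log_div hv.ne' hu.ne', hc]
    field_simp
    ring
  constructor
  · rw [heqT, hder]
    exact H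
  · have hle : (1 + a - 2 * a * (1 - γ)) ≤ (1 + a + 2 * a * (1 - γ)) := by nlinarith
    have h1le : (1:ℝ) ≤ (1 + a + 2 * a * (1 - γ)) / (1 + a - 2 * a * (1 - γ)) :=
      (one_le_div hu).mpr hle
    have := Real.logb_nonneg (by norm_num : (1:ℝ) < 2) h1le
    positivity
end

section
/- For a ∈ [0,1] define T(a,γ) = (1/4)(1−a)log₂(1−a) + (1/4)(1+3a)log₂(1+3a) − (1/4)(1+a−2a(1−γ))log₂(1+a−2a(1−γ)) − (1/4)(1+a+2a(1−γ))log₂(1+a+2a(1−γ)), with the convention 0·log₂0 = 0. Then T(a,γ) ≥ 0 for all a ∈ [0,1] and γ ∈ [0,1]; that is, the super quantum discord of the Werner state does not increase under the phase damping channel. -/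
private lemma pair_le {g : ℝ → ℝ} (hg : ConvexOn ℝ (Set.Ici 0) g)
    {m d₁ d₂ : ℝ} (h0 : 0 ≤ d₁) (h12 : d₁ ≤ d₂) (h2m : d₂ ≤ m) :
    g (m - d₁) + g (m + d₁) ≤ g (m - d₂) + g (m + d₂) := by
  rcases eq_or_lt_of_le (h0.trans h12) with h | hd2
  · have h1 : d₁ = 0 := le_antisymm (h12.trans h.symm.le) h0
    rw [← h, h1]
  · set t : ℝ := (d₂ + d₁) / (2 * d₂) with ht
    set s : ℝ := (d₂ - d₁) / (2 * d₂) with hs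
    have hts : t + s = 1 := by rw [ht, hs, ← add_div, div_eq_one_iff_eq (mul_ne_zero two_ne_zero hd2.ne')]; ring
    have htn : 0 ≤ t := by positivity
    have hsn : 0 ≤ s := div_nonneg (by linarith) (by linarith)
    have hm1 : m - d₂ ∈ Set.Ici (0 : ℝ) := by simp; linarith
    have hm2 : m + d₂ ∈ Set.Ici (0 : ℝ) := by simp; linarith
    have e1 : t • (m - d₂) + s • (m + d₂) = m - d₁ := by
      rw [smul_eq_mul, smul_eq_mul, ht, hs]; field_simp [hd2.ne']; ring
    have e2 : s • (m - d₂) + t • (m + d₂) = m + d₁ := by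
      rw [smul_eq_mul, smul_eq_mul, ht, hs]; field_simp [hd2.ne']; ring
    have i1 := hg.2 hm1 hm2 htn hsn hts
    have i2 := hg.2 hm1 hm2 hsn htn (by linarith)
    rw [e1] at i1; rw [e2] at i2
    simp only [smul_eq_mul] at i1 i2
    have heq : t * g (m - d₂) + s * g (m + d₂) + (s * g (m - d₂) + t * g (m + d₂))
        = (t + s) * (g (m - d₂) + g (m + d₂)) := by ring
    rw [hts, one_mul] at heq
    linarith

/-- The super quantum discord of the Werner state does not increase under the phase damping
channel: `T(a,γ) ≥ 0` for all `a, γ ∈ [0,1]`. -/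
theorem T_nonneg
    (T : ℝ → ℝ → ℝ)
    (hT : ∀ a γ : ℝ, T a γ =
      (1/4) * (1 - a) * Real.logb 2 (1 - a)
      + (1/4) * (1 + 3 * a) * Real.logb 2 (1 + 3 * a)
      - (1/4) * (1 + a - 2 * a * (1 - γ)) * Real.logb 2 (1 + a - 2 * a * (1 - γ))
      - (1/4) * (1 + a + 2 * a * (1 - γ)) * Real.logb 2 (1 + a + 2 * a * (1 - γ))) :
    ∀ a ∈ Set.Icc (0 : ℝ) 1, ∀ γ ∈ Set.Icc (0 : ℝ) 1, 0 ≤ T a γ := by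
  rintro a ⟨ha0, ha1⟩ γ ⟨hg0, hg1⟩
  have hconv : ConvexOn ℝ (Set.Ici 0) (fun x : ℝ => x * Real.logb 2 x) := by
    have h := Real.convexOn_mul_log.smul (c := (Real.log 2)⁻¹)
      (by positivity)
    convert h using 2 with x
    · rfl
    · rfl
    simp [Real.logb, div_eq_mul_inv, smul_eq_mul]
    ring
  have key := pair_le hconv (m := 1 + a) (d₁ := 2 * a * (1 - γ)) (d₂ := 2 * a)
    (by nlinarith) (by nlinarith) (by linarith)
  rw [hT]
  have e1 : 1 + a - 2 * a = 1 - a := by ring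
  have e2 : 1 + a + 2 * a = 1 + 3 * a := by ring
  rw [e1, e2] at key
  nlinarith [key]
end

section
/- Define f : ℝ → ℝ by f(x) = −(1/4)[(1.182+0.566·tanh x)·log₂((1.182+0.566·tanh x)/(1−0.052·tanh x)) + (0.818−0.64·tanh x)·log₂((0.818−0.64·tanh x)/(1−0.052·tanh x)) + (1.182−0.566·tanh x)·log₂((1.182−0.566·tanh x)/(1+0.052·tanh x)) + (0.818+0.64·tanh x)·log₂((0.818+0.64·tanh x)/(1+0.052·tanh x))]. Then f is an even function of x, and f is monotone nonincreasing on [0,∞). -/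
lemma my_tanh_lt_one (x : ℝ) : Real.tanh x < 1 := by
  rw [Real.tanh_eq_sinh_div_cosh, div_lt_one (Real.cosh_pos x)]
  exact Real.sinh_lt_cosh x

lemma my_neg_one_lt_tanh (x : ℝ) : -1 < Real.tanh x := by
  have h := @Real.sinh_lt_cosh (-x)
  rw [Real.sinh_neg, Real.cosh_neg] at h
  rw [Real.tanh_eq_sinh_div_cosh, lt_div_iff₀ (Real.cosh_pos x)]
  linarith

lemma my_tanh_nonneg {x : ℝ} (hx : 0 ≤ x) : 0 ≤ Real.tanh x := by
  rw [Real.tanh_eq_sinh_div_cosh]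
  exact div_nonneg (Real.sinh_nonneg_iff.2 hx) (Real.cosh_pos x).le

lemma my_tanh_hasDerivAt (x : ℝ) : HasDerivAt Real.tanh (1 - Real.tanh x ^ 2) x := by
  have h : HasDerivAt (fun y => Real.sinh y / Real.cosh y)
      ((Real.cosh x * Real.cosh x - Real.sinh x * Real.sinh x) / Real.cosh x ^ 2) x :=
    (Real.hasDerivAt_sinh x).div (Real.hasDerivAt_cosh x) (Real.cosh_pos x).ne'
  have hfun : Real.tanh = fun y => Real.sinh y / Real.cosh y :=
    funext fun y => Real.tanh_eq_sinh_div_cosh y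
  rw [hfun]
  convert h using 1
  have hc := Real.cosh_sq_sub_sinh_sq x
  have hcp := (Real.cosh_pos x).ne'
  simp only []
  field_simp

lemma my_term_deriv (a b c : ℝ) (x : ℝ) (hu : 0 < a + b * Real.tanh x)
    (hv : 0 < 1 + c * Real.tanh x) :
    HasDerivAt (fun y => (a + b * Real.tanh y) *
        (Real.log (a + b * Real.tanh y) - Real.log (1 + c * Real.tanh y)))
      ((1 - Real.tanh x ^ 2) *
        (b * (Real.log (a + b * Real.tanh x) - Real.log (1 + c * Real.tanh x))
          + (b - (a + b * Real.tanh x) * c / (1 + c * Real.tanh x)))) x := by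
  have ht := my_tanh_hasDerivAt x
  have hu' : HasDerivAt (fun y => a + b * Real.tanh y) (b * (1 - Real.tanh x ^ 2)) x :=
    (ht.const_mul b).const_add a
  have hv' : HasDerivAt (fun y => 1 + c * Real.tanh y) (c * (1 - Real.tanh x ^ 2)) x :=
    (ht.const_mul c).const_add 1
  have hlu := hu'.log hu.ne'
  have hlv := hv'.log hv.ne'
  have h := hu'.mul (hlu.sub hlv)
  refine h.congr_deriv ?_
  simp only [Pi.sub_apply]
  field_simp

noncomputable def F2aux (x : ℝ) : ℝ :=
  -(1 / (4 * Real.log 2)) *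
    ((1.182 + 0.566 * Real.tanh x) *
        (Real.log (1.182 + 0.566 * Real.tanh x) - Real.log (1 - 0.052 * Real.tanh x))
     + (0.818 - 0.64 * Real.tanh x) *
        (Real.log (0.818 - 0.64 * Real.tanh x) - Real.log (1 - 0.052 * Real.tanh x))
     + (1.182 - 0.566 * Real.tanh x) *
        (Real.log (1.182 - 0.566 * Real.tanh x) - Real.log (1 + 0.052 * Real.tanh x))
     + (0.818 + 0.64 * Real.tanh x) *
        (Real.log (0.818 + 0.64 * Real.tanh x) - Real.log (1 + 0.052 * Real.tanh x)))

noncomputable def Bval (t : ℝ) : ℝ :=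
  0.566 * (Real.log (1.182 + 0.566 * t) - Real.log (1 - 0.052 * t))
  - 0.64 * (Real.log (0.818 - 0.64 * t) - Real.log (1 - 0.052 * t))
  - 0.566 * (Real.log (1.182 - 0.566 * t) - Real.log (1 + 0.052 * t))
  + 0.64 * (Real.log (0.818 + 0.64 * t) - Real.log (1 + 0.052 * t))
  + (1.182 + 0.566 * t) * 0.052 / (1 - 0.052 * t)
  + (0.818 - 0.64 * t) * 0.052 / (1 - 0.052 * t)
  - (1.182 - 0.566 * t) * 0.052 / (1 + 0.052 * t)
  - (0.818 + 0.64 * t) * 0.052 / (1 + 0.052 * t)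

lemma tanh_bounds (x : ℝ) :
    0 < 1.182 + 0.566 * Real.tanh x ∧ 0 < 0.818 - 0.64 * Real.tanh x ∧
    0 < 1.182 - 0.566 * Real.tanh x ∧ 0 < 0.818 + 0.64 * Real.tanh x ∧
    0 < 1 - 0.052 * Real.tanh x ∧ 0 < 1 + 0.052 * Real.tanh x := by
  have h1 := my_tanh_lt_one x
  have h2 := my_neg_one_lt_tanh x
  refine ⟨by nlinarith, by nlinarith, by nlinarith, by nlinarith, by nlinarith, by nlinarith⟩

set_option maxHeartbeats 1000000 in
lemma hasDerivAt_F2aux (x : ℝ) :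
    HasDerivAt F2aux
      (-((1 - Real.tanh x ^ 2) / (4 * Real.log 2)) * Bval (Real.tanh x)) x := by
  obtain ⟨hu1, hu2, hu3, hu4, hv1, hv2⟩ := tanh_bounds x
  have h1 := my_term_deriv 1.182 0.566 (-0.052) x (by nlinarith [my_neg_one_lt_tanh x])
    (by nlinarith [my_tanh_lt_one x])
  have h2 := my_term_deriv 0.818 (-0.64) (-0.052) x (by nlinarith [my_tanh_lt_one x])
    (by nlinarith [my_tanh_lt_one x])
  have h3 := my_term_deriv 1.182 (-0.566) 0.052 x (by nlinarith [my_tanh_lt_one x])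
    (by nlinarith [my_neg_one_lt_tanh x])
  have h4 := my_term_deriv 0.818 0.64 0.052 x (by nlinarith [my_neg_one_lt_tanh x])
    (by nlinarith [my_neg_one_lt_tanh x])
  simp only [neg_mul, ← sub_eq_add_neg] at h1 h2 h3 h4
  have h := (((h1.add h2).add h3).add h4).const_mul (-(1 / (4 * Real.log 2)))
  have hF : F2aux = fun y => -(1 / (4 * Real.log 2)) *
      ((1.182 + 0.566 * Real.tanh y) *
          (Real.log (1.182 + 0.566 * Real.tanh y) - Real.log (1 - 0.052 * Real.tanh y))
       + (0.818 - 0.64 * Real.tanh y) *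
          (Real.log (0.818 - 0.64 * Real.tanh y) - Real.log (1 - 0.052 * Real.tanh y))
       + (1.182 - 0.566 * Real.tanh y) *
          (Real.log (1.182 - 0.566 * Real.tanh y) - Real.log (1 + 0.052 * Real.tanh y))
       + (0.818 + 0.64 * Real.tanh y) *
          (Real.log (0.818 + 0.64 * Real.tanh y) - Real.log (1 + 0.052 * Real.tanh y))) :=
    funext fun y => rfl
  rw [hF]
  refine h.congr_deriv ?_
  unfold Bval
  ring

set_option maxHeartbeats 1000000 in
lemma Bval_nonneg {t : ℝ} (ht0 : 0 ≤ t) (ht1 : t < 1) : 0 ≤ Bval t := by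
  have hu1 : (0:ℝ) < 1.182 + 0.566 * t := by nlinarith
  have hu2 : (0:ℝ) < 0.818 - 0.64 * t := by nlinarith
  have hu3 : (0:ℝ) < 1.182 - 0.566 * t := by nlinarith
  have hu4 : (0:ℝ) < 0.818 + 0.64 * t := by nlinarith
  have hv1 : (0:ℝ) < 1 - 0.052 * t := by nlinarith
  have hv2 : (0:ℝ) < 1 + 0.052 * t := by nlinarith
  have hB : Bval t = 0.566 * (Real.log (1.182 + 0.566 * t) - Real.log (1.182 - 0.566 * t))
      + 0.64 * (Real.log (0.818 + 0.64 * t) - Real.log (0.818 - 0.64 * t))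
      + 0.074 * (Real.log (1 - 0.052 * t) - Real.log (1 + 0.052 * t))
      + 0.00312 * t / ((1 - 0.052 * t) * (1 + 0.052 * t)) := by
    unfold Bval
    have e : (1.182 + 0.566 * t) * 0.052 / (1 - 0.052 * t)
      + (0.818 - 0.64 * t) * 0.052 / (1 - 0.052 * t)
      - (1.182 - 0.566 * t) * 0.052 / (1 + 0.052 * t)
      - (0.818 + 0.64 * t) * 0.052 / (1 + 0.052 * t) = 0.00312 * t / ((1 - 0.052 * t) * (1 + 0.052 * t)) := by
      rw [← add_div, sub_sub, ← add_div, div_sub_div _ _ hv1.ne' hv2.ne']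
      congr 1
      ring
    linear_combination e
  rw [hB]
  have h13 : Real.log (1.182 - 0.566 * t) - Real.log (1.182 + 0.566 * t)
      ≤ (1.182 - 0.566 * t) / (1.182 + 0.566 * t) - 1 := by
    have h := Real.log_le_sub_one_of_pos (div_pos hu3 hu1)
    rwa [Real.log_div hu3.ne' hu1.ne'] at h
  have h24 : Real.log (0.818 - 0.64 * t) - Real.log (0.818 + 0.64 * t)
      ≤ (0.818 - 0.64 * t) / (0.818 + 0.64 * t) - 1 := by
    have h := Real.log_le_sub_one_of_pos (div_pos hu2 hu4)
    rwa [Real.log_div hu2.ne' hu4.ne'] at h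
  have hvv : Real.log (1 + 0.052 * t) - Real.log (1 - 0.052 * t)
      ≤ (1 + 0.052 * t) / (1 - 0.052 * t) - 1 := by
    have h := Real.log_le_sub_one_of_pos (div_pos hv2 hv1)
    rwa [Real.log_div hv2.ne' hv1.ne'] at h
  have hX1 : (1.182 - 0.566 * t) / (1.182 + 0.566 * t) ≤ 1 - 0.64 * t := by
    rw [div_le_iff₀ hu1]; nlinarith
  have hX2 : (0.818 - 0.64 * t) / (0.818 + 0.64 * t) ≤ 1 - 0.70 * t := by
    rw [div_le_iff₀ hu4]; nlinarith
  have hX3 : (1 + 0.052 * t) / (1 - 0.052 * t) ≤ 1 + 0.11 * t := by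
    rw [div_le_iff₀ hv1]; nlinarith
  have hX4 : 0 ≤ 0.00312 * t / ((1 - 0.052 * t) * (1 + 0.052 * t)) :=
    div_nonneg (by nlinarith) (by positivity)
  nlinarith [h13, h24, hvv, hX1, hX2, hX3, hX4]

/-- The function `F(1)` of Example 2 is even in `x` and monotone nonincreasing on `[0,∞)`. -/
theorem example2_F1_even_and_antitone
    (f : ℝ → ℝ)
    (hf : ∀ x : ℝ, f x = -(1/4) *
      ((1.182 + 0.566 * Real.tanh x) *
          Real.logb 2 ((1.182 + 0.566 * Real.tanh x) / (1 - 0.052 * Real.tanh x))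
       + (0.818 - 0.64 * Real.tanh x) *
          Real.logb 2 ((0.818 - 0.64 * Real.tanh x) / (1 - 0.052 * Real.tanh x))
       + (1.182 - 0.566 * Real.tanh x) *
          Real.logb 2 ((1.182 - 0.566 * Real.tanh x) / (1 + 0.052 * Real.tanh x))
       + (0.818 + 0.64 * Real.tanh x) *
          Real.logb 2 ((0.818 + 0.64 * Real.tanh x) / (1 + 0.052 * Real.tanh x)))) :
    (∀ x : ℝ, f (-x) = f x) ∧ AntitoneOn f (Set.Ici (0 : ℝ)) := by
  have hF : ∀ x, f x = F2aux x := by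
    intro x
    obtain ⟨hu1, hu2, hu3, hu4, hv1, hv2⟩ := tanh_bounds x
    rw [hf]
    unfold F2aux
    rw [Real.logb, Real.logb, Real.logb, Real.logb,
      Real.log_div hu1.ne' hv1.ne', Real.log_div hu2.ne' hv1.ne',
      Real.log_div hu3.ne' hv2.ne', Real.log_div hu4.ne' hv2.ne']
    have hl2 : Real.log 2 ≠ 0 := ne_of_gt (Real.log_pos (by norm_num))
    field_simp
  constructor
  · intro x
    rw [hf, hf, Real.tanh_neg]
    ring_nf
  · have hfeq : f = F2aux := funext hF
    rw [hfeq]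
    apply antitoneOn_of_deriv_nonpos (convex_Ici 0)
    · exact fun x _ => ((hasDerivAt_F2aux x).differentiableAt.continuousAt).continuousWithinAt
    · exact fun x hx => (hasDerivAt_F2aux x).differentiableAt.differentiableWithinAt
    · intro x hx
      rw [interior_Ici] at hx
      rw [(hasDerivAt_F2aux x).deriv]
      have ht0 : 0 ≤ Real.tanh x := my_tanh_nonneg (le_of_lt hx)
      have ht1 : Real.tanh x < 1 := my_tanh_lt_one x
      have hB := Bval_nonneg ht0 ht1
      have hpos : 0 ≤ (1 - Real.tanh x ^ 2) / (4 * Real.log 2) := by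
        apply div_nonneg
        · nlinarith
        · positivity
      nlinarith
end
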